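/- arXiv:2402.09002 — 7 statements merged into one kernel-verified Lean document; each statement's English description precedes it below -/
import Mathlib

section
/- Let k ≥ 1 and let S be a set of 2k+4 points in general position in ℝ^(2k+1). Then there exist two disjoint (k+2)-element subsets A, B ⊆ S such that the (k+1)-simplices conv A and conv B are linked, i.e. conv A intersects the boundary of conv B (the union of the convex hulls of the (k+1)-element subsets of B) in an odd (finite) number of points. -/
open scoped Classical

/-- A finite set of points in `ℝ^d` is in general position if every
`(d+1)`-element subset of it is affinely independent. -/
def GenPos (d : ℕ) (S : Finset (Fin d → ℝ)) : Prop :=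
  ∀ T ⊆ S, T.card = d + 1 →
    AffineIndependent ℝ (fun x : (T : Set (Fin d → ℝ)) => (x : Fin d → ℝ))

/-- The boundary of the simplex with vertex set `B`: the union of the convex
hulls of the `m`-element subsets of `B`. -/
def simplexBoundary (d m : ℕ) (B : Finset (Fin d → ℝ)) : Set (Fin d → ℝ) :=
  ⋃ Y ∈ B.powersetCard m, convexHull ℝ (Y : Set (Fin d → ℝ))

open Finset

lemma dep_two_zeros (k : ℕ) (S : Finset (Fin (2*k+1) → ℝ)) (hgp : ∀ T ⊆ S, T.card = (2*k+1) + 1 →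
      AffineIndependent ℝ (fun x : (T : Set (Fin (2*k+1) → ℝ)) => (x : Fin (2*k+1) → ℝ)))
    (p : Fin (2*k+4) → (Fin (2*k+1) → ℝ)) (hinj : Function.Injective p)
    (hrange : ∀ i, p i ∈ S)
    (lam : Fin (2*k+4) → ℝ) (h1 : ∑ i, lam i • p i = 0) (h2 : ∑ i, lam i = 0)
    (a b : Fin (2*k+4)) (hab : a ≠ b) (ha : lam a = 0) (hb : lam b = 0) :
    lam = 0 := by
  set I : Finset (Fin (2*k+4)) := univ \ {a, b} with hI
  have hIcard : I.card = 2*k+2 := by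
    rw [hI, card_sdiff_of_subset (by simp)]
    have : ({a, b} : Finset (Fin (2*k+4))).card = 2 := by
      rw [card_insert_of_notMem (by simpa using hab), card_singleton]
    simp [this, Fintype.card_fin]
  set T : Finset (Fin (2*k+1) → ℝ) := I.image p with hT
  have hTsub : T ⊆ S := by
    intro x hx; rw [hT, mem_image] at hx; obtain ⟨i, _, rfl⟩ := hx; exact hrange i
  have hTcard : T.card = (2*k+1)+1 := by
    rw [hT, card_image_of_injective _ hinj, hIcard]
  have hAI := hgp T hTsub hTcard
  have hmemT : ∀ i : {x // x ∈ I}, (p i : Fin (2*k+1) → ℝ) ∈ (T : Set (Fin (2*k+1) → ℝ)) := by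
    intro i
    simp only [hT, Finset.coe_image, Set.mem_image, Finset.mem_coe]
    exact ⟨i, i.2, rfl⟩
  have hemb : AffineIndependent ℝ (fun i : {x // x ∈ I} => p i) :=
    AffineIndependent.comp_embedding
      (⟨fun i => ⟨p i, hmemT i⟩, fun x y hxy => Subtype.ext (hinj (congrArg Subtype.val hxy))⟩ :
        {x // x ∈ I} ↪ (T : Set (Fin (2*k+1) → ℝ))) hAI
  have hoff : ∀ x ∈ univ, x ∉ I → lam x = 0 := by
    intro x _ hx
    by_cases h1a : x = a
    · subst h1a; exact ha
    by_cases h1b : x = b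
    · subst h1b; exact hb
    exact absurd (by simp [hI, h1a, h1b]) hx
  have hoffv : ∀ x ∈ univ, x ∉ I → lam x • p x = 0 := by
    intro x hx1 hx2; rw [hoff x hx1 hx2, zero_smul]
  have hzero : ∀ i ∈ I, lam i = 0 := by
    have hs1 : ∑ e : {x // x ∈ I}, lam e = 0 := by
      rw [Finset.univ_eq_attach, Finset.sum_attach I (fun i => lam i),
        Finset.sum_subset (subset_univ I) hoff]
      exact h2
    have hs2 : ∑ e : {x // x ∈ I}, lam e • p e = 0 := by
      rw [Finset.univ_eq_attach, Finset.sum_attach I (fun i => lam i • p i),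
        Finset.sum_subset (subset_univ I) hoffv]
      exact h1
    intro i hi
    exact (affineIndependent_iff.mp hemb) Finset.univ (fun i => lam i) hs1 hs2 ⟨i, hi⟩
      (mem_univ _)
  funext i
  by_cases hi : i ∈ I
  · exact hzero i hi
  · exact hoff i (mem_univ i) hi

lemma exists_dep (k : ℕ) (p : Fin (2*k+4) → (Fin (2*k+1) → ℝ)) (b : Fin (2*k+4)) :
    ∃ lam : Fin (2*k+4) → ℝ, lam ≠ 0 ∧ ∑ i, lam i • p i = 0 ∧ ∑ i, lam i = 0 ∧ lam b = 0 := by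
  let L : (Fin (2*k+4) → ℝ) →ₗ[ℝ] ((Fin (2*k+1) → ℝ) × ℝ × ℝ) :=
  { toFun := fun lam => (∑ i, lam i • p i, ∑ i, lam i, lam b)
    map_add' := by
      intro x y
      simp [add_smul, Finset.sum_add_distrib]
    map_smul' := by
      intro c x
      simp [smul_smul, Finset.smul_sum, Finset.mul_sum, Prod.smul_mk] }
  have hnotinj : ¬ Function.Injective L := by
    intro hinj
    have hle := LinearMap.finrank_le_finrank_of_injective hinj
    rw [Module.finrank_pi, Fintype.card_fin] at hle
    have h2 : Module.finrank ℝ ((Fin (2*k+1) → ℝ) × ℝ × ℝ) = 2*k+1+1+1 := by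
      rw [Module.finrank_prod, Module.finrank_prod, Module.finrank_pi,
        Module.finrank_self, Fintype.card_fin]
    omega
  obtain ⟨x, y, hxy, hne⟩ := Function.not_injective_iff.mp hnotinj
  refine ⟨x - y, sub_ne_zero.mpr hne, ?_, ?_, ?_⟩
  · have h := congrArg Prod.fst (L.map_sub x y)
    rw [hxy, sub_self] at h
    simpa [L, sub_smul, Finset.sum_sub_distrib] using h
  · have h := congrArg (fun q : ((Fin (2*k+1) → ℝ) × ℝ × ℝ) => q.2.1) (L.map_sub x y)
    rw [hxy, sub_self] at h
    simpa [L, Finset.sum_sub_distrib] using h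
  · have h := congrArg (fun q : ((Fin (2*k+1) → ℝ) × ℝ × ℝ) => q.2.2) (L.map_sub x y)
    rw [hxy, sub_self] at h
    simpa [L] using h

lemma final_step (k : ℕ) (S : Finset (Fin (2*k+1) → ℝ))
    (p : Fin (2*k+4) → (Fin (2*k+1) → ℝ)) (hp_inj : Function.Injective p)
    (hp_range : ∀ i, p i ∈ S)
    (K1 : ∀ lam : Fin (2*k+4) → ℝ, (∑ i, lam i • p i) = 0 → (∑ i, lam i) = 0 →
      ∀ a b : Fin (2*k+4), a ≠ b → lam a = 0 → lam b = 0 → lam = 0)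
    (u v t : Fin (2*k+4) → ℝ)
    (hvne : ∀ i, v i ≠ 0)
    (hdep : ∀ τ : ℝ, (∑ m, (u m + τ * v m) • p m) = 0 ∧ (∑ m, (u m + τ * v m)) = 0)
    (hid : ∀ (i : Fin (2*k+4)) (τ : ℝ), u i + τ * v i = v i * (τ - t i))
    (ht_inj : Function.Injective t)
    (c c' : Fin (2*k+4)) (hvc : 0 < v c) (hvc' : 0 < v c') (htcc' : t c < t c')
    (hnob : ∀ i, ¬ (t c < t i ∧ t i < t c'))
    (hAcard : (univ.filter (fun i => 0 < u i + t c' * v i)).card = k+2) :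
    ∃ A B : Finset (Fin (2 * k + 1) → ℝ), A ⊆ S ∧ B ⊆ S ∧ Disjoint A B ∧
      A.card = k + 2 ∧ B.card = k + 2 ∧
      (convexHull ℝ (A : Set (Fin (2 * k + 1) → ℝ)) ∩
        simplexBoundary (2 * k + 1) (k + 1) B).Finite ∧
      Odd (convexHull ℝ (A : Set (Fin (2 * k + 1) → ℝ)) ∩
        simplexBoundary (2 * k + 1) (k + 1) B).ncard := by
  set A : Finset (Fin (2*k+4)) := univ.filter (fun i => 0 < u i + t c' * v i) with hA
  set lam : Fin (2*k+4) → ℝ := fun i => u i + t c' * v i with hlamdef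
  have hAmem : ∀ i, i ∈ A ↔ 0 < lam i := by
    intro i; rw [hA, mem_filter, hlamdef]; simp
  have hlam_eq : ∀ i, lam i = v i * (t c' - t i) := fun i => hid i (t c')
  have hlamv : (∑ i, lam i • p i) = 0 := (hdep (t c')).1
  have hlams : (∑ i, lam i) = 0 := (hdep (t c')).2
  have hlamc' : lam c' = 0 := by rw [hlam_eq]; simp
  have hlamne : ∀ i, i ≠ c' → lam i ≠ 0 := by
    intro i hi
    rw [hlam_eq]
    exact mul_ne_zero (hvne i) (sub_ne_zero.mpr fun h => hi (ht_inj h).symm)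
  set B : Finset (Fin (2*k+4)) := Aᶜ with hB
  have hABdisj : Disjoint A B := disjoint_compl_right
  have hBmem : ∀ i, i ∈ B ↔ ¬ (0 < lam i) := by
    intro i; rw [hB, Finset.mem_compl, hAmem]
  have hBcard : B.card = k+2 := by
    rw [hB, Finset.card_compl, Fintype.card_fin, hAcard]
    omega
  have hcA : c ∈ A := by
    rw [hAmem, hlam_eq]
    exact mul_pos hvc (sub_pos.mpr htcc')
  have hc'B : c' ∈ B := by rw [hBmem, hlamc']; simp
  have hBneg : ∀ i ∈ B, i ≠ c' → lam i < 0 := by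
    intro i hiB hic'
    rcases (hlamne i hic').lt_or_gt with h | h
    · exact h
    · exact absurd h ((hBmem i).mp hiB)
  have hAne : A.Nonempty := ⟨c, hcA⟩
  set sA : ℝ := ∑ i ∈ A, lam i with hsA
  have hspos : 0 < sA := Finset.sum_pos (fun i hi => (hAmem i).mp hi) hAne
  set x : (Fin (2*k+1) → ℝ) := sA⁻¹ • ∑ i ∈ A, lam i • p i with hx
  have hsumsplit : sA + ∑ i ∈ B, lam i = 0 := by
    rw [hsA, hB, Finset.sum_add_sum_compl]; exact hlams
  have hvecsplit : (∑ i ∈ A, lam i • p i) + (∑ i ∈ B, lam i • p i) = 0 := by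
    rw [hB, Finset.sum_add_sum_compl]; exact hlamv
  set Af := A.image p with hAf
  set Bf := B.image p with hBf
  have hAfcard : Af.card = k+2 := by
    rw [hAf, card_image_of_injective _ hp_inj]
    exact hAcard
  have hBfcard : Bf.card = k+2 := by
    rw [hBf, card_image_of_injective _ hp_inj, hBcard]
  -- membership of x in the convex hull of Af
  have hxA : x ∈ convexHull ℝ (Af : Set (Fin (2*k+1) → ℝ)) := by
    have hcm : A.centerMass lam p = x := by
      rw [Finset.centerMass, hx, hsA]
    rw [← hcm]
    exact Finset.centerMass_mem_convexHull A (fun i hi => ((hAmem i).mp hi).le)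
      (by rw [← hsA]; exact hspos)
      (fun i hi => Finset.mem_coe.mpr (Finset.mem_image_of_mem p hi))
  -- membership of x in the boundary of Bf
  have hY0mem : (B.erase c').image p ∈ Bf.powersetCard (k+1) := by
    rw [Finset.mem_powersetCard]
    constructor
    · rw [hBf]; exact Finset.image_subset_image (Finset.erase_subset _ _)
    · rw [card_image_of_injective _ hp_inj, Finset.card_erase_of_mem hc'B, hBcard]
      omega
  have hsumE : ∑ i ∈ B.erase c', -lam i = sA := by
    rw [Finset.sum_erase _ (by rw [hlamc', neg_zero])]
    have : ∑ i ∈ B, -lam i = -∑ i ∈ B, lam i := by rw [Finset.sum_neg_distrib]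
    rw [this]; linarith [hsumsplit]
  have hvecE : ∑ i ∈ B.erase c', (-lam i) • p i = ∑ i ∈ A, lam i • p i := by
    rw [Finset.sum_erase _ (by rw [hlamc', neg_zero, zero_smul])]
    have h1 : ∑ i ∈ B, (-lam i) • p i = -∑ i ∈ B, lam i • p i := by
      rw [← Finset.sum_neg_distrib]
      exact Finset.sum_congr rfl fun i _ => by rw [neg_smul]
    rw [h1]
    exact neg_eq_of_add_eq_zero_left hvecsplit
  have hxB : x ∈ simplexBoundary (2*k+1) (k+1) Bf := by
    rw [simplexBoundary]
    refine Set.mem_biUnion hY0mem ?_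
    have hcm : (B.erase c').centerMass (fun i => -lam i) p = x := by
      rw [Finset.centerMass, hsumE, hvecE, hx]
    rw [← hcm]
    refine Finset.centerMass_mem_convexHull _ ?_ ?_ ?_
    · intro i hi
      have hiB := Finset.mem_of_mem_erase hi
      have hic' := Finset.ne_of_mem_erase hi
      have := hBneg i hiB hic'
      linarith
    · rw [hsumE]; exact hspos
    · intro i hi
      exact Finset.mem_coe.mpr (Finset.mem_image_of_mem p hi)
  -- uniqueness of the intersection point
  have huniq : ∀ y, y ∈ convexHull ℝ (Af : Set (Fin (2*k+1) → ℝ)) →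
      y ∈ simplexBoundary (2*k+1) (k+1) Bf → y = x := by
    intro y hyA hyB
    rw [simplexBoundary, Set.mem_iUnion₂] at hyB
    obtain ⟨Y, hYmem, hyY⟩ := hyB
    rw [Finset.mem_powersetCard] at hYmem
    obtain ⟨hYsub, hYcard⟩ := hYmem
    set Y0 := B.filter (fun i => p i ∈ Y) with hY0
    have hY0img : Y0.image p = Y := by
      apply Finset.Subset.antisymm
      · intro yy hyy
        rw [Finset.mem_image] at hyy
        obtain ⟨i, hi, rfl⟩ := hyy
        exact (Finset.mem_filter.mp hi).2
      · intro yy hyy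
        have hyB2 : yy ∈ Bf := hYsub hyy
        rw [hBf, Finset.mem_image] at hyB2
        obtain ⟨i, hi, rfl⟩ := hyB2
        exact Finset.mem_image_of_mem p (Finset.mem_filter.mpr ⟨hi, hyy⟩)
    have hY0sub : Y0 ⊆ B := Finset.filter_subset _ _
    have hY0card : Y0.card = k+1 := by
      rw [← hYcard, ← hY0img, card_image_of_injective _ hp_inj]
    -- extract weights
    rw [Finset.convexHull_eq] at hyA hyY
    obtain ⟨w1, hw1nn, hw1sum, hw1cm⟩ := hyA
    obtain ⟨w2, hw2nn, hw2sum, hw2cm⟩ := hyY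
    rw [Finset.centerMass_eq_of_sum_1 _ _ hw1sum] at hw1cm
    rw [Finset.centerMass_eq_of_sum_1 _ _ hw2sum] at hw2cm
    simp only [id_eq] at hw1cm hw2cm
    have hs1 : ∑ i ∈ A, w1 (p i) = 1 := by
      rw [← hw1sum, hAf, Finset.sum_image (fun a _ b _ h => hp_inj h)]
    have hv1 : ∑ i ∈ A, w1 (p i) • p i = y := by
      rw [← hw1cm, hAf, Finset.sum_image (fun a _ b _ h => hp_inj h)]
    have hs2 : ∑ i ∈ Y0, w2 (p i) = 1 := by
      rw [← hw2sum, ← hY0img, Finset.sum_image (fun a _ b _ h => hp_inj h)]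
    have hv2 : ∑ i ∈ Y0, w2 (p i) • p i = y := by
      rw [← hw2cm, ← hY0img, Finset.sum_image (fun a _ b _ h => hp_inj h)]
    -- the dependency mu
    set mu : Fin (2*k+4) → ℝ :=
      fun i => (if i ∈ A then w1 (p i) else 0) - (if i ∈ Y0 then w2 (p i) else 0) with hmudef
    have hmusum : ∑ i, mu i = 0 := by
      have e0 : ∑ i, mu i = (∑ i, (if i ∈ A then w1 (p i) else 0))
          - ∑ i, (if i ∈ Y0 then w2 (p i) else 0) := by
        rw [← Finset.sum_sub_distrib]
      rw [e0, Finset.sum_ite_mem, Finset.sum_ite_mem, Finset.univ_inter, Finset.univ_inter,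
        hs1, hs2, sub_self]
    have hmuvec : ∑ i, mu i • p i = 0 := by
      have e0 : ∀ i : Fin (2*k+4), mu i • p i =
          (if i ∈ A then w1 (p i) • p i else 0) - (if i ∈ Y0 then w2 (p i) • p i else 0) := by
        intro i
        rw [hmudef]
        simp only [sub_smul, ite_smul, zero_smul]
      rw [Finset.sum_congr rfl (fun i _ => e0 i), Finset.sum_sub_distrib,
        Finset.sum_ite_mem, Finset.sum_ite_mem, Finset.univ_inter, Finset.univ_inter,
        hv1, hv2, sub_self]
    have hmune : mu ≠ 0 := by
      intro h0
      have hzero : ∑ i ∈ A, w1 (p i) = 0 := by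
        apply Finset.sum_eq_zero
        intro i hi
        have hiY : i ∉ Y0 := fun hc => Finset.disjoint_left.mp hABdisj hi (hY0sub hc)
        have hfi := congrFun h0 i
        rw [hmudef] at hfi
        simpa [hi, hiY] using hfi
      rw [hs1] at hzero
      exact one_ne_zero hzero
    -- the missing vertex b
    have hBY0 : (B \ Y0).card = 1 := by
      rw [Finset.card_sdiff_of_subset hY0sub, hBcard, hY0card]
      omega
    obtain ⟨b, hb⟩ := Finset.card_eq_one.mp hBY0
    have hbmem : b ∈ B \ Y0 := by rw [hb]; exact Finset.mem_singleton_self b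
    have hbB : b ∈ B := (Finset.mem_sdiff.mp hbmem).1
    have hbY0 : b ∉ Y0 := (Finset.mem_sdiff.mp hbmem).2
    have hbA : b ∉ A := fun hc => Finset.disjoint_left.mp hABdisj hc hbB
    have hmub : mu b = 0 := by rw [hmudef]; simp [hbA, hbY0]
    have hmuj : ∀ i, i ≠ b → mu i ≠ 0 := by
      intro i hi hmi
      exact hmune (K1 mu hmuvec hmusum i b hi hmi hmub)
    have hY0eq : Y0 = B.erase b := by
      apply Finset.eq_of_subset_of_card_le
      · intro i hi
        exact Finset.mem_erase.mpr ⟨fun h => hbY0 (h ▸ hi), hY0sub hi⟩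
      · rw [Finset.card_erase_of_mem hbB, hY0card, hBcard]
        omega
    -- signs of mu
    have hmuA : ∀ i ∈ A, 0 < mu i := by
      intro i hi
      have hiY : i ∉ Y0 := fun hc => Finset.disjoint_left.mp hABdisj hi (hY0sub hc)
      have hge : 0 ≤ mu i := by
        rw [hmudef]
        simp only [hi, hiY, if_true, if_false, if_pos, if_neg, not_false_iff, sub_zero]
        exact hw1nn (p i) (Finset.mem_image_of_mem p hi)
      have hne : mu i ≠ 0 := hmuj i (fun h => hbA (h ▸ hi))
      exact lt_of_le_of_ne hge (Ne.symm hne)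
    have hmuY0 : ∀ i ∈ Y0, mu i < 0 := by
      intro i hi
      have hiA : i ∉ A := fun hc => Finset.disjoint_left.mp hABdisj hc (hY0sub hi)
      have hle : mu i ≤ 0 := by
        rw [hmudef]
        simp only [hiA, hi, if_true, if_false, if_pos, if_neg, not_false_iff, zero_sub,
          neg_nonpos]
        exact hw2nn (p i) (by rw [← hY0img]; exact Finset.mem_image_of_mem p hi)
      have hne : mu i ≠ 0 := hmuj i (fun h => hbY0 (h ▸ hi))
      exact lt_of_le_of_ne hle hne
    -- mu is proportional to the pencil element at t b
    set rho : Fin (2*k+4) → ℝ := fun i => u i + t b * v i with hrhodef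
    have hrho_eq : ∀ i, rho i = v i * (t b - t i) := fun i => hid i (t b)
    have hrhov : (∑ i, rho i • p i) = 0 := (hdep (t b)).1
    have hrhos : (∑ i, rho i) = 0 := (hdep (t b)).2
    have hcb : c ≠ b := fun h => hbA (h ▸ hcA)
    have hrhoc : rho c ≠ 0 := by
      rw [hrho_eq]
      refine mul_ne_zero (hvne c) (sub_ne_zero.mpr fun h => ?_)
      exact hcb (ht_inj h).symm
    have hmuc : 0 < mu c := hmuA c hcA
    set nu : Fin (2*k+4) → ℝ := fun i => rho c * mu i - mu c * rho i with hnudef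
    have hnuv : ∑ i, nu i • p i = 0 := by
      have heq : ∑ i, nu i • p i =
          rho c • (∑ i, mu i • p i) - mu c • (∑ i, rho i • p i) := by
        rw [Finset.smul_sum, Finset.smul_sum, ← Finset.sum_sub_distrib]
        exact Finset.sum_congr rfl fun i _ => by
          rw [hnudef]; simp [sub_smul, smul_smul]
      rw [heq, hmuvec, hrhov, smul_zero, smul_zero, sub_zero]
    have hnus : ∑ i, nu i = 0 := by
      have heq : ∑ i, nu i = rho c * (∑ i, mu i) - mu c * (∑ i, rho i) := by
        rw [Finset.mul_sum, Finset.mul_sum, ← Finset.sum_sub_distrib]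
      rw [heq, hmusum, hrhos, mul_zero, mul_zero, sub_zero]
    have hnub : nu b = 0 := by
      rw [hnudef]
      simp only
      rw [hmub, hrho_eq b, sub_self]
      simp
    have hnuc : nu c = 0 := by rw [hnudef]; simp only; ring
    have hnu0 : nu = 0 := K1 nu hnuv hnus b c (fun h => hcb h.symm) hnub hnuc
    have hprop : ∀ i, rho c * mu i = mu c * rho i := by
      intro i
      have hfi := congrFun hnu0 i
      rw [hnudef] at hfi
      simp only [Pi.zero_apply] at hfi
      linarith [hfi]
    by_cases hbc' : b = c'
    · -- b = c' : mu is a positive multiple of lam, so y = x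
      subst hbc'
      have hlr : ∀ i, rho i = lam i := fun i => rfl
      have hlamc : lam c ≠ 0 := hlamne c (fun h => hcb (h ▸ rfl))
      have ha : ∀ i, mu i = (mu c / lam c) * lam i := by
        intro i
        have h := hprop i
        rw [hlr c, hlr i] at h
        field_simp
        linarith [h]
      have hmuA_eq : ∀ i ∈ A, mu i = w1 (p i) := by
        intro i hi
        have hiY : i ∉ Y0 := fun hc => Finset.disjoint_left.mp hABdisj hi (hY0sub hc)
        rw [hmudef]
        simp [hi, hiY]
      have hyA2 : y = ∑ i ∈ A, mu i • p i := by
        rw [← hv1]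
        exact Finset.sum_congr rfl fun i hi => by rw [hmuA_eq i hi]
      have hsuma : ∑ i ∈ A, mu i = 1 := by
        rw [← hs1]
        exact Finset.sum_congr rfl fun i hi => hmuA_eq i hi
      have h1 : (mu c / lam c) * sA = 1 := by
        rw [hsA, Finset.mul_sum, ← hsuma]
        exact Finset.sum_congr rfl fun i _ => (ha i).symm
      have h2 : y = (mu c / lam c) • (∑ i ∈ A, lam i • p i) := by
        rw [hyA2, Finset.smul_sum]
        exact Finset.sum_congr rfl fun i _ => by rw [ha i, smul_smul]
      rw [h2, hx]
      have h3 : mu c / lam c = sA⁻¹ := eq_inv_of_mul_eq_one_left h1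
      rw [h3]
    · -- b ≠ c' : contradiction with the adjacency of the crossings c, c'
      exfalso
      have hc'Y0 : c' ∈ Y0 := by
        rw [hY0eq]
        exact Finset.mem_erase.mpr ⟨fun h => hbc' h.symm, hc'B⟩
      have hmuc' : mu c' < 0 := hmuY0 c' hc'Y0
      have hpc' := hprop c'
      have hrcc : rho c = v c * (t b - t c) := hrho_eq c
      have hrcc' : rho c' = v c' * (t b - t c') := hrho_eq c'
      rcases hrhoc.lt_or_gt with hrc | hrc
      · -- rho c < 0 forces t b < t c and t c' < t b : absurd
        have htb1 : t b - t c < 0 := by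
          rw [hrcc] at hrc
          rcases mul_neg_iff.mp hrc with ⟨h1, h2⟩ | ⟨h1, h2⟩
          · exact h2
          · exact absurd hvc (asymm h1)
        have hrc' : 0 < rho c' := by
          by_contra hcon
          push_neg at hcon
          have hh1 : 0 < rho c * mu c' := mul_pos_of_neg_of_neg hrc hmuc'
          have hh2 : mu c * rho c' ≤ 0 := mul_nonpos_iff.mpr (Or.inl ⟨hmuc.le, hcon⟩)
          linarith [hpc']
        have htb2 : 0 < t b - t c' := by
          rw [hrcc'] at hrc'
          rcases mul_pos_iff.mp hrc' with ⟨h1, h2⟩ | ⟨h1, h2⟩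
          · exact h2
          · exact absurd hvc' (asymm h1)
        linarith [htcc']
      · -- rho c > 0 forces t c < t b < t c' : contradicts adjacency
        have htb1 : 0 < t b - t c := by
          rw [hrcc] at hrc
          rcases mul_pos_iff.mp hrc with ⟨h1, h2⟩ | ⟨h1, h2⟩
          · exact h2
          · exact absurd hvc (asymm h1)
        have hrc' : rho c' < 0 := by
          by_contra hcon
          push_neg at hcon
          have hh1 : rho c * mu c' < 0 := mul_neg_of_pos_of_neg hrc hmuc'
          have hh2 : 0 ≤ mu c * rho c' := mul_nonneg hmuc.le hcon
          linarith [hpc']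
        have htb2 : t b - t c' < 0 := by
          rw [hrcc'] at hrc'
          rcases mul_neg_iff.mp hrc' with ⟨h1, h2⟩ | ⟨h1, h2⟩
          · exact h2
          · exact absurd hvc' (asymm h1)
        exact hnob b ⟨by linarith, by linarith⟩
  -- assemble
  have hsetEq : convexHull ℝ (Af : Set (Fin (2*k+1) → ℝ)) ∩
      simplexBoundary (2*k+1) (k+1) Bf = {x} := by
    apply Set.eq_singleton_iff_unique_mem.mpr
    exact ⟨⟨hxA, hxB⟩, fun y hy => huniq y hy.1 hy.2⟩
  refine ⟨Af, Bf, ?_, ?_, ?_, hAfcard, hBfcard, ?_, ?_⟩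
  · rw [hAf]
    intro y hy
    rw [Finset.mem_image] at hy
    obtain ⟨i, -, rfl⟩ := hy
    exact hp_range i
  · rw [hBf]
    intro y hy
    rw [Finset.mem_image] at hy
    obtain ⟨i, -, rfl⟩ := hy
    exact hp_range i
  · rw [hAf, hBf]
    exact (Finset.disjoint_image hp_inj).mpr hABdisj
  · rw [hsetEq]
    exact Set.finite_singleton x
  · rw [hsetEq, Set.ncard_singleton]
    exact odd_one


theorem stmt0 (k : ℕ) (hk : 1 ≤ k) (S : Finset (Fin (2 * k + 1) → ℝ))
    (hcard : S.card = 2 * k + 4) (hgp : GenPos (2 * k + 1) S) :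
    ∃ A B : Finset (Fin (2 * k + 1) → ℝ), A ⊆ S ∧ B ⊆ S ∧ Disjoint A B ∧
      A.card = k + 2 ∧ B.card = k + 2 ∧
      (convexHull ℝ (A : Set (Fin (2 * k + 1) → ℝ)) ∩
        simplexBoundary (2 * k + 1) (k + 1) B).Finite ∧
      Odd (convexHull ℝ (A : Set (Fin (2 * k + 1) → ℝ)) ∩
        simplexBoundary (2 * k + 1) (k + 1) B).ncard := by
  -- enumeration
  obtain ⟨e⟩ : Nonempty ({x // x ∈ S} ≃ Fin (2*k+4)) := by
    rw [← hcard]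
    exact ⟨S.equivFin⟩
  set p : Fin (2*k+4) → (Fin (2*k+1) → ℝ) := fun i => (e.symm i : Fin (2*k+1) → ℝ) with hp
  have hp_inj : Function.Injective p := by
    intro i j hij
    have : (e.symm i : {x // x ∈ S}) = e.symm j := Subtype.ext hij
    simpa using congrArg e this
  have hp_range : ∀ i, p i ∈ S := fun i => (e.symm i).2
  -- the key "two zeros" principle
  have K1 : ∀ lam : Fin (2*k+4) → ℝ, (∑ i, lam i • p i) = 0 → (∑ i, lam i) = 0 →
      ∀ a b : Fin (2*k+4), a ≠ b → lam a = 0 → lam b = 0 → lam = 0 :=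
    fun lam h1 h2 a b hab ha hb => dep_two_zeros k S hgp p hp_inj hp_range lam h1 h2 a b hab ha hb
  have b1 : Fin (2*k+4) := ⟨1, by omega⟩
  have h01 : (0 : Fin (2*k+4)) ≠ ⟨1, by omega⟩ := by
    intro h
    have := congrArg Fin.val h
    simp at this
  -- a nonzero dependency vanishing at 0, with at least k+2 positive coefficients
  obtain ⟨z, hz0, hzv, hzs, hzz, hzpos⟩ :
      ∃ z : Fin (2*k+4) → ℝ, z ≠ 0 ∧ (∑ i, z i • p i) = 0 ∧ (∑ i, z i) = 0 ∧ z 0 = 0 ∧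
        k+2 ≤ (univ.filter (fun i => 0 < z i)).card := by
    obtain ⟨z, hz0, hzv, hzs, hzz⟩ := exists_dep k p 0
    have hzne : ∀ i : Fin (2*k+4), i ≠ 0 → z i ≠ 0 := by
      intro i hi hzi
      exact hz0 (K1 z hzv hzs i 0 hi hzi hzz)
    have hsplit : (univ.filter (fun i => 0 < z i)) ∪ (univ.filter (fun i => z i < 0)) =
        univ.erase 0 := by
      ext i
      simp only [mem_union, mem_filter, mem_univ, true_and, mem_erase]
      constructor
      · rintro (h | h)
        · exact ⟨fun hi => by rw [hi, hzz] at h; exact lt_irrefl _ h, trivial⟩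
        · exact ⟨fun hi => by rw [hi, hzz] at h; exact lt_irrefl _ h, trivial⟩
      · rintro ⟨hi, -⟩
        rcases (hzne i hi).lt_or_gt with h | h
        · exact Or.inr h
        · exact Or.inl h
    have hdisj : Disjoint (univ.filter (fun i => 0 < z i)) (univ.filter (fun i => z i < 0)) := by
      rw [Finset.disjoint_left]
      intro i h1 h2
      simp only [mem_filter] at h1 h2
      exact absurd (h1.2.trans h2.2) (lt_irrefl _)
    have hcards : (univ.filter (fun i => 0 < z i)).card + (univ.filter (fun i => z i < 0)).card
        = 2*k+3 := by
      rw [← card_union_of_disjoint hdisj, hsplit, card_erase_of_mem (mem_univ _), card_univ,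
        Fintype.card_fin]
      omega
    rcases le_or_gt (k+2) (univ.filter (fun i => 0 < z i)).card with h | h
    · exact ⟨z, hz0, hzv, hzs, hzz, h⟩
    · refine ⟨-z, by simpa using hz0, by simpa [neg_smul] using hzv, by simpa using hzs,
        by simp [hzz], ?_⟩
      have : (univ.filter (fun i => 0 < (-z) i)) = (univ.filter (fun i => z i < 0)) := by
        ext i; simp [neg_pos]
      rw [this]
      omega
  -- a dependency not vanishing at 0
  obtain ⟨u, huv, hus, hu0⟩ : ∃ u : Fin (2*k+4) → ℝ,
      (∑ i, u i • p i) = 0 ∧ (∑ i, u i) = 0 ∧ u 0 ≠ 0 := by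
    by_contra hcon
    push_neg at hcon
    obtain ⟨w, hw0, hwv, hws, hwz⟩ := exists_dep k p ⟨1, by omega⟩
    exact hw0 (K1 w hwv hws 0 ⟨1, by omega⟩ h01 (hcon w hwv hws) hwz)
  have h10 : (⟨1, by omega⟩ : Fin (2*k+4)) ≠ 0 := fun h => h01 h.symm
  have hzne : ∀ i : Fin (2*k+4), i ≠ 0 → z i ≠ 0 := fun i hi hzi =>
    hz0 (K1 z hzv hzs i 0 hi hzi hzz)
  set I0 : Finset (Fin (2*k+4)) := univ.erase 0 with hI0
  have hI0ne : I0.Nonempty := ⟨⟨1, by omega⟩, by simp [hI0, h10]⟩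
  set ε : ℝ := I0.inf' hI0ne (fun i => |z i| / (|u i| + 1)) with hε
  have hεpos : 0 < ε := by
    rw [hε, Finset.lt_inf'_iff]
    intro i hi
    have hi0 : i ≠ 0 := by simp [hI0] at hi; exact hi
    have hzi : z i ≠ 0 := hzne i hi0
    have h1 : 0 < |z i| := abs_pos.mpr hzi
    have h2 : (0:ℝ) < |u i| + 1 := by positivity
    exact div_pos h1 h2
  have hεle : ∀ i, i ≠ 0 → ε * |u i| < |z i| := by
    intro i hi
    have h1 : ε ≤ |z i| / (|u i| + 1) := Finset.inf'_le _ (by simp [hI0, hi])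
    have h2 : (0:ℝ) < |u i| + 1 := by positivity
    have h3 : ε * (|u i| + 1) ≤ |z i| := by
      rw [div_eq_mul_inv] at h1
      calc ε * (|u i| + 1) ≤ (|z i| * (|u i| + 1)⁻¹) * (|u i| + 1) := by
            apply mul_le_mul_of_nonneg_right h1 h2.le
        _ = |z i| := by field_simp
    nlinarith
  set δ : ℝ := if 0 < u 0 then ε else -ε with hδ
  set v : Fin (2*k+4) → ℝ := fun i => z i + δ * u i with hv
  have hv0 : 0 < v 0 := by
    have hveq : v 0 = δ * u 0 := by rw [hv]; simp [hzz]
    rw [hveq, hδ]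
    rcases lt_or_gt_of_ne hu0 with h | h
    · rw [if_neg (not_lt.mpr h.le)]
      exact mul_pos_of_neg_of_neg (by linarith) h
    · rw [if_pos h]; exact mul_pos hεpos h
  have hδabs : |δ| = ε := by
    rw [hδ]; split
    · exact abs_of_pos hεpos
    · rw [abs_neg]; exact abs_of_pos hεpos
  have hvsame : ∀ i, i ≠ 0 → (0 < z i → 0 < v i) ∧ (z i < 0 → v i < 0) := by
    intro i hi
    have habs : |δ * u i| < |z i| := by rw [abs_mul, hδabs]; exact hεle i hi
    have h1 := (abs_lt.mp habs).1
    have h2 := (abs_lt.mp habs).2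
    constructor
    · intro h
      rw [abs_of_pos h] at h1
      show 0 < z i + δ * u i
      linarith
    · intro h
      rw [abs_of_neg h] at h2
      show z i + δ * u i < 0
      linarith
  have hvne : ∀ i, v i ≠ 0 := by
    intro i
    by_cases hi : i = 0
    · rw [hi]; exact hv0.ne'
    · rcases (hzne i hi).lt_or_gt with h | h
      · exact ((hvsame i hi).2 h).ne
      · exact ((hvsame i hi).1 h).ne'
  have hvv : (∑ i, v i • p i) = 0 := by
    have heq : (∑ i, v i • p i) = (∑ i, z i • p i) + δ • (∑ i, u i • p i) := by
      rw [Finset.smul_sum, ← Finset.sum_add_distrib]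
      refine Finset.sum_congr rfl fun i _ => ?_
      rw [hv]
      simp [add_smul, smul_smul]
    rw [heq, hzv, huv, smul_zero, add_zero]
  have hvs : (∑ i, v i) = 0 := by
    have heq : (∑ i, v i) = (∑ i, z i) + δ * (∑ i, u i) := by
      rw [Finset.mul_sum, ← Finset.sum_add_distrib]
    rw [heq, hzs, hus, mul_zero, add_zero]
  have hPv : k+3 ≤ (univ.filter (fun i => 0 < v i)).card := by
    have hsub : insert 0 (univ.filter (fun i => 0 < z i)) ⊆ univ.filter (fun i => 0 < v i) := by
      intro i hi
      rcases Finset.mem_insert.mp hi with rfl | hi2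
      · simp only [mem_filter, mem_univ, true_and]; exact hv0
      · simp only [mem_filter, mem_univ, true_and] at hi2 ⊢
        have hi0 : i ≠ 0 := fun h => by rw [h, hzz] at hi2; exact lt_irrefl _ hi2
        exact (hvsame i hi0).1 hi2
    have h0notin : (0:Fin (2*k+4)) ∉ univ.filter (fun i => 0 < z i) := by simp [hzz]
    have hle := Finset.card_le_card hsub
    rw [Finset.card_insert_of_notMem h0notin] at hle
    omega
  have hNv : (univ.filter (fun i => v i < 0)).card ≤ k+1 := by
    have hcompl : (univ.filter (fun i => v i < 0)) = (univ.filter (fun i => 0 < v i))ᶜ := by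
      ext i
      simp only [mem_filter, mem_univ, true_and, Finset.mem_compl, not_lt]
      constructor
      · intro h; exact h.le
      · intro h; exact lt_of_le_of_ne h (hvne i)
    rw [hcompl, Finset.card_compl, Fintype.card_fin]
    omega
  -- the pencil of dependencies u + τ·v is nowhere zero
  have hlc : ∀ τ : ℝ, ∃ i, u i + τ * v i ≠ 0 := by
    intro τ
    by_contra hcon
    push_neg at hcon
    have hzeq : ∀ i, z i = (1 + δ * τ) * v i := by
      intro i
      have h1 : u i = -(τ * v i) := by have := hcon i; linarith
      have h2 : v i = z i + δ * u i := by rw [hv]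
      rw [h1] at h2
      have h3 : z i = v i + δ * (τ * v i) := by linarith
      rw [h3]; ring
    have h1δτ : 1 + δ * τ = 0 := by
      have h4 := hzeq 0
      rw [hzz] at h4
      rcases mul_eq_zero.mp h4.symm with h | h
      · exact h
      · exact absurd h (hvne 0)
    apply hz0
    funext i
    rw [hzeq i, h1δτ, zero_mul]
    rfl
  -- every member of the pencil is a dependency
  have hdep : ∀ τ : ℝ, (∑ m, (u m + τ * v m) • p m) = 0 ∧ (∑ m, (u m + τ * v m)) = 0 := by
    intro τ
    constructor
    · have heq : (∑ m, (u m + τ * v m) • p m) = (∑ m, u m • p m) + τ • (∑ m, v m • p m) := by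
        rw [Finset.smul_sum, ← Finset.sum_add_distrib]
        exact Finset.sum_congr rfl fun m _ => by simp [add_smul, smul_smul]
      rw [heq, huv, hvv, smul_zero, add_zero]
    · have heq : (∑ m, (u m + τ * v m)) = (∑ m, u m) + τ * (∑ m, v m) := by
        rw [Finset.mul_sum, ← Finset.sum_add_distrib]
      rw [heq, hus, hvs, mul_zero, add_zero]
  -- crossing times
  set t : Fin (2*k+4) → ℝ := fun i => -(u i) / v i with ht
  have hid : ∀ (i : Fin (2*k+4)) (τ : ℝ), u i + τ * v i = v i * (τ - t i) := by
    intro i τ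
    have hv' := hvne i
    rw [ht]
    field_simp
    ring
  have ht_inj : Function.Injective t := by
    intro i j hij
    by_contra hne
    have hd := hdep (t i)
    have hzi : u i + t i * v i = 0 := by rw [hid i (t i)]; simp
    have hzj : u j + t i * v j = 0 := by rw [hij, hid j (t j)]; simp
    have hK := K1 (fun m => u m + t i * v m) hd.1 hd.2 i j hne hzi hzj
    obtain ⟨m, hm⟩ := hlc (t i)
    exact hm (congrFun hK m)
  -- sorting the crossings
  set σ : Equiv.Perm (Fin (2*k+4)) := Tuple.sort t with hσ
  have hmono : StrictMono (t ∘ σ) :=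
    (Tuple.monotone_sort t).strictMono_of_injective (ht_inj.comp σ.injective)
  -- the walk
  set W : ℕ → Finset (Fin (2*k+4)) := fun j => univ.filter
    (fun i => (0 < v i ∧ (σ.symm i : ℕ) < j) ∨ (v i < 0 ∧ j ≤ (σ.symm i : ℕ))) with hW
  have hWmem : ∀ j i, i ∈ W j ↔
      ((0 < v i ∧ (σ.symm i : ℕ) < j) ∨ (v i < 0 ∧ j ≤ (σ.symm i : ℕ))) := by
    intro j i; rw [hW]; simp
  have hW0 : (W 0).card ≤ k+1 := by
    have hW0' : W 0 = univ.filter (fun i => v i < 0) := by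
      ext i; rw [hWmem]; simp
    rw [hW0']; exact hNv
  have hWn : k+3 ≤ (W (2*k+4)).card := by
    have hWn' : W (2*k+4) = univ.filter (fun i => 0 < v i) := by
      ext i
      rw [hWmem]
      simp only [mem_filter, mem_univ, true_and]
      constructor
      · rintro (⟨h, -⟩ | ⟨h, hle⟩)
        · exact h
        · have := (σ.symm i).isLt; omega
      · intro h; exact Or.inl ⟨h, (σ.symm i).isLt⟩
    rw [hWn']; exact hPv
  have hstep : ∀ j : ℕ, ∀ hj : j < 2*k+4,
      (0 < v (σ ⟨j, hj⟩) ∧ (W (j+1)).card = (W j).card + 1) ∨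
      (v (σ ⟨j, hj⟩) < 0 ∧ (W j).card = (W (j+1)).card + 1) := by
    intro j hj
    have hsymm : ((σ.symm (σ ⟨j, hj⟩) : Fin (2*k+4)) : ℕ) = j := by simp
    have hothers : ∀ i, i ≠ σ ⟨j, hj⟩ → ((σ.symm i : Fin (2*k+4)) : ℕ) ≠ j := by
      intro i hi hc
      apply hi
      have h1 : σ.symm i = ⟨j, hj⟩ := Fin.ext hc
      have h2 := congrArg σ h1
      simpa using h2
    rcases (hvne (σ ⟨j, hj⟩)).lt_or_gt with hneg | hpos
    · right
      refine ⟨hneg, ?_⟩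
      have hnotin : σ ⟨j, hj⟩ ∉ W (j+1) := by
        rw [hWmem]
        rintro (⟨h,-⟩ | ⟨-,h⟩)
        · exact absurd h (asymm hneg)
        · omega
      have hWeq : W j = insert (σ ⟨j, hj⟩) (W (j+1)) := by
        ext i
        rw [hWmem, Finset.mem_insert, hWmem]
        by_cases hii : i = σ ⟨j, hj⟩
        · subst hii
          constructor
          · intro _; exact Or.inl rfl
          · intro _; exact Or.inr ⟨hneg, by omega⟩
        · have hne := hothers i hii
          constructor
          · rintro (⟨h1,h2⟩ | ⟨h1,h2⟩)
            · exact Or.inr (Or.inl ⟨h1, by omega⟩)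
            · exact Or.inr (Or.inr ⟨h1, by omega⟩)
          · rintro (h | (⟨h1,h2⟩ | ⟨h1,h2⟩))
            · exact absurd h hii
            · exact Or.inl ⟨h1, by omega⟩
            · exact Or.inr ⟨h1, by omega⟩
      rw [hWeq, Finset.card_insert_of_notMem hnotin]
    · left
      refine ⟨hpos, ?_⟩
      have hnotin : σ ⟨j, hj⟩ ∉ W j := by
        rw [hWmem]
        rintro (⟨-,h⟩ | ⟨h,-⟩)
        · omega
        · exact absurd h (asymm hpos)
      have hWeq : W (j+1) = insert (σ ⟨j, hj⟩) (W j) := by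
        ext i
        rw [hWmem, Finset.mem_insert, hWmem]
        by_cases hii : i = σ ⟨j, hj⟩
        · subst hii
          constructor
          · intro _; exact Or.inl rfl
          · intro _; exact Or.inl ⟨hpos, by omega⟩
        · have hne := hothers i hii
          constructor
          · rintro (⟨h1,h2⟩ | ⟨h1,h2⟩)
            · exact Or.inr (Or.inl ⟨h1, by omega⟩)
            · exact Or.inr (Or.inr ⟨h1, by omega⟩)
          · rintro (h | (⟨h1,h2⟩ | ⟨h1,h2⟩))
            · exact absurd h hii
            · exact Or.inl ⟨h1, by omega⟩
            · exact Or.inr ⟨h1, by omega⟩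
      rw [hWeq, Finset.card_insert_of_notMem hnotin]
  -- find the first time the walk reaches k+3
  have hQex : ∃ j, k+3 ≤ (W j).card ∧ j ≤ 2*k+4 := ⟨2*k+4, hWn, le_refl _⟩
  set js := Nat.find hQex with hjs
  have hspec := Nat.find_spec hQex
  rw [← hjs] at hspec
  have hmin : ∀ j, j < js → ¬(k+3 ≤ (W j).card ∧ j ≤ 2*k+4) := fun j hj => Nat.find_min hQex hj
  have hjsle : js ≤ 2*k+4 := hspec.2
  have hstepb : ∀ j : ℕ, ∀ hj : j < 2*k+4, (W (j+1)).card ≤ (W j).card + 1 := by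
    intro j hj; rcases hstep j hj with ⟨-, h⟩ | ⟨-, h⟩ <;> omega
  have hjs2 : 2 ≤ js := by
    have h1 : (W 1).card ≤ (W 0).card + 1 := hstepb 0 (by omega)
    rcases Nat.lt_or_ge js 2 with h | h
    · exfalso
      have hs1 := hspec.1
      have h' : js = 0 ∨ js = 1 := by omega
      rcases h' with h' | h' <;> rw [h'] at hs1 <;> omega
    · exact h
  have hj1lt : js - 1 < 2*k+4 := by omega
  have hj2lt : js - 2 < 2*k+4 := by omega
  have hstep1 := hstep (js-1) hj1lt
  have hstep2 := hstep (js-2) hj2lt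
  have he1 : js - 1 + 1 = js := by omega
  have he2 : js - 2 + 1 = js - 1 := by omega
  rw [he1] at hstep1
  rw [he2] at hstep2
  have hm1 : (W (js-1)).card ≤ k+2 := by
    by_contra hcon
    push_neg at hcon
    exact hmin (js-1) (by omega) ⟨by omega, by omega⟩
  have hm2 : (W (js-2)).card ≤ k+2 := by
    by_contra hcon
    push_neg at hcon
    exact hmin (js-2) (by omega) ⟨by omega, by omega⟩
  have hwjs : k+3 ≤ (W js).card := hspec.1
  obtain ⟨hvc', hcard1⟩ : 0 < v (σ ⟨js-1, hj1lt⟩) ∧ (W js).card = (W (js-1)).card + 1 := by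
    rcases hstep1 with h | ⟨-, h⟩
    · exact h
    · exfalso; omega
  obtain ⟨hvc, hcard2⟩ : 0 < v (σ ⟨js-2, hj2lt⟩) ∧ (W (js-1)).card = (W (js-2)).card + 1 := by
    rcases hstep2 with h | ⟨-, h⟩
    · exact h
    · exfalso; omega
  have hWj1card : (W (js-1)).card = k+2 := by omega
  set c : Fin (2*k+4) := σ ⟨js-2, hj2lt⟩ with hcdef
  set c' : Fin (2*k+4) := σ ⟨js-1, hj1lt⟩ with hc'def
  have htcc' : t c < t c' := by
    have h := hmono (show (⟨js-2, hj2lt⟩ : Fin (2*k+4)) < ⟨js-1, hj1lt⟩ by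
      rw [Fin.mk_lt_mk]; omega)
    simpa [hcdef, hc'def, Function.comp] using h
  -- comparison helpers
  have hct : ∀ (i : Fin (2*k+4)) (m : Fin (2*k+4)), t i < t (σ m) ↔ σ.symm i < m := by
    intro i m
    constructor
    · intro h
      have h2 : (t ∘ σ) (σ.symm i) < (t ∘ σ) m := by simpa [Function.comp] using h
      exact hmono.lt_iff_lt.mp h2
    · intro h
      have h2 := hmono h
      simpa [Function.comp] using h2
  have htc : ∀ (i : Fin (2*k+4)) (m : Fin (2*k+4)), t (σ m) < t i ↔ m < σ.symm i := by
    intro i m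
    constructor
    · intro h
      have h2 : (t ∘ σ) m < (t ∘ σ) (σ.symm i) := by simpa [Function.comp] using h
      exact hmono.lt_iff_lt.mp h2
    · intro h
      have h2 := hmono h
      simpa [Function.comp] using h2
  have hnob : ∀ i, ¬ (t c < t i ∧ t i < t c') := by
    rintro i ⟨h1, h2⟩
    rw [hcdef] at h1
    rw [hc'def] at h2
    have g1 : (⟨js-2, hj2lt⟩ : Fin (2*k+4)) < σ.symm i := (htc i ⟨js-2, hj2lt⟩).mp h1
    have g2 : σ.symm i < (⟨js-1, hj1lt⟩ : Fin (2*k+4)) := (hct i ⟨js-1, hj1lt⟩).mp h2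
    have g1' : js - 2 < ((σ.symm i : Fin (2*k+4)) : ℕ) := g1
    have g2' : ((σ.symm i : Fin (2*k+4)) : ℕ) < js - 1 := g2
    omega
  have hsymmc' : ((σ.symm c' : Fin (2*k+4)) : ℕ) = js - 1 := by rw [hc'def]; simp
  have hAW : univ.filter (fun i => 0 < u i + t c' * v i) = W (js-1) := by
    ext i
    rw [mem_filter, hWmem]
    simp only [mem_univ, true_and]
    rw [hid i (t c')]
    by_cases hic' : i = c'
    · subst hic'
      constructor
      · intro h
        rw [sub_self, mul_zero] at h
        exact absurd h (lt_irrefl 0)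
      · rintro (⟨h1, h2⟩ | ⟨h1, h2⟩)
        · rw [hsymmc'] at h2; omega
        · exact absurd hvc' (asymm h1)
    · have hne : ((σ.symm i : Fin (2*k+4)) : ℕ) ≠ js - 1 := by
        intro hcc
        apply hic'
        have hfn : σ.symm i = ⟨js-1, hj1lt⟩ := Fin.ext (by rw [hcc])
        rw [hc'def]
        have := congrArg σ hfn
        simpa using this
      constructor
      · intro h
        rcases mul_pos_iff.mp h with ⟨h1, h2⟩ | ⟨h1, h2⟩
        · left
          refine ⟨h1, ?_⟩
          have h3 : t i < t c' := by linarith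
          rw [hc'def] at h3
          have g := (hct i ⟨js-1, hj1lt⟩).mp h3
          exact (g : ((σ.symm i : Fin (2*k+4)) : ℕ) < js - 1)
        · right
          refine ⟨h1, ?_⟩
          have h3 : t c' < t i := by linarith
          rw [hc'def] at h3
          have g := (htc i ⟨js-1, hj1lt⟩).mp h3
          have g' : js - 1 < ((σ.symm i : Fin (2*k+4)) : ℕ) := g
          omega
      · rintro (⟨h1, h2⟩ | ⟨h1, h2⟩)
        · have h3 : σ.symm i < (⟨js-1, hj1lt⟩ : Fin (2*k+4)) :=
            (show ((σ.symm i : Fin (2*k+4)) : ℕ) < js - 1 from h2)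
          have h4 : t i < t c' := by
            rw [hc'def]
            exact (hct i ⟨js-1, hj1lt⟩).mpr h3
          exact mul_pos h1 (by linarith)
        · have h2' : js - 1 < ((σ.symm i : Fin (2*k+4)) : ℕ) := by omega
          have h3 : (⟨js-1, hj1lt⟩ : Fin (2*k+4)) < σ.symm i :=
            (show (js - 1 : ℕ) < ((σ.symm i : Fin (2*k+4)) : ℕ) from h2')
          have h4 : t c' < t i := by
            rw [hc'def]
            exact (htc i ⟨js-1, hj1lt⟩).mpr h3
          exact mul_pos_of_neg_of_neg h1 (by linarith)
  have hAcard : (univ.filter (fun i => 0 < u i + t c' * v i)).card = k + 2 := by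
    rw [hAW]
    exact hWj1card
  exact final_step k S p hp_inj hp_range K1 u v t hvne hdep hid ht_inj c c' hvc hvc' htcc'
    hnob hAcard
end

section
/- Let k ≥ 1 and let S be a set of 2k+3 points in general position in ℝ^(2k). Then there exist two disjoint (k+1)-element subsets A, B ⊆ S such that conv A ∩ conv B ≠ ∅. -/
open scoped Classical

/-!
The affine dependencies of the `2k + 3` points form a space of dimension at least two, and by
general position a nonzero dependency vanishes at no more than one point. Take dependencies `u`, `v`
with `v` nowhere zero. On the pencil `u + t • v` the `i`-th weight is `v i * (t - s i)` with
`s i = -u i / v i`, and the slopes `s i` are distinct. At `t = s j` the signed count of the weights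
is `∑ i, sign (v i) * sign (s j - s i)`; since the number of points is odd, a discrete intermediate
value argument on the partial sums of `sign ∘ v`, ordered by slope, makes it vanish for some `j`.
That dependency has one zero, `k + 1` positive and `k + 1` negative weights, and its positive and
negative parts are the required Radon partition.
-/

open Finset Module SignType Function

section AffineDependencies

variable {ι k V : Type*} [Fintype ι] [Field k] [AddCommGroup V] [Module k V]

variable (k) in
def affineDependencies (p : ι → V) : Submodule k (ι → k) :=
  LinearMap.ker
    ((Fintype.linearCombination k p).prod (Fintype.linearCombination k fun _ => (1 : k)))

theorem mem_affineDependencies {p : ι → V} {w : ι → k} :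
    w ∈ affineDependencies k p ↔ ∑ i, w i • p i = 0 ∧ ∑ i, w i = 0 := by
  simp [affineDependencies, Fintype.linearCombination_apply]

variable (k) in
theorem card_le_finrank_affineDependencies [FiniteDimensional k V] (p : ι → V) :
    Fintype.card ι ≤ finrank k (affineDependencies k p) + finrank k V + 1 := by
  let Φ := (Fintype.linearCombination k p).prod (Fintype.linearCombination k fun _ => (1 : k))
  have hrank := LinearMap.finrank_range_add_finrank_ker Φ
  have hrange := Submodule.finrank_le (LinearMap.range Φ)
  rw [finrank_fintype_fun_eq_card] at hrank
  rw [finrank_prod, finrank_self] at hrange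
  change _ ≤ finrank k (LinearMap.ker Φ) + _ + 1
  omega

theorem AffineIndependent.eq_zero_of_mem_affineDependencies {p : ι → V} {s : Finset ι}
    (hs : AffineIndependent k fun i : s => p i) {w : ι → k} (hw : w ∈ affineDependencies k p)
    (hws : ∀ i ∉ s, w i = 0) : w = 0 := by
  rw [mem_affineDependencies] at hw
  have hsum₀ : ∑ i : s, w i = 0 := by
    rw [sum_coe_sort s w, sum_subset (subset_univ s) fun i _ hi => hws i hi, hw.2]
  have hsum₁ : ∑ i : s, w i • p i = 0 := by
    rw [sum_coe_sort s fun i => w i • p i,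
      sum_subset (subset_univ s) fun i _ hi => by rw [hws i hi, zero_smul], hw.1]
  funext i
  by_cases hi : i ∈ s
  · exact hs.eq_zero_of_sum_eq_zero hsum₀ hsum₁ ⟨i, hi⟩ (mem_univ _)
  · exact hws i hi

end AffineDependencies

section Signs

variable {ι R : Type*} [Fintype ι] [Zero R] [LinearOrder R]

theorem sum_filter_pos_add_sum_filter_neg {M : Type*} [AddCommMonoid M]
    (w : ι → R) (g : ι → M) (hg : ∀ i, w i = 0 → g i = 0) :
    ∑ i with 0 < w i, g i + ∑ i with w i < 0, g i = ∑ i, g i := by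
  rw [sum_filter, sum_filter, ← sum_add_distrib]
  refine sum_congr rfl fun i _ => ?_
  rcases lt_trichotomy (w i) 0 with h | h | h
  · simp [h, h.not_gt]
  · simp [h, hg i h]
  · simp [h, h.not_gt]

theorem card_filter_pos_add_card_filter_neg_add_card_filter_eq_zero (w : ι → R) :
    #{i | 0 < w i} + #{i | w i < 0} + #{i | w i = 0} = Fintype.card ι := by
  have hne : ({i | 0 < w i} : Finset ι) ∪ ({i | w i < 0} : Finset ι) =
      ({i | ¬ w i = 0} : Finset ι) := by
    ext i
    simp only [mem_union, mem_filter, mem_univ, true_and, ← ne_eq, ne_iff_lt_or_gt, or_comm]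
  have hdisj : Disjoint ({i | 0 < w i} : Finset ι) ({i | w i < 0} : Finset ι) :=
    disjoint_filter.2 fun _ _ h h' => h.not_gt h'
  rw [← card_union_of_disjoint hdisj, hne, add_comm, card_filter_add_card_filter_not, card_univ]

theorem sum_sign_eq_card_sub_card (w : ι → R) :
    ∑ i, (sign (w i) : ℤ) = #{i | 0 < w i} - #{i | w i < 0} := by
  have hpos : ∑ i with 0 < w i, (sign (w i) : ℤ) = #{i | 0 < w i} := by
    rw [card_eq_sum_ones, Nat.cast_sum]
    exact sum_congr rfl fun i hi => by simp [sign_pos (mem_filter.1 hi).2]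
  have hneg : ∑ i with w i < 0, (sign (w i) : ℤ) = -#{i | w i < 0} := by
    rw [card_eq_sum_ones, Nat.cast_sum, ← sum_neg_distrib]
    exact sum_congr rfl fun i hi => by simp [sign_neg (mem_filter.1 hi).2]
  rw [← sum_filter_pos_add_sum_filter_neg w _ fun i h => by simp [h], hpos, hneg, sub_eq_add_neg]

end Signs

section Radon

variable {ι 𝕜 E : Type*} [Fintype ι] [Field 𝕜] [LinearOrder 𝕜] [IsStrictOrderedRing 𝕜]
  [AddCommGroup E] [Module 𝕜 E] [DecidableEq E]

theorem convexHull_inter_convexHull_nonempty_of_mem_affineDependencies {p : ι → E} {w : ι → 𝕜}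
    (hw : w ∈ affineDependencies 𝕜 p) (hw0 : w ≠ 0) :
    (convexHull 𝕜 (({i | 0 < w i} : Finset ι).image p : Set E) ∩
      convexHull 𝕜 (({i | w i < 0} : Finset ι).image p : Set E)).Nonempty := by
  rw [mem_affineDependencies] at hw
  have hsum := sum_filter_pos_add_sum_filter_neg w w fun _ h => h
  have hvec := sum_filter_pos_add_sum_filter_neg w (fun i => w i • p i) fun i h => by simp [h]
  obtain ⟨j, -, hj⟩ := exists_pos_of_sum_zero_of_exists_nonzero w hw.2
    (by simpa [funext_iff] using hw0)
  have hpos : 0 < ∑ i with 0 < w i, w i :=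
    sum_pos' (fun i hi => (mem_filter.1 hi).2.le) ⟨j, by simp [hj], hj⟩
  refine ⟨centerMass {i | 0 < w i} w p, ?_, ?_⟩
  · exact centerMass_mem_convexHull _ (fun i hi => (mem_filter.1 hi).2.le) hpos
      fun i hi => mem_coe.2 (mem_image_of_mem p hi)
  · rw [centerMass_of_sum_add_sum_eq_zero (hsum.trans hw.2) (hvec.trans hw.1)]
    exact centerMass_mem_convexHull_of_nonpos _ (fun i hi => (mem_filter.1 hi).2.le)
      (by linarith) fun i hi => mem_coe.2 (mem_image_of_mem p hi)

end Radon

section SignWalk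

variable {ι α : Type*} [Fintype ι] [LinearOrder α] {s : ι → α} {ε : ι → ℤ}

theorem sum_filter_le_eq_sum_filter_lt_add (hs : Injective s) (j : ι) :
    ∑ i with s i ≤ s j, ε i = ∑ i with s i < s j, ε i + ε j := by
  have hinsert : ({i | s i ≤ s j} : Finset ι) = insert j ({i | s i < s j} : Finset ι) := by
    ext i
    simp [le_iff_lt_or_eq, hs.eq_iff, or_comm]
  rw [hinsert, sum_insert (by simp), add_comm]

variable (s ε) in
theorem exists_sum_filter_lt_lt_le_sum_filter_le [Nonempty ι] {c : ℤ} (hc₀ : 0 < c)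
    (hc : c ≤ ∑ i, ε i) :
    ∃ j, ∑ i with s i < s j, ε i < c ∧ c ≤ ∑ i with s i ≤ s j, ε i := by
  set J : Finset ι := {j | c ≤ ∑ i with s i ≤ s j, ε i}
  have hJ : J.Nonempty := by
    obtain ⟨j, hj⟩ := Finite.exists_max s
    exact ⟨j, by simpa [J, hj] using hc⟩
  obtain ⟨j, hjJ, hjmin⟩ := J.exists_min_image s hJ
  refine ⟨j, ?_, (mem_filter.1 hjJ).2⟩
  by_contra! hle
  set I : Finset ι := {i | s i < s j}
  have hI : I.Nonempty := by
    by_contra hI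
    rw [not_nonempty_iff_eq_empty.1 hI, sum_empty] at hle
    exact hle.not_gt hc₀
  obtain ⟨i₀, hi₀I, hi₀max⟩ := I.exists_max_image s hI
  have hpred : ({i | s i ≤ s i₀} : Finset ι) = I := by
    ext i
    simp only [I, mem_filter, mem_univ, true_and]
    exact ⟨fun h => h.trans_lt (mem_filter.1 hi₀I).2, fun h => hi₀max i (by simpa [I] using h)⟩
  have hi₀J : i₀ ∈ J := by simpa [J, hpred] using hle
  exact (hjmin i₀ hi₀J).not_gt (mem_filter.1 hi₀I).2

theorem sum_mul_sign_sub_eq [AddCommGroup α] [IsOrderedAddMonoid α] (j : ι) :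
    ∑ i, ε i * (sign (s j - s i) : ℤ) =
      ∑ i with s i < s j, ε i + ∑ i with s i ≤ s j, ε i - ∑ i, ε i := by
  rw [sum_filter, sum_filter, ← sum_add_distrib, ← sum_sub_distrib]
  refine sum_congr rfl fun i _ => ?_
  rcases lt_trichotomy (s i) (s j) with h | h | h
  · simp [h, h.le, sign_pos (sub_pos.2 h)]
  · simp [h]
  · simp [h.not_gt, h.not_ge, sign_neg (sub_neg.2 h)]

theorem odd_sum_of_forall_eq_one_or_eq_neg_one (hodd : Odd (Fintype.card ι))
    (hε : ∀ i, ε i = 1 ∨ ε i = -1) : Odd (∑ i, ε i) := by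
  obtain ⟨a, ha⟩ : Even (∑ i, (ε i + 1)) :=
    even_sum _ fun i _ => by rcases hε i with h | h <;> simp [h]
  obtain ⟨b, hb⟩ := hodd
  rw [sum_add_distrib, sum_const, card_univ, hb, nsmul_one] at ha
  exact ⟨a - b - 1, by push_cast at ha; linarith⟩

theorem exists_sum_mul_sign_sub_eq_zero [AddCommGroup α] [IsOrderedAddMonoid α]
    (hodd : Odd (Fintype.card ι)) (hs : Injective s) (hε : ∀ i, ε i = 1 ∨ ε i = -1) :
    ∃ j, ∑ i, ε i * (sign (s j - s i) : ℤ) = 0 := by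
  have : Nonempty ι := Fintype.card_pos_iff.1 hodd.pos
  obtain ⟨c, hc⟩ := odd_sum_of_forall_eq_one_or_eq_neg_one hodd hε
  wlog hE : 0 < ∑ i, ε i generalizing ε c
  · have hneg : ∑ i, -ε i = -∑ i, ε i := sum_neg_distrib ε
    obtain ⟨j, hj⟩ := this (ε := fun i => -ε i) (fun i => by rcases hε i with h | h <;> simp [h])
      (-c - 1) (by omega) (by omega)
    exact ⟨j, by simpa [sum_neg_distrib] using hj⟩
  -- With `∑ ε = 2c + 1`, the partial sums along `s` pass `c + 1` at `j`, so the sums strictly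
  -- below and up to `s j` are `c` and `c + 1`.
  obtain ⟨j, hlt, hle⟩ :=
    exists_sum_filter_lt_lt_le_sum_filter_le s ε (c := c + 1) (by omega) (by omega)
  rw [sum_filter_le_eq_sum_filter_lt_add hs] at hle
  refine ⟨j, ?_⟩
  rw [sum_mul_sign_sub_eq, sum_filter_le_eq_sum_filter_lt_add hs]
  rcases hε j with h | h <;> omega

end SignWalk

section Pencil

variable {ι 𝕜 : Type*} [Fintype ι] [Field 𝕜] [LinearOrder 𝕜] [IsStrictOrderedRing 𝕜]
  {K : Submodule 𝕜 (ι → 𝕜)}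

theorem exists_mem_forall_ne_zero (hK : 2 ≤ finrank 𝕜 K)
    (hK₂ : ∀ w ∈ K, ∀ i j, i ≠ j → w i = 0 → w j = 0 → w = 0) : ∃ v ∈ K, ∀ i, v i ≠ 0 := by
  refine Module.Dual.exists_forall_mem_ne_zero_of_forall_exists K (fun i => LinearMap.proj i)
    fun i => ?_
  by_contra! hi
  have : Nontrivial ι := by
    rw [← Fintype.one_lt_card_iff_nontrivial, ← finrank_fintype_fun_eq_card 𝕜]
    exact (Submodule.finrank_le K).trans_lt' hK
  obtain ⟨j, hji⟩ := exists_ne i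
  have hinj : Injective ((LinearMap.proj j : (ι → 𝕜) →ₗ[𝕜] 𝕜).comp K.subtype) :=
    (injective_iff_map_eq_zero _).2 fun x hx => Subtype.ext (hK₂ x x.2 j i hji hx (hi x x.2))
  have := LinearMap.finrank_le_finrank_of_injective hinj
  rw [finrank_self] at this
  omega

theorem exists_mem_ne_zero_card_pos_eq_card_neg (hodd : Odd (Fintype.card ι))
    (hK : 2 ≤ finrank 𝕜 K) (hK₂ : ∀ w ∈ K, ∀ i j, i ≠ j → w i = 0 → w j = 0 → w = 0) :
    ∃ w ∈ K, w ≠ 0 ∧ #{i | 0 < w i} = #{i | w i < 0} := by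
  have : Nonempty ι := Fintype.card_pos_iff.1 hodd.pos
  obtain ⟨v, hvK, hv⟩ := exists_mem_forall_ne_zero hK hK₂
  have hspan : 𝕜 ∙ v < K := by
    refine lt_of_le_of_ne ((Submodule.span_singleton_le_iff_mem _ _).2 hvK) fun h => ?_
    have := finrank_span_singleton (K := 𝕜) fun h0 => hv (Classical.arbitrary ι) (congrFun h0 _)
    rw [h] at this
    omega
  obtain ⟨u, huK, hu⟩ := SetLike.exists_of_lt hspan
  have hline : ∀ t : 𝕜, u + t • v ≠ 0 := fun t h => hu <| by
    rw [eq_neg_of_add_eq_zero_left h]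
    exact Submodule.neg_mem _ (Submodule.smul_mem _ _ (Submodule.mem_span_singleton_self v))
  set s : ι → 𝕜 := fun i => -u i / v i
  have hcoord : ∀ t i, (u + t • v) i = v i * (t - s i) := by
    intro t i
    simp only [s, Pi.add_apply, Pi.smul_apply, smul_eq_mul]
    field_simp [hv i]
    ring
  have hs : Injective s := by
    intro i j hij
    by_contra hne
    refine hline (s i) (hK₂ _ (K.add_mem huK (K.smul_mem _ hvK)) i j hne ?_ ?_)
    · rw [hcoord, sub_self, mul_zero]
    · rw [hcoord, hij, sub_self, mul_zero]
  have hsign : ∀ i, (sign (v i) : ℤ) = 1 ∨ (sign (v i) : ℤ) = -1 := fun i => by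
    rcases (hv i).lt_or_gt with h | h
    · simp [sign_neg h]
    · simp [sign_pos h]
  obtain ⟨j, hj⟩ := exists_sum_mul_sign_sub_eq_zero hodd hs hsign
  refine ⟨u + s j • v, K.add_mem huK (K.smul_mem _ hvK), hline _, ?_⟩
  have hsum : ∑ i, (sign ((u + s j • v) i) : ℤ) = 0 := by
    simpa only [hcoord, sign_mul, SignType.coe_mul] using hj
  have hcard := sum_sign_eq_card_sub_card (u + s j • v)
  omega

end Pencil

theorem GenPos.eq_zero_of_mem_affineDependencies {d : ℕ} {S : Finset (Fin d → ℝ)}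
    (hS : GenPos d S) (hcard : S.card = d + 3) {w : S → ℝ}
    (hw : w ∈ affineDependencies ℝ ((↑) : S → Fin d → ℝ)) {i j : S} (hij : i ≠ j)
    (hi : w i = 0) (hj : w j = 0) : w = 0 := by
  set s : Finset S := (univ.erase i).erase j
  have hscard : (s.map (Embedding.subtype _)).card = d + 1 := by
    rw [card_map, card_erase_of_mem (mem_erase.2 ⟨hij.symm, mem_univ j⟩),
      card_erase_of_mem (mem_univ i), card_univ, Fintype.card_coe, hcard]
    rfl
  have hsS : s.map (Embedding.subtype _) ⊆ S := fun x hx => by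
    obtain ⟨l, -, rfl⟩ := mem_map.1 hx
    exact l.2
  have hs : AffineIndependent ℝ fun l : s => ((l : S) : Fin d → ℝ) :=
    (hS _ hsS hscard).comp_embedding
      ⟨fun l => ⟨l.1.1, mem_coe.2 (mem_map_of_mem _ l.2)⟩,
        fun a b h => Subtype.ext <| Subtype.ext <| by simpa using congrArg Subtype.val h⟩
  refine hs.eq_zero_of_mem_affineDependencies hw fun l hl => ?_
  simp only [s, mem_erase, mem_univ, and_true, not_and_or, not_not] at hl
  rcases hl with rfl | rfl <;> assumption

theorem stmt1_general (k : ℕ) (S : Finset (Fin (2 * k) → ℝ))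
    (hcard : S.card = 2 * k + 3) (hgp : GenPos (2 * k) S) :
    ∃ A B : Finset (Fin (2 * k) → ℝ), A ⊆ S ∧ B ⊆ S ∧ Disjoint A B ∧
      A.card = k + 1 ∧ B.card = k + 1 ∧
      (convexHull ℝ (A : Set (Fin (2 * k) → ℝ)) ∩
        convexHull ℝ (B : Set (Fin (2 * k) → ℝ))).Nonempty := by
  have hcardS : Fintype.card S = 2 * k + 3 := by rw [Fintype.card_coe, hcard]
  have hdim := card_le_finrank_affineDependencies ℝ ((↑) : S → Fin (2 * k) → ℝ)
  rw [hcardS, finrank_fin_fun] at hdim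
  have hrank : 2 ≤ finrank ℝ (affineDependencies ℝ ((↑) : S → Fin (2 * k) → ℝ)) := by omega
  have htwo : ∀ w ∈ affineDependencies ℝ ((↑) : S → Fin (2 * k) → ℝ),
      ∀ i j, i ≠ j → w i = 0 → w j = 0 → w = 0 :=
    fun _ hw _ _ hij hi hj => hgp.eq_zero_of_mem_affineDependencies hcard hw hij hi hj
  obtain ⟨w, hwK, hw0, hbal⟩ := exists_mem_ne_zero_card_pos_eq_card_neg
    (by rw [hcardS]; exact ⟨k + 1, by ring⟩) hrank htwo
  have hzero : #{i | w i = 0} ≤ 1 := card_le_one.2 fun i hi j hj => by_contra fun hij =>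
    hw0 (htwo w hwK i j hij (mem_filter.1 hi).2 (mem_filter.1 hj).2)
  have hsplit := card_filter_pos_add_card_filter_neg_add_card_filter_eq_zero w
  have hR := convexHull_inter_convexHull_nonempty_of_mem_affineDependencies hwK hw0
  refine ⟨_, _, image_subset_iff.2 fun i _ => i.2, image_subset_iff.2 fun i _ => i.2, ?_, ?_, ?_,
    hR⟩
  · exact (disjoint_image Subtype.val_injective).2 (disjoint_filter.2 fun _ _ h h' => h.not_gt h')
  all_goals rw [card_image_of_injective _ Subtype.val_injective]; omega

theorem stmt1 (k : ℕ) (hk : 1 ≤ k) (S : Finset (Fin (2 * k) → ℝ))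
    (hcard : S.card = 2 * k + 3) (hgp : GenPos (2 * k) S) :
    ∃ A B : Finset (Fin (2 * k) → ℝ), A ⊆ S ∧ B ⊆ S ∧ Disjoint A B ∧
      A.card = k + 1 ∧ B.card = k + 1 ∧
      (convexHull ℝ (A : Set (Fin (2 * k) → ℝ)) ∩
        convexHull ℝ (B : Set (Fin (2 * k) → ℝ))).Nonempty :=
  stmt1_general k S hcard hgp
end

section
/- Let k ≥ 1 and let m : ℝ → ℝ^(2k), m(t) = (t, t², …, t^(2k)), be the moment curve. Then the set m({1, 2, …, 2k+3}) is in general position in ℝ^(2k), and for every (k+1)-element subset I ⊆ {1, …, 2k+3}, the simplex conv(m(I)) intersects the boundary of the simplex conv(m({1,…,2k+3} \ I)) (the union of the convex hulls of the images of the (k+1)-element subsets of {1,…,2k+3} \ I) in a finite, even number of points. -/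
open scoped Classical

/-- The moment curve `t ↦ (t, t², …, t^d)` in `ℝ^d`. -/
def moment (d : ℕ) : ℝ → (Fin d → ℝ) := fun t i => t ^ ((i : ℕ) + 1)

open Finset Polynomial

open Finset Polynomial

noncomputable def mc (d : ℕ) : ℕ → (Fin d → ℝ) := fun n : ℕ => moment d (n : ℝ)

noncomputable def lagc (s : Finset ℕ) : ℕ → ℝ :=
  fun i => ∏ j ∈ s.erase i, ((i : ℝ) - (j : ℝ))⁻¹

lemma mc_inj {d : ℕ} (hd : 1 ≤ d) : Function.Injective (mc d) := by
  intro a b h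
  have := congrFun h ⟨0, hd⟩
  simp only [mc, moment, zero_add, pow_one] at this
  exact_mod_cast this

lemma zero_of_dep {ι : Type*} {s : Finset ι} {t : ι → ℝ} (ht : Set.InjOn t s)
    {w : ι → ℝ} {d : ℕ} (hcard : s.card ≤ d + 1)
    (h : ∀ q ≤ d, ∑ i ∈ s, w i * t i ^ q = 0) : ∀ i ∈ s, w i = 0 := by
  intro i0 hi0
  set Q : Polynomial ℝ := ∏ j ∈ s.erase i0, (X - C (t j)) with hQ
  have hdeg : Q.natDegree = (s.erase i0).card := by
    rw [hQ, Polynomial.natDegree_prod]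
    · simp [Polynomial.natDegree_X_sub_C]
    · intro j _; exact Polynomial.X_sub_C_ne_zero _
  have hdeg' : Q.natDegree < d + 1 := by
    rw [hdeg, Finset.card_erase_of_mem hi0]
    have : 1 ≤ s.card := Finset.card_pos.mpr ⟨i0, hi0⟩
    omega
  have hsum : ∑ i ∈ s, w i * Q.eval (t i) = 0 := by
    have hterm : ∀ i ∈ s, w i * Q.eval (t i)
        = ∑ q ∈ Finset.range (d + 1), Q.coeff q * (w i * t i ^ q) := by
      intro i _
      rw [Polynomial.eval_eq_sum_range' hdeg', Finset.mul_sum]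
      exact Finset.sum_congr rfl fun q _ => by ring
    rw [Finset.sum_congr rfl hterm, Finset.sum_comm]
    refine Finset.sum_eq_zero fun q hq => ?_
    rw [← Finset.mul_sum, h q (Nat.lt_succ_iff.mp (Finset.mem_range.mp hq)), mul_zero]
  have hzero : ∀ j ∈ s, j ≠ i0 → w j * Q.eval (t j) = 0 := by
    intro j hj hne
    have : Q.eval (t j) = 0 := by
      rw [hQ, Polynomial.eval_prod]
      exact Finset.prod_eq_zero (Finset.mem_erase.mpr ⟨hne, hj⟩) (by simp)
    rw [this, mul_zero]
  rw [Finset.sum_eq_single_of_mem i0 hi0 hzero] at hsum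
  have hQne : Q.eval (t i0) ≠ 0 := by
    rw [hQ, Polynomial.eval_prod]
    refine Finset.prod_ne_zero_iff.mpr fun j hj => ?_
    have hj' := Finset.mem_erase.mp hj
    simp only [Polynomial.eval_sub, Polynomial.eval_X, Polynomial.eval_C]
    exact sub_ne_zero.mpr fun hc => hj'.1 (ht hj'.2 hi0 hc.symm)
  exact (mul_eq_zero.mp hsum).resolve_right hQne
lemma lagc_mul_prod {s : Finset ℕ} {i : ℕ} (hi : i ∈ s) :
    lagc s i * ∏ j ∈ s.erase i, ((i : ℝ) - (j : ℝ)) = 1 := by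
  rw [lagc, ← Finset.prod_mul_distrib]
  refine Finset.prod_eq_one fun j hj => ?_
  have hj' := Finset.mem_erase.mp hj
  have hne : (i : ℝ) - (j : ℝ) ≠ 0 := by
    refine sub_ne_zero.mpr fun hc => hj'.1 ?_
    exact_mod_cast hc.symm
  exact inv_mul_cancel₀ hne

lemma lagc_dep {d : ℕ} {s : Finset ℕ} (hcard : s.card = d + 2) :
    ∀ q ≤ d, ∑ i ∈ s, lagc s i * (i : ℝ) ^ q = 0 := by
  intro q hq
  set G : Polynomial ℝ :=
    ∑ i ∈ s, Polynomial.C (lagc s i * (i : ℝ) ^ q) * ∏ j ∈ s.erase i, (X - C (j : ℝ)) with hG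
  have hprodmonic : ∀ i : ℕ, (∏ j ∈ s.erase i, (X - C ((j : ℕ) : ℝ))).Monic :=
    fun i => monic_prod_of_monic _ _ fun j _ => monic_X_sub_C _
  have hproddeg : ∀ i ∈ s, (∏ j ∈ s.erase i, (X - C ((j : ℕ) : ℝ))).natDegree = d + 1 := by
    intro i hi
    rw [Polynomial.natDegree_prod _ _ fun j _ => Polynomial.X_sub_C_ne_zero _]
    simp only [Polynomial.natDegree_X_sub_C]
    rw [Finset.sum_const, Finset.card_erase_of_mem hi, hcard]
    simp
  have hcoeff : G.coeff (d + 1) = ∑ i ∈ s, lagc s i * (i : ℝ) ^ q := by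
    rw [hG, Polynomial.finset_sum_coeff]
    refine Finset.sum_congr rfl fun i hi => ?_
    rw [Polynomial.coeff_C_mul]
    have h2 : (∏ j ∈ s.erase i, (X - C ((j : ℕ) : ℝ))).coeff (d + 1) = 1 := by
      have h1 := (hprodmonic i).coeff_natDegree
      rwa [hproddeg i hi] at h1
    rw [h2, mul_one]
  have hz : G - X ^ q = 0 := by
    apply Polynomial.eq_zero_of_natDegree_lt_card_of_eval_eq_zero' _
      (s.image (fun n : ℕ => (n : ℝ)))
    · intro r hr
      obtain ⟨i0, hi0, rfl⟩ := Finset.mem_image.mp hr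
      have heval : G.eval (i0 : ℝ) = (i0 : ℝ) ^ q := by
        rw [hG, Polynomial.eval_finset_sum]
        rw [Finset.sum_eq_single_of_mem i0 hi0 ?side]
        case side =>
          intro j hj hne
          have h3 : Polynomial.eval (i0 : ℝ) (∏ l ∈ s.erase j, (X - C ((l : ℕ) : ℝ))) = 0 := by
            rw [Polynomial.eval_prod]
            exact Finset.prod_eq_zero (Finset.mem_erase.mpr ⟨hne.symm, hi0⟩) (by simp)
          rw [Polynomial.eval_mul, h3, mul_zero]
        rw [Polynomial.eval_mul, Polynomial.eval_C, Polynomial.eval_prod]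
        simp only [Polynomial.eval_sub, Polynomial.eval_X, Polynomial.eval_C]
        have h4 := lagc_mul_prod hi0
        calc lagc s i0 * (i0:ℝ)^q * ∏ j ∈ s.erase i0, ((i0:ℝ) - (j:ℝ))
            = (i0:ℝ)^q * (lagc s i0 * ∏ j ∈ s.erase i0, ((i0:ℝ) - (j:ℝ))) := by ring
          _ = (i0:ℝ)^q := by rw [h4, mul_one]
      rw [Polynomial.eval_sub, heval, Polynomial.eval_pow, Polynomial.eval_X, sub_self]
    · have hdegG : G.natDegree ≤ d + 1 := by
        rw [hG]
        refine le_trans (Polynomial.natDegree_sum_le _ _) ?_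
        rw [Finset.fold_max_le]
        refine ⟨by omega, fun i hi => ?_⟩
        refine le_trans (Polynomial.natDegree_mul_le) ?_
        rw [Polynomial.natDegree_C, hproddeg i hi]
        omega
      have hcards : (s.image (fun n : ℕ => (n : ℝ))).card = d + 2 := by
        rw [Finset.card_image_of_injective _ Nat.cast_injective, hcard]
      rw [hcards]
      have h5 := Polynomial.natDegree_sub_le G ((X : Polynomial ℝ) ^ q)
      have h6 : ((X : Polynomial ℝ) ^ q).natDegree ≤ d + 1 := by
        rw [Polynomial.natDegree_X_pow]; omega
      omega
  have hGX : G = (X : Polynomial ℝ) ^ q := sub_eq_zero.mp hz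
  have : ((X : Polynomial ℝ) ^ q).coeff (d + 1) = 0 := by
    rw [Polynomial.coeff_X_pow]
    simp only [if_neg (by omega : ¬ d + 1 = q)]
  rw [← hcoeff, hGX, this]

lemma lagc_sign {s : Finset ℕ} {i : ℕ} (hi : i ∈ s) :
    ∃ r : ℝ, 0 < r ∧ lagc s i = (-1) ^ ((s.filter (fun j => i < j)).card) * r := by
  classical
  have hsplit : s.erase i = s.filter (fun j => j < i) ∪ s.filter (fun j => i < j) := by
    ext j
    simp only [Finset.mem_erase, Finset.mem_union, Finset.mem_filter]
    constructor
    · rintro ⟨h1, h2⟩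
      rcases lt_or_gt_of_ne h1 with h | h
      · exact Or.inl ⟨h2, h⟩
      · exact Or.inr ⟨h2, h⟩
    · rintro (⟨h1, h2⟩ | ⟨h1, h2⟩)
      · exact ⟨by omega, h1⟩
      · exact ⟨by omega, h1⟩
  have hdisj : Disjoint (s.filter (fun j => j < i)) (s.filter (fun j => i < j)) := by
    rw [Finset.disjoint_filter]
    intro j _ h1
    omega
  have hlo : (0:ℝ) < ∏ j ∈ s.filter (fun j => j < i), ((i : ℝ) - (j : ℝ))⁻¹ := by
    refine Finset.prod_pos fun j hj => ?_
    have h1 := (Finset.mem_filter.mp hj).2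
    have h2 : (0:ℝ) < (i : ℝ) - (j : ℝ) := by
      have : (j : ℝ) < (i : ℝ) := by exact_mod_cast h1
      linarith
    exact inv_pos.mpr h2
  have hhi : ∏ j ∈ s.filter (fun j => i < j), ((i : ℝ) - (j : ℝ))⁻¹
      = (-1) ^ ((s.filter (fun j => i < j)).card)
        * ∏ j ∈ s.filter (fun j => i < j), ((j : ℝ) - (i : ℝ))⁻¹ := by
    rw [← Finset.prod_const, ← Finset.prod_mul_distrib]
    refine Finset.prod_congr rfl fun j hj => ?_
    rw [show (i:ℝ) - (j:ℝ) = -((j:ℝ) - (i:ℝ)) by ring, inv_neg]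
    ring
  have hhipos : (0:ℝ) < ∏ j ∈ s.filter (fun j => i < j), ((j : ℝ) - (i : ℝ))⁻¹ := by
    refine Finset.prod_pos fun j hj => ?_
    have h1 := (Finset.mem_filter.mp hj).2
    have h2 : (0:ℝ) < (j : ℝ) - (i : ℝ) := by
      have : (i : ℝ) < (j : ℝ) := by exact_mod_cast h1
      linarith
    exact inv_pos.mpr h2
  refine ⟨(∏ j ∈ s.filter (fun j => j < i), ((i : ℝ) - (j : ℝ))⁻¹)
    * ∏ j ∈ s.filter (fun j => i < j), ((j : ℝ) - (i : ℝ))⁻¹, by positivity, ?_⟩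
  rw [lagc, hsplit, Finset.prod_union hdisj, hhi]
  ring

lemma lagc_ne_zero {s : Finset ℕ} {i : ℕ} (hi : i ∈ s) : lagc s i ≠ 0 := by
  obtain ⟨r, hr, heq⟩ := lagc_sign hi
  rw [heq]
  have : ((-1:ℝ)) ^ ((s.filter (fun j => i < j)).card) ≠ 0 := by
    apply pow_ne_zero; norm_num
  exact mul_ne_zero this (ne_of_gt hr)

lemma dep_unique {d : ℕ} {s : Finset ℕ} (hcard : s.card = d + 2) {w : ℕ → ℝ}
    (hw : ∀ q ≤ d, ∑ i ∈ s, w i * (i : ℝ) ^ q = 0) :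
    ∃ l : ℝ, ∀ i ∈ s, w i = l * lagc s i := by
  have hne : s.Nonempty := Finset.card_pos.mp (by omega)
  obtain ⟨i0, hi0⟩ := hne
  refine ⟨w i0 / lagc s i0, fun i hi => ?_⟩
  set l := w i0 / lagc s i0 with hl
  have hcancel : w i0 = l * lagc s i0 := by
    rw [hl, div_mul_cancel₀ _ (lagc_ne_zero hi0)]
  by_cases hcase : i = i0
  · rw [hcase]; exact hcancel
  · have hw' : ∀ q ≤ d, ∑ j ∈ s.erase i0, (w j - l * lagc s j) * (j : ℝ) ^ q = 0 := by
      intro q hq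
      have h1 : ∑ j ∈ s, (w j - l * lagc s j) * (j : ℝ) ^ q = 0 := by
        have : ∀ j ∈ s, (w j - l * lagc s j) * (j:ℝ)^q
            = w j * (j:ℝ)^q - l * (lagc s j * (j:ℝ)^q) := fun j _ => by ring
        rw [Finset.sum_congr rfl this, Finset.sum_sub_distrib, hw q hq, ← Finset.mul_sum,
          lagc_dep hcard q hq, mul_zero, sub_zero]
      rw [← Finset.add_sum_erase _ _ hi0] at h1
      have h0 : w i0 - l * lagc s i0 = 0 := by rw [hcancel]; ring
      rw [h0, zero_mul, zero_add] at h1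
      exact h1
    have hz := zero_of_dep (t := fun j : ℕ => (j : ℝ))
      (Nat.cast_injective.injOn)
      (by rw [Finset.card_erase_of_mem hi0, hcard]; omega : (s.erase i0).card ≤ d + 1) hw'
    have := hz i (Finset.mem_erase.mpr ⟨hcase, hi⟩)
    linarith [this]
lemma momAI {d : ℕ} (hd : 1 ≤ d) (A : Finset ℕ) (hA : A.card ≤ d + 1) :
    AffineIndependent ℝ
      (fun x : ((A.image (mc d) : Finset (Fin d → ℝ)) : Set (Fin d → ℝ)) => (x : Fin d → ℝ)) := by
  rw [affineIndependent_iff]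
  intro fs w hw0 hws x hx
  have hpar : ∀ y : ((A.image (mc d) : Finset (Fin d → ℝ)) : Set (Fin d → ℝ)),
      ∃ i : ℕ, i ∈ A ∧ mc d i = (y : Fin d → ℝ) := by
    intro y
    have hy : (y : Fin d → ℝ) ∈ A.image (mc d) := Finset.mem_coe.mp y.2
    obtain ⟨i, hi, hmi⟩ := Finset.mem_image.mp hy
    exact ⟨i, hi, hmi⟩
  set par : ((A.image (mc d) : Finset (Fin d → ℝ)) : Set (Fin d → ℝ)) → ℕ :=
    fun y => (hpar y).choose with hpardef
  have hparp : ∀ y, par y ∈ A ∧ mc d (par y) = (y : Fin d → ℝ) := fun y => (hpar y).choose_spec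
  have hinj : Set.InjOn (fun y => ((par y : ℕ) : ℝ)) fs := by
    intro y1 h1 y2 h2 he
    have : par y1 = par y2 := Nat.cast_injective he
    have h3 : (y1 : Fin d → ℝ) = (y2 : Fin d → ℝ) := by
      rw [← (hparp y1).2, ← (hparp y2).2, this]
    exact Subtype.ext h3
  have hcard : fs.card ≤ d + 1 := by
    have h1 : fs.card = (fs.image Subtype.val).card :=
      (Finset.card_image_of_injective _ Subtype.coe_injective).symm
    have h2 : fs.image Subtype.val ⊆ A.image (mc d) := by
      intro z hz
      obtain ⟨y, _, rfl⟩ := Finset.mem_image.mp hz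
      exact Finset.mem_coe.mp y.2
    calc fs.card = _ := h1
      _ ≤ (A.image (mc d)).card := Finset.card_le_card h2
      _ ≤ A.card := Finset.card_image_le
      _ ≤ d + 1 := hA
  have hpows : ∀ q ≤ d, ∑ y ∈ fs, w y * ((par y : ℕ) : ℝ) ^ q = 0 := by
    intro q hq
    rcases Nat.eq_zero_or_pos q with rfl | hqpos
    · simpa using hw0
    · have hcoord := congrFun hws ⟨q - 1, by omega⟩
      rw [Finset.sum_apply] at hcoord
      simp only [Pi.smul_apply, Pi.zero_apply, smul_eq_mul] at hcoord
      rw [← hcoord]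
      refine Finset.sum_congr rfl fun y _ => ?_
      congr 1
      rw [← (hparp y).2]
      simp only [mc, moment]
      congr 1
      omega
  exact zero_of_dep hinj hcard hpows x hx

lemma mem_hull_iff {d : ℕ} (hd : 1 ≤ d) (A : Finset ℕ) (x : Fin d → ℝ) :
    x ∈ convexHull ℝ ((A.image (mc d) : Finset (Fin d → ℝ)) : Set (Fin d → ℝ)) ↔
      ∃ a : ℕ → ℝ, (∀ i ∈ A, 0 ≤ a i) ∧ ∑ i ∈ A, a i = 1 ∧ ∑ i ∈ A, a i • mc d i = x := by
  constructor
  · intro hx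
    rw [Finset.convexHull_eq] at hx
    obtain ⟨w, hw0, hw1, hcm⟩ := hx
    rw [Finset.centerMass_eq_of_sum_1 _ id hw1] at hcm
    have hinj : Set.InjOn (mc d) A := (mc_inj hd).injOn
    refine ⟨fun i => w (mc d i), fun i hi => hw0 _ (Finset.mem_image_of_mem _ hi), ?_, ?_⟩
    · rw [← Finset.sum_image (fun i hi j hj he => hinj hi hj he)]
      exact hw1
    · rw [← hcm, Finset.sum_image (fun i hi j hj he => hinj hi hj he)]
      rfl
  · rintro ⟨a, h0, h1, hx⟩
    have := Finset.centerMass_mem_convexHull (t := A) (w := a) (z := mc d) h0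
      (by rw [h1]; norm_num) (fun i hi => Finset.mem_coe.mpr (Finset.mem_image_of_mem _ hi))
    rwa [Finset.centerMass_eq_of_sum_1 _ _ h1, hx] at this
def Efun (k b : ℕ) : Finset ℕ :=
  (Finset.Icc 1 (2*k+3)).filter (fun j => (j < b ∧ j % 2 = 0) ∨ (b < j ∧ j % 2 = 1))

def Ofun (k b : ℕ) : Finset ℕ :=
  (Finset.Icc 1 (2*k+3)).filter (fun j => (j < b ∧ j % 2 = 1) ∨ (b < j ∧ j % 2 = 0))

lemma filter_card_lemma {n b i : ℕ} (hb : b ∈ Finset.Icc 1 n)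
    (hi : i ∈ (Finset.Icc 1 n).erase b) :
    (((Finset.Icc 1 n).erase b).filter (fun j => i < j)).card
      = (n - i) - (if i < b then 1 else 0) := by
  have hb' := Finset.mem_Icc.mp hb
  have hi' := Finset.mem_erase.mp hi
  have hi'' := Finset.mem_Icc.mp hi'.2
  have h1 : ((Finset.Icc 1 n).erase b).filter (fun j => i < j)
      = ((Finset.Icc 1 n).filter (fun j => i < j)).erase b := by
    ext j
    simp only [Finset.mem_filter, Finset.mem_erase]
    tauto
  have h2 : (Finset.Icc 1 n).filter (fun j => i < j) = Finset.Icc (i+1) n := by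
    ext j
    simp only [Finset.mem_filter, Finset.mem_Icc]
    omega
  rw [h1, h2]
  by_cases hib : i < b
  · rw [Finset.card_erase_of_mem (Finset.mem_Icc.mpr (by omega))]
    rw [Nat.card_Icc]
    simp only [if_pos hib]
    omega
  · rw [Finset.erase_eq_of_notMem (by rw [Finset.mem_Icc]; omega)]
    rw [Nat.card_Icc]
    simp only [if_neg hib]
    omega

lemma lagc_pos_iff {k b i : ℕ} (hb : b ∈ Finset.Icc 1 (2*k+3))
    (hi : i ∈ (Finset.Icc 1 (2*k+3)).erase b) :
    (0 < lagc ((Finset.Icc 1 (2*k+3)).erase b) i ↔ i ∈ Efun k b) := by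
  set s := (Finset.Icc 1 (2*k+3)).erase b with hs
  obtain ⟨r, hr, heq⟩ := lagc_sign (s := s) hi
  have hm := filter_card_lemma hb hi
  have hb' := Finset.mem_Icc.mp hb
  have hi1 := Finset.mem_erase.mp hi
  have hi' := Finset.mem_Icc.mp hi1.2
  have hposiff : 0 < lagc s i ↔ Even ((s.filter (fun j => i < j)).card) := by
    rw [heq]
    rcases Nat.even_or_odd ((s.filter (fun j => i < j)).card) with he | ho
    · rw [he.neg_one_pow, one_mul]
      simp [hr, he]
    · rw [ho.neg_one_pow]
      constructor
      · intro h; nlinarith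
      · intro h; exact absurd h (Nat.not_even_iff_odd.mpr ho)
  rw [hposiff, hm, Nat.even_iff]
  simp only [Efun, Finset.mem_filter, Finset.mem_Icc]
  by_cases hib : i < b
  · simp only [if_pos hib]; omega
  · simp only [if_neg hib]; omega

lemma EO_partition {k b i : ℕ} (hb : b ∈ Finset.Icc 1 (2*k+3))
    (hi : i ∈ (Finset.Icc 1 (2*k+3)).erase b) :
    i ∈ Ofun k b ↔ i ∉ Efun k b := by
  have hb' := Finset.mem_Icc.mp hb
  have hi1 := Finset.mem_erase.mp hi
  have hi' := Finset.mem_Icc.mp hi1.2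
  have hne : i ≠ b := hi1.1
  simp only [Efun, Ofun, Finset.mem_filter, Finset.mem_Icc]
  omega

lemma lagc_neg_iff {k b i : ℕ} (hb : b ∈ Finset.Icc 1 (2*k+3))
    (hi : i ∈ (Finset.Icc 1 (2*k+3)).erase b) :
    (lagc ((Finset.Icc 1 (2*k+3)).erase b) i < 0 ↔ i ∈ Ofun k b) := by
  rw [EO_partition hb hi, ← lagc_pos_iff hb hi]
  have hne := lagc_ne_zero (s := (Finset.Icc 1 (2*k+3)).erase b) hi
  constructor
  · intro h hpos; linarith
  · intro h
    rcases lt_trichotomy (lagc ((Finset.Icc 1 (2*k+3)).erase b) i) 0 with h1 | h1 | h1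
    · exact h1
    · exact absurd h1 hne
    · exact absurd h1 h

lemma dep_of_sums {d : ℕ} {s : Finset ℕ} {w : ℕ → ℝ} (h0 : ∑ i ∈ s, w i = 0)
    (h1 : ∑ i ∈ s, w i • mc d i = 0) : ∀ q ≤ d, ∑ i ∈ s, w i * (i : ℝ) ^ q = 0 := by
  intro q hq
  rcases Nat.eq_zero_or_pos q with rfl | hqpos
  · simpa using h0
  · have hcoord := congrFun h1 ⟨q - 1, by omega⟩
    rw [Finset.sum_apply] at hcoord
    simp only [Pi.smul_apply, Pi.zero_apply, smul_eq_mul] at hcoord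
    rw [← hcoord]
    refine Finset.sum_congr rfl fun i _ => ?_
    congr 1
    simp only [mc, moment]
    congr 1
    omega

lemma vec_of_dep {d : ℕ} {s : Finset ℕ} {w : ℕ → ℝ}
    (h : ∀ q ≤ d, ∑ i ∈ s, w i * (i : ℝ) ^ q = 0) :
    ∑ i ∈ s, w i • mc d i = 0 := by
  funext co
  rw [Finset.sum_apply]
  simp only [Pi.smul_apply, smul_eq_mul, Pi.zero_apply]
  have := h ((co : ℕ) + 1) (by omega)
  rw [← this]
  exact Finset.sum_congr rfl fun i _ => rfl
lemma K1 {k : ℕ} (hk : 1 ≤ k) {I : Finset ℕ} (hI : I ⊆ Finset.Icc 1 (2*k+3))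
    (hIc : I.card = k + 1) {b : ℕ} (hb : b ∈ Finset.Icc 1 (2*k+3)) (hbI : b ∉ I)
    {x : Fin (2*k) → ℝ}
    (hx1 : x ∈ convexHull ℝ ((I.image (mc (2*k)) : Finset (Fin (2*k) → ℝ)) : Set (Fin (2*k) → ℝ)))
    (hx2 : x ∈ convexHull ℝ (((((Finset.Icc 1 (2*k+3)).erase b) \ I).image (mc (2*k)) :
      Finset (Fin (2*k) → ℝ)) : Set (Fin (2*k) → ℝ))) :
    (I = Efun k b ∨ I = Ofun k b) ∧
      x = (∑ i ∈ I, lagc ((Finset.Icc 1 (2*k+3)).erase b) i)⁻¹ •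
          ∑ i ∈ I, lagc ((Finset.Icc 1 (2*k+3)).erase b) i • mc (2*k) i := by
  have hd : 1 ≤ 2*k := by omega
  set n := 2*k+3 with hn
  set s := (Finset.Icc 1 n).erase b with hs
  set Y := s \ I with hY
  set c := lagc s with hc
  have hIs : I ⊆ s := fun i hi =>
    Finset.mem_erase.mpr ⟨fun he => hbI (he ▸ hi), hI hi⟩
  have hsY : I ∪ Y = s := Finset.union_sdiff_of_subset hIs
  have hdisj : Disjoint I Y := Finset.disjoint_sdiff
  have hscard : s.card = 2*k + 2 := by
    rw [hs, Finset.card_erase_of_mem hb, Nat.card_Icc]; omega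
  obtain ⟨a, ha0, ha1, hax⟩ := (mem_hull_iff hd I x).mp hx1
  obtain ⟨g, hg0, hg1, hgx⟩ := (mem_hull_iff hd Y x).mp hx2
  set W : ℕ → ℝ := fun i => if i ∈ I then a i else -(g i) with hW
  have hWI : ∀ i ∈ I, W i = a i := fun i hi => by simp [hW, hi]
  have hWY : ∀ i ∈ Y, W i = -(g i) := by
    intro i hi
    have : i ∉ I := (Finset.mem_sdiff.mp hi).2
    simp [hW, this]
  have hdep : ∀ q ≤ 2*k, ∑ i ∈ s, W i * (i : ℝ) ^ q = 0 := by
    apply dep_of_sums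
    · rw [← hsY, Finset.sum_union hdisj]
      rw [Finset.sum_congr rfl hWI, Finset.sum_congr rfl hWY]
      rw [Finset.sum_neg_distrib, ha1, hg1]
      ring
    · rw [← hsY, Finset.sum_union hdisj]
      have e1 : ∑ i ∈ I, W i • mc (2*k) i = x := by
        rw [Finset.sum_congr rfl fun i hi => by rw [hWI i hi], hax]
      have e2 : ∑ i ∈ Y, W i • mc (2*k) i = -x := by
        rw [Finset.sum_congr rfl fun i hi => by rw [hWY i hi]]
        rw [← hgx, ← Finset.sum_neg_distrib]
        exact Finset.sum_congr rfl fun i _ => by rw [neg_smul]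
      rw [e1, e2, add_neg_cancel]
  obtain ⟨l, hl⟩ := dep_unique (by omega : s.card = 2*k + 2) hdep
  have hIne : I.Nonempty := Finset.card_pos.mp (by omega)
  have hsumI : ∑ i ∈ I, W i = 1 := by
    rw [Finset.sum_congr rfl hWI, ha1]
  have hlS : l * ∑ i ∈ I, c i = 1 := by
    have he : ∑ i ∈ I, W i = ∑ i ∈ I, l * c i :=
      Finset.sum_congr rfl fun i hi => by rw [hl i (hIs hi)]
    rw [Finset.mul_sum, ← he, hsumI]
  have hlne : l ≠ 0 := by
    intro h; rw [h, zero_mul] at hlS; exact (one_ne_zero (α := ℝ)) hlS.symm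
  have hSinv : (∑ i ∈ I, c i)⁻¹ = l := inv_eq_of_mul_eq_one_left (by linarith [hlS] )
  constructor
  · rcases lt_trichotomy l 0 with hlneg | hl0 | hlpos
    · right
      apply Finset.ext
      intro i
      constructor
      · intro hi
        have hci : c i ≠ 0 := lagc_ne_zero (hIs hi)
        have : W i = l * c i := hl i (hIs hi)
        have hai : 0 ≤ a i := ha0 i hi
        rw [hWI i hi] at this
        have hcneg : c i < 0 := by
          rcases lt_trichotomy (c i) 0 with h | h | h
          · exact h
          · exact absurd h hci
          · nlinarith
        exact (lagc_neg_iff hb (hIs hi)).mp hcneg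
      · intro hi
        have his : i ∈ s := by
          have := Finset.mem_filter.mp hi
          refine Finset.mem_erase.mpr ⟨?_, this.1⟩
          rcases (Finset.mem_filter.mp hi).2 with ⟨h1, _⟩ | ⟨h1, _⟩ <;> omega
        have hcneg : c i < 0 := (lagc_neg_iff hb his).mpr hi
        by_contra hiI
        have hiY : i ∈ Y := Finset.mem_sdiff.mpr ⟨his, hiI⟩
        have h1 : W i = l * c i := hl i his
        rw [hWY i hiY] at h1
        have := hg0 i hiY
        nlinarith
    · exact absurd hl0 hlne
    · left
      apply Finset.ext
      intro i
      constructor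
      · intro hi
        have hci : c i ≠ 0 := lagc_ne_zero (hIs hi)
        have h1 : W i = l * c i := hl i (hIs hi)
        have hai : 0 ≤ a i := ha0 i hi
        rw [hWI i hi] at h1
        have hcpos : 0 < c i := by
          rcases lt_trichotomy (c i) 0 with h | h | h
          · nlinarith
          · exact absurd h hci
          · exact h
        exact (lagc_pos_iff hb (hIs hi)).mp hcpos
      · intro hi
        have his : i ∈ s := by
          have := Finset.mem_filter.mp hi
          refine Finset.mem_erase.mpr ⟨?_, this.1⟩
          rcases (Finset.mem_filter.mp hi).2 with ⟨h1, _⟩ | ⟨h1, _⟩ <;> omega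
        have hcpos : 0 < c i := (lagc_pos_iff hb his).mpr hi
        by_contra hiI
        have hiY : i ∈ Y := Finset.mem_sdiff.mpr ⟨his, hiI⟩
        have h1 : W i = l * c i := hl i his
        rw [hWY i hiY] at h1
        have := hg0 i hiY
        nlinarith
  · rw [hSinv, ← hax]
    rw [Finset.smul_sum]
    refine Finset.sum_congr rfl fun i hi => ?_
    rw [← hWI i hi, hl i (hIs hi), smul_smul]
lemma radon_point {d : ℕ} (hd : 1 ≤ d) {s I : Finset ℕ} (hIs : I ⊆ s) {c : ℕ → ℝ}
    (h0 : ∑ i ∈ s, c i = 0) (hvec : ∑ i ∈ s, c i • mc d i = 0)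
    (hSne : (∑ i ∈ I, c i) ≠ 0)
    (h1 : ∀ i ∈ I, 0 ≤ (∑ i ∈ I, c i)⁻¹ * c i)
    (h2 : ∀ i ∈ s \ I, 0 ≤ -((∑ i ∈ I, c i)⁻¹ * c i)) :
    ((∑ i ∈ I, c i)⁻¹ • ∑ i ∈ I, c i • mc d i)
      ∈ convexHull ℝ ((I.image (mc d) : Finset (Fin d → ℝ)) : Set (Fin d → ℝ)) ∩
        convexHull ℝ (((s \ I).image (mc d) : Finset (Fin d → ℝ)) : Set (Fin d → ℝ)) := by
  set S := ∑ i ∈ I, c i with hS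
  have hsd := Finset.sum_sdiff (f := c) hIs
  have hYs : ∑ i ∈ s \ I, c i = -S := by rw [h0] at hsd; linarith
  have hsdv := Finset.sum_sdiff (f := fun i => c i • mc d i) hIs
  have hYv : ∑ i ∈ s \ I, c i • mc d i = -(∑ i ∈ I, c i • mc d i) := by
    rw [hvec] at hsdv
    have := hsdv
    abel_nf
    abel_nf at this
    linear_combination (norm := abel) this
  constructor
  · rw [mem_hull_iff hd]
    refine ⟨fun i => S⁻¹ * c i, h1, ?_, ?_⟩
    · rw [← Finset.mul_sum, ← hS, inv_mul_cancel₀ hSne]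
    · show ∑ i ∈ I, (S⁻¹ * c i) • mc d i = _
      rw [Finset.smul_sum]
      exact Finset.sum_congr rfl fun i _ => (smul_smul _ _ _).symm.trans rfl
  · rw [mem_hull_iff hd]
    refine ⟨fun i => S⁻¹ * (-(c i)), fun i hi => by simpa using h2 i hi, ?_, ?_⟩
    · have : ∑ i ∈ s \ I, S⁻¹ * (-(c i)) = S⁻¹ * (-(∑ i ∈ s \ I, c i)) := by
        rw [← Finset.sum_neg_distrib, Finset.mul_sum]
      rw [this, hYs, neg_neg, inv_mul_cancel₀ hSne]
    · have e1 : ∑ i ∈ s \ I, (S⁻¹ * (-(c i))) • mc d i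
          = S⁻¹ • (-(∑ i ∈ s \ I, c i • mc d i)) := by
        rw [← Finset.sum_neg_distrib, Finset.smul_sum]
        exact Finset.sum_congr rfl fun i _ => by rw [← neg_smul, smul_smul]
      show ∑ i ∈ s \ I, (S⁻¹ * (-(c i))) • mc d i = _
      rw [e1, hYv, neg_neg]

lemma K2 {k : ℕ} (hk : 1 ≤ k) {I : Finset ℕ} (hI : I ⊆ Finset.Icc 1 (2*k+3))
    (hIc : I.card = k + 1) {b : ℕ} (hb : b ∈ Finset.Icc 1 (2*k+3)) (hbI : b ∉ I)
    (hEO : I = Efun k b ∨ I = Ofun k b) :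
    ((∑ i ∈ I, lagc ((Finset.Icc 1 (2*k+3)).erase b) i)⁻¹ •
        ∑ i ∈ I, lagc ((Finset.Icc 1 (2*k+3)).erase b) i • mc (2*k) i)
      ∈ convexHull ℝ ((I.image (mc (2*k)) : Finset (Fin (2*k) → ℝ)) : Set (Fin (2*k) → ℝ)) ∩
        convexHull ℝ (((((Finset.Icc 1 (2*k+3)).erase b) \ I).image (mc (2*k)) :
          Finset (Fin (2*k) → ℝ)) : Set (Fin (2*k) → ℝ)) := by
  have hd : 1 ≤ 2*k := by omega
  set n := 2*k+3 with hn
  set s := (Finset.Icc 1 n).erase b with hs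
  set c := lagc s with hc
  have hIs : I ⊆ s := fun i hi =>
    Finset.mem_erase.mpr ⟨fun he => hbI (he ▸ hi), hI hi⟩
  have hscard : s.card = 2*k + 2 := by
    rw [hs, Finset.card_erase_of_mem hb, Nat.card_Icc]; omega
  have hdep := lagc_dep (d := 2*k) (by omega : s.card = 2*k+2)
  have h0 : ∑ i ∈ s, c i = 0 := by
    have := hdep 0 (Nat.zero_le _)
    simpa using this
  have hvec : ∑ i ∈ s, c i • mc (2*k) i = 0 := vec_of_dep hdep
  have hIne : I.Nonempty := Finset.card_pos.mp (by omega)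
  rcases hEO with hE | hO
  · have hIpos : ∀ i ∈ I, 0 < c i := fun i hi =>
      (lagc_pos_iff hb (hIs hi)).mpr (hE ▸ hi)
    have hSpos : 0 < ∑ i ∈ I, c i := Finset.sum_pos hIpos hIne
    refine radon_point hd hIs h0 hvec (ne_of_gt hSpos) ?_ ?_
    · intro i hi
      have := hIpos i hi
      positivity
    · intro i hi
      have his : i ∈ s := (Finset.mem_sdiff.mp hi).1
      have hiI : i ∉ I := (Finset.mem_sdiff.mp hi).2
      have hio : i ∈ Ofun k b := (EO_partition hb his).mpr (fun hin => hiI (hE ▸ hin))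
      have hneg : c i < 0 := (lagc_neg_iff hb his).mpr hio
      have : (∑ i ∈ I, c i)⁻¹ > 0 := inv_pos.mpr hSpos
      nlinarith
  · have hIneg : ∀ i ∈ I, c i < 0 := fun i hi =>
      (lagc_neg_iff hb (hIs hi)).mpr (hO ▸ hi)
    have hSneg : ∑ i ∈ I, c i < 0 := Finset.sum_neg hIneg hIne
    refine radon_point hd hIs h0 hvec (ne_of_lt hSneg) ?_ ?_
    · intro i hi
      have h1 := hIneg i hi
      have h2 : (∑ i ∈ I, c i)⁻¹ < 0 := inv_neg''.mpr hSneg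
      nlinarith
    · intro i hi
      have his : i ∈ s := (Finset.mem_sdiff.mp hi).1
      have hiI : i ∉ I := (Finset.mem_sdiff.mp hi).2
      have hie : i ∈ Efun k b := by
        by_contra hne
        exact hiI (hO ▸ ((EO_partition hb his).mpr hne))
      have hposi : 0 < c i := (lagc_pos_iff hb his).mpr hie
      have h2 : (∑ i ∈ I, c i)⁻¹ < 0 := inv_neg''.mpr hSneg
      nlinarith
lemma EO_exclusive {k b : ℕ} {I : Finset ℕ} (hne : I.Nonempty)
    (hE : I = Efun k b) (hO : I = Ofun k b) : False := by
  obtain ⟨j, hj⟩ := hne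
  have h1 : j ∈ Efun k b := hE ▸ hj
  have h2 : j ∈ Ofun k b := hO ▸ hj
  simp only [Efun, Ofun, Finset.mem_filter] at h1 h2
  omega

lemma E_succ {k b : ℕ} (hb : b % 2 = 1) : Efun k b = Efun k (b+1) := by
  apply Finset.ext
  intro j
  simp only [Efun, Finset.mem_filter, Finset.mem_Icc]
  omega

lemma O_succ {k b : ℕ} (hb : b % 2 = 0) : Ofun k b = Ofun k (b+1) := by
  apply Finset.ext
  intro j
  simp only [Ofun, Finset.mem_filter, Finset.mem_Icc]
  omega

lemma E_top {k : ℕ} : Efun k (2*k+3) = Ofun k 1 := by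
  apply Finset.ext
  intro j
  simp only [Efun, Ofun, Finset.mem_filter, Finset.mem_Icc]
  omega

lemma even_count {k : ℕ} {I : Finset ℕ} (hne : I.Nonempty) :
    Even (((Finset.Icc 1 (2*k+3)).filter (fun b => I = Efun k b ∨ I = Ofun k b)).card) := by
  classical
  set n := 2*k+3 with hn
  set V := (Finset.Icc 1 n).filter (fun b => I = Efun k b ∨ I = Ofun k b) with hV
  set g0 : ℕ → ℕ := fun b =>
    if I = Efun k b then (if b = n then 1 else if b % 2 = 1 then b + 1 else b - 1)
    else (if b = 1 then n else if b % 2 = 0 then b + 1 else b - 1) with hg0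
  have hmemV : ∀ b, b ∈ V ↔ (1 ≤ b ∧ b ≤ n ∧ (I = Efun k b ∨ I = Ofun k b)) := by
    intro b
    rw [hV, Finset.mem_filter, Finset.mem_Icc]
    tauto
  have key : ∀ b ∈ V, g0 b ∈ V ∧ g0 (g0 b) = b ∧ g0 b ≠ b := by
    intro b hb
    rw [hmemV b] at hb
    obtain ⟨hb1, hb2, hb3⟩ := hb
    rcases hb3 with hE | hO
    · by_cases hcn : b = n
      · have hgb : g0 b = 1 := by simp only [hg0]; rw [if_pos hE, if_pos hcn]
        have hO1 : I = Ofun k 1 := by rw [hE, hcn, hn]; exact E_top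
        have hnE1 : ¬ (I = Efun k 1) := fun hE1 => EO_exclusive hne hE1 hO1
        have hgg : g0 1 = n := by simp only [hg0]; rw [if_neg hnE1]; simp
        refine ⟨?_, ?_, ?_⟩
        · rw [hgb, hmemV]; exact ⟨le_refl 1, by omega, Or.inr hO1⟩
        · rw [hgb, hgg, hcn]
        · rw [hgb]; omega
      · by_cases hpar : b % 2 = 1
        · have hgb : g0 b = b + 1 := by
            simp only [hg0]; rw [if_pos hE, if_neg hcn, if_pos hpar]
          have hE1 : I = Efun k (b+1) := hE.trans (E_succ hpar)
          have hgg : g0 (b+1) = b := by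
            simp only [hg0]
            rw [if_pos hE1, if_neg (by omega : ¬ b + 1 = n), if_neg (by omega : ¬ (b+1) % 2 = 1)]
            omega
          refine ⟨?_, ?_, ?_⟩
          · rw [hgb, hmemV]; exact ⟨by omega, by omega, Or.inl hE1⟩
          · rw [hgb, hgg]
          · rw [hgb]; omega
        · have hgb : g0 b = b - 1 := by
            simp only [hg0]; rw [if_pos hE, if_neg hcn, if_neg hpar]
          have hEeq : Efun k (b-1) = Efun k b := by
            have h5 := E_succ (k := k) (b := b - 1) (by omega)
            rwa [show b - 1 + 1 = b by omega] at h5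
          have hE1 : I = Efun k (b-1) := hE.trans hEeq.symm
          have hgg : g0 (b-1) = b := by
            simp only [hg0]
            rw [if_pos hE1, if_neg (by omega : ¬ b - 1 = n), if_pos (by omega : (b-1) % 2 = 1)]
            omega
          refine ⟨?_, ?_, ?_⟩
          · rw [hgb, hmemV]; exact ⟨by omega, by omega, Or.inl hE1⟩
          · rw [hgb, hgg]
          · rw [hgb]; omega
    · have hnE : ¬ (I = Efun k b) := fun hE => EO_exclusive hne hE hO
      by_cases hc1 : b = 1
      · have hgb : g0 b = n := by simp only [hg0]; rw [if_neg hnE, if_pos hc1]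
        have hEn : I = Efun k n := by rw [hO, hc1, hn]; exact E_top.symm
        have hgg : g0 n = 1 := by simp only [hg0]; rw [if_pos hEn]; simp
        refine ⟨?_, ?_, ?_⟩
        · rw [hgb, hmemV]; exact ⟨by omega, le_refl n, Or.inl hEn⟩
        · rw [hgb, hgg, hc1]
        · rw [hgb]; omega
      · by_cases hpar : b % 2 = 0
        · have hgb : g0 b = b + 1 := by
            simp only [hg0]; rw [if_neg hnE, if_neg hc1, if_pos hpar]
          have hO1 : I = Ofun k (b+1) := hO.trans (O_succ hpar)
          have hnE1 : ¬ (I = Efun k (b+1)) := fun hE1 => EO_exclusive hne hE1 hO1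
          have hgg : g0 (b+1) = b := by
            simp only [hg0]
            rw [if_neg hnE1, if_neg (by omega : ¬ b + 1 = 1),
              if_neg (by omega : ¬ (b+1) % 2 = 0)]
            omega
          refine ⟨?_, ?_, ?_⟩
          · rw [hgb, hmemV]; exact ⟨by omega, by omega, Or.inr hO1⟩
          · rw [hgb, hgg]
          · rw [hgb]; omega
        · have hgb : g0 b = b - 1 := by
            simp only [hg0]; rw [if_neg hnE, if_neg hc1, if_neg hpar]
          have hOeq : Ofun k (b-1) = Ofun k b := by
            have h5 := O_succ (k := k) (b := b - 1) (by omega)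
            rwa [show b - 1 + 1 = b by omega] at h5
          have hO1 : I = Ofun k (b-1) := hO.trans hOeq.symm
          have hnE1 : ¬ (I = Efun k (b-1)) := fun hE1 => EO_exclusive hne hE1 hO1
          have hgg : g0 (b-1) = b := by
            simp only [hg0]
            rw [if_neg hnE1, if_neg (by omega : ¬ b - 1 = 1),
              if_pos (by omega : (b-1) % 2 = 0)]
            omega
          refine ⟨?_, ?_, ?_⟩
          · rw [hgb, hmemV]; exact ⟨by omega, by omega, Or.inr hO1⟩
          · rw [hgb, hgg]
          · rw [hgb]; omega
  have hsum : ∑ _b ∈ V, (1 : ZMod 2) = 0 :=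
    Finset.sum_involution (fun b _ => g0 b) (fun b hb => by decide)
      (fun b hb _ => (key b hb).2.2) (fun b hb => (key b hb).1)
      (fun b hb => (key b hb).2.1)
  have h2 : ((V.card : ℕ) : ZMod 2) = 0 := by
    rw [← hsum, Finset.sum_const, nsmul_eq_mul, mul_one]
  have h3 : 2 ∣ V.card := (ZMod.natCast_eq_zero_iff _ 2).mp h2
  obtain ⟨c, hc⟩ := h3; exact ⟨c, by omega⟩
lemma genpos {k : ℕ} (hk : 1 ≤ k) :
    GenPos (2*k) ((Finset.Icc 1 (2*k+3)).image (mc (2*k))) := by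
  intro T hT hTc
  have hd : 1 ≤ 2*k := by omega
  set S := (Finset.Icc 1 (2*k+3)).filter (fun i => mc (2*k) i ∈ T) with hS
  have hTeq : T = S.image (mc (2*k)) := by
    apply Finset.Subset.antisymm
    · intro x hx
      obtain ⟨i, hi, rfl⟩ := Finset.mem_image.mp (hT hx)
      exact Finset.mem_image_of_mem _ (Finset.mem_filter.mpr ⟨hi, hx⟩)
    · intro x hx
      obtain ⟨i, hi, rfl⟩ := Finset.mem_image.mp hx
      exact (Finset.mem_filter.mp hi).2
  have hScard : S.card ≤ 2*k+1 := by
    have h1 : (S.image (mc (2*k))).card = S.card :=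
      Finset.card_image_of_injective _ (mc_inj hd)
    rw [← hTeq, hTc] at h1
    omega
  rw [hTeq]
  exact momAI hd S hScard

lemma erase_sdiff_comm' (s t : Finset ℕ) (b : ℕ) : (s \ t).erase b = (s.erase b) \ t := by
  ext j
  simp only [Finset.mem_erase, Finset.mem_sdiff]
  tauto

lemma boundary_mem {k : ℕ} (hk : 1 ≤ k) {I : Finset ℕ} (hI : I ⊆ Finset.Icc 1 (2*k+3))
    (hIc : I.card = k+1) (x : Fin (2*k) → ℝ) :
    x ∈ simplexBoundary (2*k) (k+1) ((Finset.Icc 1 (2*k+3) \ I).image (mc (2*k))) ↔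
      ∃ b ∈ Finset.Icc 1 (2*k+3) \ I,
        x ∈ convexHull ℝ ((((Finset.Icc 1 (2*k+3) \ I).erase b).image (mc (2*k)) :
          Finset (Fin (2*k) → ℝ)) : Set (Fin (2*k) → ℝ)) := by
  have hd : 1 ≤ 2*k := by omega
  set B := Finset.Icc 1 (2*k+3) \ I with hB
  have hBc : B.card = k + 2 := by
    rw [hB, Finset.card_sdiff_of_subset hI, Nat.card_Icc, hIc]
    omega
  simp only [simplexBoundary, Set.mem_iUnion]
  constructor
  · rintro ⟨Y, hY, hxY⟩
    rw [Finset.mem_powersetCard] at hY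
    obtain ⟨hYsub, hYc⟩ := hY
    set Z := B.filter (fun i => mc (2*k) i ∈ Y) with hZ
    have hYeq : Y = Z.image (mc (2*k)) := by
      apply Finset.Subset.antisymm
      · intro y hy
        obtain ⟨i, hi, rfl⟩ := Finset.mem_image.mp (hYsub hy)
        exact Finset.mem_image_of_mem _ (Finset.mem_filter.mpr ⟨hi, hy⟩)
      · intro y hy
        obtain ⟨i, hi, rfl⟩ := Finset.mem_image.mp hy
        exact (Finset.mem_filter.mp hi).2
    have hZc : Z.card = k + 1 := by
      have h1 : (Z.image (mc (2*k))).card = Z.card :=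
        Finset.card_image_of_injective _ (mc_inj hd)
      rw [← hYeq, hYc] at h1
      omega
    have hZB : Z ⊆ B := Finset.filter_subset _ _
    have hBZ : (B \ Z).card = 1 := by
      rw [Finset.card_sdiff_of_subset hZB, hBc, hZc]; omega
    obtain ⟨b, hb⟩ := Finset.card_eq_one.mp hBZ
    have hbB : b ∈ B := by
      have : b ∈ B \ Z := hb ▸ Finset.mem_singleton_self b
      exact (Finset.mem_sdiff.mp this).1
    have hbZ : b ∉ Z := by
      have : b ∈ B \ Z := hb ▸ Finset.mem_singleton_self b
      exact (Finset.mem_sdiff.mp this).2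
    have hZe : Z = B.erase b := by
      apply Finset.eq_of_subset_of_card_le
      · intro z hz
        refine Finset.mem_erase.mpr ⟨fun he => hbZ (he ▸ hz), hZB hz⟩
      · rw [Finset.card_erase_of_mem hbB, hBc, hZc]; omega
    refine ⟨b, hbB, ?_⟩
    rw [← hZe]
    rw [hYeq] at hxY
    exact hxY
  · rintro ⟨b, hbB, hx⟩
    refine ⟨(B.erase b).image (mc (2*k)), ?_, hx⟩
    rw [Finset.mem_powersetCard]
    constructor
    · exact Finset.image_subset_image (Finset.erase_subset _ _)
    · rw [Finset.card_image_of_injective _ (mc_inj hd), Finset.card_erase_of_mem hbB, hBc]; omega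
lemma momAI' {d : ℕ} (hd : 1 ≤ d) (A : Finset ℕ) (hA : A.card ≤ d + 1) :
    AffineIndependent ℝ ((↑) : (A.image (mc d) : Finset (Fin d → ℝ)) → (Fin d → ℝ)) :=
  momAI hd A hA

lemma main2 {k : ℕ} (hk : 1 ≤ k) {I : Finset ℕ} (hI : I ⊆ Finset.Icc 1 (2*k+3))
    (hIc : I.card = k + 1) :
    (convexHull ℝ ((I.image (mc (2*k)) : Finset (Fin (2*k) → ℝ)) : Set (Fin (2*k) → ℝ)) ∩
        simplexBoundary (2*k) (k+1) ((Finset.Icc 1 (2*k+3) \ I).image (mc (2*k)))).Finite ∧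
      Even ((convexHull ℝ ((I.image (mc (2*k)) : Finset (Fin (2*k) → ℝ)) : Set (Fin (2*k) → ℝ)) ∩
        simplexBoundary (2*k) (k+1) ((Finset.Icc 1 (2*k+3) \ I).image (mc (2*k)))).ncard) := by
  classical
  have hd : 1 ≤ 2*k := by omega
  set n := 2*k+3 with hn
  set B := Finset.Icc 1 n \ I with hB
  have hBc : B.card = k + 2 := by
    rw [hB, Finset.card_sdiff_of_subset hI, Nat.card_Icc, hIc]; omega
  set V := (Finset.Icc 1 n).filter (fun b => I = Efun k b ∨ I = Ofun k b) with hV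
  set pt : ℕ → (Fin (2*k) → ℝ) := fun b =>
    (∑ i ∈ I, lagc ((Finset.Icc 1 n).erase b) i)⁻¹ •
      ∑ i ∈ I, lagc ((Finset.Icc 1 n).erase b) i • mc (2*k) i with hpt
  have hIne : I.Nonempty := Finset.card_pos.mp (by omega)
  have hVmem : ∀ b ∈ V, b ∈ Finset.Icc 1 n ∧ b ∉ I ∧ (I = Efun k b ∨ I = Ofun k b) := by
    intro b hb
    have h1 := Finset.mem_filter.mp hb
    refine ⟨h1.1, ?_, h1.2⟩
    intro hbI
    rcases h1.2 with hE | hO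
    · have : b ∈ Efun k b := hE ▸ hbI
      simp only [Efun, Finset.mem_filter] at this
      omega
    · have : b ∈ Ofun k b := hO ▸ hbI
      simp only [Ofun, Finset.mem_filter] at this
      omega
  have hBer : ∀ b : ℕ, B.erase b = ((Finset.Icc 1 n).erase b) \ I :=
    fun b => erase_sdiff_comm' _ _ _
  have hXeq : convexHull ℝ ((I.image (mc (2*k)) : Finset (Fin (2*k) → ℝ)) : Set (Fin (2*k) → ℝ)) ∩
      simplexBoundary (2*k) (k+1) (B.image (mc (2*k))) = ↑(V.image pt) := by
    apply Set.ext
    intro x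
    constructor
    · rintro ⟨hx1, hx2⟩
      rw [boundary_mem hk hI hIc] at hx2
      obtain ⟨b, hbB, hxb⟩ := hx2
      have hbIcc : b ∈ Finset.Icc 1 n := (Finset.mem_sdiff.mp hbB).1
      have hbI : b ∉ I := (Finset.mem_sdiff.mp hbB).2
      rw [show (Finset.Icc 1 (2*k+3) \ I).erase b = ((Finset.Icc 1 n).erase b) \ I from
        hBer b] at hxb
      obtain ⟨hEO, hxpt⟩ := K1 hk hI hIc hbIcc hbI hx1 hxb
      refine Finset.mem_coe.mpr (Finset.mem_image.mpr ⟨b, ?_, hxpt.symm⟩)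
      exact Finset.mem_filter.mpr ⟨hbIcc, hEO⟩
    · intro hx
      obtain ⟨b, hbV, rfl⟩ := Finset.mem_image.mp (Finset.mem_coe.mp hx)
      obtain ⟨hbIcc, hbI, hEO⟩ := hVmem b hbV
      have h2 := K2 hk hI hIc hbIcc hbI hEO
      refine ⟨h2.1, ?_⟩
      rw [boundary_mem hk hI hIc]
      refine ⟨b, Finset.mem_sdiff.mpr ⟨hbIcc, hbI⟩, ?_⟩
      rw [show (Finset.Icc 1 (2*k+3) \ I).erase b = ((Finset.Icc 1 n).erase b) \ I from
        hBer b]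
      exact h2.2
  have hptinj : Set.InjOn pt V := by
    intro b1 hb1 b2 hb2 hpteq
    by_contra hne
    obtain ⟨hb1Icc, hb1I, hEO1⟩ := hVmem b1 (Finset.mem_coe.mp hb1)
    obtain ⟨hb2Icc, hb2I, hEO2⟩ := hVmem b2 (Finset.mem_coe.mp hb2)
    have hm1 := K2 hk hI hIc hb1Icc hb1I hEO1
    have hm2 := K2 hk hI hIc hb2Icc hb2I hEO2
    have hmem1 : pt b1 ∈ convexHull ℝ (((B.erase b1).image (mc (2*k)) :
        Finset (Fin (2*k) → ℝ)) : Set (Fin (2*k) → ℝ)) := by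
      rw [hBer b1]; exact hm1.2
    have hmem2 : pt b1 ∈ convexHull ℝ (((B.erase b2).image (mc (2*k)) :
        Finset (Fin (2*k) → ℝ)) : Set (Fin (2*k) → ℝ)) := by
      rw [hBer b2, hpteq]; exact hm2.2
    have hmemI : pt b1 ∈ convexHull ℝ ((I.image (mc (2*k)) :
        Finset (Fin (2*k) → ℝ)) : Set (Fin (2*k) → ℝ)) := hm1.1
    have hAIB := momAI' hd B (by omega)
    have hsub1 : (B.erase b1).image (mc (2*k)) ⊆ B.image (mc (2*k)) :=
      Finset.image_subset_image (Finset.erase_subset _ _)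
    have hsub2 : (B.erase b2).image (mc (2*k)) ⊆ B.image (mc (2*k)) :=
      Finset.image_subset_image (Finset.erase_subset _ _)
    have h3 := hAIB.convexHull_inter hsub1 hsub2
    have hmemZ : pt b1 ∈ convexHull ℝ
        ((((B.erase b1).image (mc (2*k))) ∩ ((B.erase b2).image (mc (2*k))) :
          Finset (Fin (2*k) → ℝ)) : Set (Fin (2*k) → ℝ)) := by
      rw [Finset.coe_inter, h3]
      exact ⟨hmem1, hmem2⟩
    set Z := B.erase b1 ∩ B.erase b2 with hZ
    have himg : ((B.erase b1).image (mc (2*k))) ∩ ((B.erase b2).image (mc (2*k)))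
        = Z.image (mc (2*k)) := (Finset.image_inter _ _ (mc_inj hd)).symm
    rw [himg] at hmemZ
    have hZcard : Z.card ≤ k := by
      have hsub : Z ⊆ (B.erase b1).erase b2 := by
        intro z hz
        have h1 := Finset.mem_inter.mp hz
        refine Finset.mem_erase.mpr ⟨(Finset.mem_erase.mp h1.2).1, h1.1⟩
      have h2 : ((B.erase b1).erase b2).card ≤ k := by
        rw [Finset.card_erase_of_mem (Finset.mem_erase.mpr
          ⟨Ne.symm hne, Finset.mem_sdiff.mpr ⟨hb2Icc, hb2I⟩⟩ : b2 ∈ B.erase b1),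
          Finset.card_erase_of_mem (Finset.mem_sdiff.mpr ⟨hb1Icc, hb1I⟩), hBc]
        omega
      exact le_trans (Finset.card_le_card hsub) h2
    have hdisjIZ : I ∩ Z = ∅ := by
      apply Finset.eq_empty_of_forall_notMem
      intro z hz
      have h1 := Finset.mem_inter.mp hz
      have h2 : z ∈ B := Finset.mem_of_mem_erase (Finset.mem_inter.mp h1.2).1
      exact (Finset.mem_sdiff.mp h2).2 h1.1
    have hAI2 := momAI' hd (I ∪ Z) (by
      have := Finset.card_union_le I Z
      omega)
    have hsubI : I.image (mc (2*k)) ⊆ (I ∪ Z).image (mc (2*k)) :=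
      Finset.image_subset_image Finset.subset_union_left
    have hsubZ : Z.image (mc (2*k)) ⊆ (I ∪ Z).image (mc (2*k)) :=
      Finset.image_subset_image Finset.subset_union_right
    have h4 := hAI2.convexHull_inter hsubI hsubZ
    have himg2 : (I.image (mc (2*k))) ∩ (Z.image (mc (2*k))) = (∅ : Finset (Fin (2*k) → ℝ)) := by
      rw [← Finset.image_inter _ _ (mc_inj hd), hdisjIZ, Finset.image_empty]
    have : pt b1 ∈ convexHull ℝ (((I.image (mc (2*k))) ∩ (Z.image (mc (2*k))) :
        Finset (Fin (2*k) → ℝ)) : Set (Fin (2*k) → ℝ)) := by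
      rw [Finset.coe_inter, h4]
      exact ⟨hmemI, hmemZ⟩
    rw [himg2] at this
    simp at this
  constructor
  · rw [hXeq]
    exact (V.image pt).finite_toSet
  · rw [hXeq, Set.ncard_coe_finset, Finset.card_image_of_injOn hptinj]
    exact even_count hIne
theorem stmt3 (k : ℕ) (hk : 1 ≤ k) :
    GenPos (2 * k) ((Finset.Icc 1 (2 * k + 3)).image (fun n : ℕ => moment (2 * k) (n : ℝ))) ∧
    ∀ I ⊆ Finset.Icc 1 (2 * k + 3), I.card = k + 1 →
      (convexHull ℝ ((I.image (fun n : ℕ => moment (2 * k) (n : ℝ))) : Set (Fin (2 * k) → ℝ)) ∩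
        simplexBoundary (2 * k) (k + 1)
          ((Finset.Icc 1 (2 * k + 3) \ I).image (fun n : ℕ => moment (2 * k) (n : ℝ)))).Finite ∧
      Even (convexHull ℝ ((I.image (fun n : ℕ => moment (2 * k) (n : ℝ))) : Set (Fin (2 * k) → ℝ)) ∩
        simplexBoundary (2 * k) (k + 1)
          ((Finset.Icc 1 (2 * k + 3) \ I).image (fun n : ℕ => moment (2 * k) (n : ℝ)))).ncard := by
  constructor
  · exact genpos hk
  · intro I hI hIc
    exact main2 hk hI hIc
end

section
/- Let k ≥ 1 and let S be any set of 2k+3 points in general position in ℝ^(2k). Then the number of (k+1)-element subsets I ⊆ S such that conv I intersects the boundary of the simplex conv(S \ I) (the union of the convex hulls of the (k+1)-element subsets of S \ I) in exactly one point is even. -/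
open scoped Classical

open Finset Module

section Aux

variable {α : Type*}

/-- A finset admitting a fixed-point-free involution has even cardinality. -/
lemma even_card_of_invol [DecidableEq α] (f : α → α) (s : Finset α)
    (hmem : ∀ a ∈ s, f a ∈ s) (hinv : ∀ a ∈ s, f (f a) = a) (hne : ∀ a ∈ s, f a ≠ a) :
    Even s.card := by
  induction s using Finset.strongInduction with
  | _ s ih =>
    rcases s.eq_empty_or_nonempty with rfl | ⟨a, ha⟩
    · simp
    · have hfa : f a ∈ s := hmem a ha
      have hane : f a ≠ a := hne a ha
      have hsub : s \ {a, f a} ⊂ s := by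
        refine Finset.sdiff_ssubset ?_ (by simp)
        intro x hx
        simp only [Finset.mem_insert, Finset.mem_singleton] at hx
        rcases hx with rfl | rfl <;> assumption
      have hcard : s.card = (s \ {a, f a}).card + 2 := by
        have h1 : ({a, f a} : Finset α) ⊆ s := by
          intro x hx
          simp only [Finset.mem_insert, Finset.mem_singleton] at hx
          rcases hx with rfl | rfl <;> assumption
        have h2 : ({a, f a} : Finset α).card = 2 := Finset.card_pair (Ne.symm hane)
        have h3 := Finset.card_sdiff_of_subset h1
        have h4 := Finset.card_le_card h1
        omega
      have heven : Even ((s \ {a, f a}).card) := by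
        refine ih _ hsub ?_ ?_ ?_
        · intro b hb
          simp only [Finset.mem_sdiff, Finset.mem_insert, Finset.mem_singleton] at hb ⊢
          obtain ⟨hbs, hb1⟩ := hb
          push_neg at hb1 ⊢
          refine ⟨hmem b hbs, ?_, ?_⟩
          · intro h
            have := hinv b hbs
            rw [h] at this
            exact hb1.2 this.symm
          · intro h
            apply hb1.1
            have := hinv b hbs
            rw [h, hinv a ha] at this
            exact this.symm
        · intro b hb; exact hinv b (Finset.mem_sdiff.mp hb).1
        · intro b hb; exact hne b (Finset.mem_sdiff.mp hb).1
      rw [hcard]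
      exact heven.add (even_two)
end Aux

section Geom

variable {k : ℕ} {S : Finset (Fin (2 * k) → ℝ)}

lemma gp_sub (hcard : S.card = 2 * k + 3) (hgp : GenPos (2 * k) S)
    {T : Finset (Fin (2 * k) → ℝ)} (hTS : T ⊆ S) (hT : T.card ≤ 2 * k + 1) :
    AffineIndependent ℝ ((↑) : T → (Fin (2 * k) → ℝ)) := by
  obtain ⟨u, hTu, huS, hucard⟩ := Finset.exists_subsuperset_card_eq hTS hT (by omega)
  exact (hgp u huS hucard).mono (show (T : Set (Fin (2 * k) → ℝ)) ⊆ u by exact_mod_cast hTu)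

lemma finrank_vs {T : Finset (Fin (2 * k) → ℝ)} {n : ℕ}
    (hT : AffineIndependent ℝ ((↑) : T → (Fin (2 * k) → ℝ)))
    (hc : T.card = n + 1) :
    finrank ℝ (vectorSpan ℝ (T : Set (Fin (2 * k) → ℝ))) = n := by
  have hcc : Fintype.card ↥T = n + 1 := by rwa [Fintype.card_coe]
  have h := hT.finrank_vectorSpan hcc
  have hr : Set.range ((↑) : T → (Fin (2 * k) → ℝ)) = (T : Set (Fin (2 * k) → ℝ)) := by
    simp [Subtype.range_coe_subtype]
  rwa [hr] at h

lemma vs_sup_top {A B T : Finset (Fin (2 * k) → ℝ)} {p : Fin (2 * k) → ℝ}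
    (hpA : p ∈ affineSpan ℝ (A : Set (Fin (2 * k) → ℝ)))
    (hpB : p ∈ affineSpan ℝ (B : Set (Fin (2 * k) → ℝ)))
    (hT : T ⊆ A ∪ B)
    (hTi : AffineIndependent ℝ ((↑) : T → (Fin (2 * k) → ℝ)))
    (hTc : T.card = 2 * k + 1) :
    vectorSpan ℝ (A : Set (Fin (2 * k) → ℝ)) ⊔ vectorSpan ℝ (B : Set (Fin (2 * k) → ℝ)) = ⊤ := by
  have h1 : vectorSpan ℝ ((A : Set (Fin (2 * k) → ℝ)) ∪ (B : Set (Fin (2 * k) → ℝ)))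
      = vectorSpan ℝ (A : Set (Fin (2 * k) → ℝ)) ⊔ vectorSpan ℝ (B : Set (Fin (2 * k) → ℝ)) := by
    rw [← direction_affineSpan, AffineSubspace.span_union,
      AffineSubspace.direction_sup hpA hpB]
    simp [direction_affineSpan]
  have hle : vectorSpan ℝ (T : Set (Fin (2 * k) → ℝ))
      ≤ vectorSpan ℝ ((A : Set (Fin (2 * k) → ℝ)) ∪ (B : Set (Fin (2 * k) → ℝ))) := by
    apply vectorSpan_mono
    exact_mod_cast hT
  have hTr : finrank ℝ (vectorSpan ℝ (T : Set (Fin (2 * k) → ℝ))) = 2 * k :=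
    finrank_vs hTi (by omega)
  have h2 : finrank ℝ (vectorSpan ℝ ((A : Set (Fin (2 * k) → ℝ)) ∪ (B : Set (Fin (2 * k) → ℝ))))
      = 2 * k := by
    have hlow := Submodule.finrank_mono hle
    have hup := Submodule.finrank_le
      (vectorSpan ℝ ((A : Set (Fin (2 * k) → ℝ)) ∪ (B : Set (Fin (2 * k) → ℝ))))
    rw [Module.finrank_pi] at hup
    simp only [Fintype.card_fin] at hup
    omega
  rw [← h1]
  apply Submodule.eq_top_of_finrank_eq
  rw [h2, Module.finrank_pi]
  simp
lemma not_two_faces (hk : 1 ≤ k) (hcard : S.card = 2 * k + 3) (hgp : GenPos (2 * k) S)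
    {I Y₁ Y₂ : Finset (Fin (2 * k) → ℝ)}
    (hI : I ∈ S.powersetCard (k + 1))
    (hY₁ : Y₁ ∈ (S \ I).powersetCard (k + 1)) (hY₂ : Y₂ ∈ (S \ I).powersetCard (k + 1))
    (hne : Y₁ ≠ Y₂) {x : Fin (2 * k) → ℝ}
    (hxI : x ∈ convexHull ℝ (I : Set (Fin (2 * k) → ℝ)))
    (hx1 : x ∈ convexHull ℝ (Y₁ : Set (Fin (2 * k) → ℝ)))
    (hx2 : x ∈ convexHull ℝ (Y₂ : Set (Fin (2 * k) → ℝ))) : False := by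
  rw [Finset.mem_powersetCard] at hI hY₁ hY₂
  obtain ⟨hIS, hIc⟩ := hI
  obtain ⟨h1S, h1c⟩ := hY₁
  obtain ⟨h2S, h2c⟩ := hY₂
  have hY12S : Y₁ ∪ Y₂ ⊆ S := (Finset.union_subset h1S h2S).trans Finset.sdiff_subset
  have hUc : (Y₁ ∪ Y₂).card ≤ 2 * k + 1 := by
    have h1 := Finset.card_union_le Y₁ Y₂
    have h2 : (S \ I).card = k + 2 := by
      rw [Finset.card_sdiff_of_subset hIS]; omega
    have h3 := Finset.card_le_card (Finset.union_subset h1S h2S)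
    omega
  have hai := gp_sub hcard hgp hY12S hUc
  have hxint : x ∈ convexHull ℝ ((Y₁ ∩ Y₂ : Finset (Fin (2 * k) → ℝ)) :
      Set (Fin (2 * k) → ℝ)) := by
    rw [Finset.coe_inter, hai.convexHull_inter Finset.subset_union_left Finset.subset_union_right]
    exact ⟨hx1, hx2⟩
  have hc12 : (Y₁ ∩ Y₂).card ≤ k := by
    by_contra hcon
    push_neg at hcon
    have he1 : Y₁ ∩ Y₂ = Y₁ :=
      Finset.eq_of_subset_of_card_le Finset.inter_subset_left (by omega)
    apply hne
    apply Finset.eq_of_subset_of_card_le ?_ (by omega)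
    rw [← he1]
    exact Finset.inter_subset_right
  have hdisj : Disjoint I (Y₁ ∩ Y₂) := by
    have hd1 : Disjoint Y₁ I := Finset.sdiff_disjoint.mono_left h1S
    exact hd1.symm.mono_right Finset.inter_subset_left
  have hUS : I ∪ (Y₁ ∩ Y₂) ⊆ S :=
    Finset.union_subset hIS ((Finset.inter_subset_left).trans (h1S.trans Finset.sdiff_subset))
  have hUc2 : (I ∪ (Y₁ ∩ Y₂)).card ≤ 2 * k + 1 := by
    have := Finset.card_union_le I (Y₁ ∩ Y₂)
    omega
  have hai2 := gp_sub hcard hgp hUS hUc2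
  have hx' : x ∈ convexHull ℝ ((I ∩ (Y₁ ∩ Y₂) : Finset (Fin (2 * k) → ℝ)) :
      Set (Fin (2 * k) → ℝ)) := by
    rw [Finset.coe_inter, hai2.convexHull_inter Finset.subset_union_left Finset.subset_union_right]
    exact ⟨hxI, hxint⟩
  rw [Finset.disjoint_iff_inter_eq_empty.mp hdisj] at hx'
  simp at hx'

lemma inter_subsingleton (hcard : S.card = 2 * k + 3) (hgp : GenPos (2 * k) S)
    {I Y : Finset (Fin (2 * k) → ℝ)} (hIS : I ⊆ S) (hIc : I.card = k + 1)
    (hYS : Y ⊆ S) (hYc : Y.card = k + 1) (hdisj : Disjoint I Y)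
    {p q : Fin (2 * k) → ℝ}
    (hp : p ∈ convexHull ℝ (I : Set (Fin (2 * k) → ℝ)) ∩ convexHull ℝ (Y : Set (Fin (2 * k) → ℝ)))
    (hq : q ∈ convexHull ℝ (I : Set (Fin (2 * k) → ℝ)) ∩ convexHull ℝ (Y : Set (Fin (2 * k) → ℝ))) :
    p = q := by
  have hUc : (I ∪ Y).card = 2 * k + 2 := by
    rw [Finset.card_union_of_disjoint hdisj]; omega
  obtain ⟨T, hTsub, hTc⟩ := Finset.exists_subset_card_eq (s := I ∪ Y) (n := 2 * k + 1) (by omega)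
  have hTi := gp_sub hcard hgp (hTsub.trans (Finset.union_subset hIS hYS)) (le_of_eq hTc)
  have htop := vs_sup_top (p := p)
    (convexHull_subset_affineSpan _ hp.1) (convexHull_subset_affineSpan _ hp.2) hTsub hTi hTc
  have hfI : finrank ℝ (vectorSpan ℝ (I : Set (Fin (2 * k) → ℝ))) = k :=
    finrank_vs (gp_sub hcard hgp hIS (by omega)) hIc
  have hfY : finrank ℝ (vectorSpan ℝ (Y : Set (Fin (2 * k) → ℝ))) = k :=
    finrank_vs (gp_sub hcard hgp hYS (by omega)) hYc
  have hsum := Submodule.finrank_sup_add_finrank_inf_eq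
    (vectorSpan ℝ (I : Set (Fin (2 * k) → ℝ))) (vectorSpan ℝ (Y : Set (Fin (2 * k) → ℝ)))
  rw [htop, hfI, hfY, finrank_top, Module.finrank_pi] at hsum
  simp only [Fintype.card_fin] at hsum
  have hinf : finrank ℝ ↥(vectorSpan ℝ (I : Set (Fin (2 * k) → ℝ))
      ⊓ vectorSpan ℝ (Y : Set (Fin (2 * k) → ℝ))) = 0 := by omega
  have hbot := Submodule.finrank_eq_zero.mp hinf
  have hdI : q - p ∈ vectorSpan ℝ (I : Set (Fin (2 * k) → ℝ)) := by
    have h1 : q -ᵥ p ∈ (affineSpan ℝ (I : Set (Fin (2 * k) → ℝ))).direction :=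
      AffineSubspace.vsub_mem_direction (convexHull_subset_affineSpan _ hq.1)
        (convexHull_subset_affineSpan _ hp.1)
    rwa [direction_affineSpan] at h1
  have hdY : q - p ∈ vectorSpan ℝ (Y : Set (Fin (2 * k) → ℝ)) := by
    have h1 : q -ᵥ p ∈ (affineSpan ℝ (Y : Set (Fin (2 * k) → ℝ))).direction :=
      AffineSubspace.vsub_mem_direction (convexHull_subset_affineSpan _ hq.2)
        (convexHull_subset_affineSpan _ hp.2)
    rwa [direction_affineSpan] at h1
  have : q - p ∈ (⊥ : Submodule ℝ (Fin (2 * k) → ℝ)) := by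
    rw [← hbot]; exact Submodule.mem_inf.mpr ⟨hdI, hdY⟩
  rw [Submodule.mem_bot] at this
  have := sub_eq_zero.mp this
  exact this.symm

lemma inter_collinear (hk : 1 ≤ k) (hcard : S.card = 2 * k + 3) (hgp : GenPos (2 * k) S)
    {I : Finset (Fin (2 * k) → ℝ)} (hIS : I ⊆ S) (hIc : I.card = k + 1) :
    Collinear ℝ (convexHull ℝ (I : Set (Fin (2 * k) → ℝ)) ∩
      convexHull ℝ ((S \ I : Finset (Fin (2 * k) → ℝ)) : Set (Fin (2 * k) → ℝ))) := by
  set B : Finset (Fin (2 * k) → ℝ) := S \ I with hB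
  set X := convexHull ℝ (I : Set (Fin (2 * k) → ℝ)) ∩
      convexHull ℝ (B : Set (Fin (2 * k) → ℝ)) with hX
  rcases X.eq_empty_or_nonempty with hXe | ⟨p₀, hp₀⟩
  · rw [hXe]; exact collinear_empty ℝ _
  have hBS : B ⊆ S := Finset.sdiff_subset
  have hBc : B.card = k + 2 := by rw [hB, Finset.card_sdiff_of_subset hIS]; omega
  have hIB : I ∪ B = S := by
    rw [hB, Finset.union_sdiff_of_subset hIS]
  obtain ⟨T, hTsub, hTc⟩ := Finset.exists_subset_card_eq (s := S) (n := 2 * k + 1) (by omega)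
  have hTi := gp_sub hcard hgp hTsub (le_of_eq hTc)
  have htop := vs_sup_top (p := p₀)
    (convexHull_subset_affineSpan _ hp₀.1) (convexHull_subset_affineSpan _ hp₀.2)
    (by rw [hIB]; exact hTsub) hTi hTc
  have hfI : finrank ℝ (vectorSpan ℝ (I : Set (Fin (2 * k) → ℝ))) = k :=
    finrank_vs (gp_sub hcard hgp hIS (by omega)) hIc
  have hfB : finrank ℝ (vectorSpan ℝ (B : Set (Fin (2 * k) → ℝ))) = k + 1 :=
    finrank_vs (gp_sub hcard hgp hBS (by omega)) hBc
  have hsum := Submodule.finrank_sup_add_finrank_inf_eq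
    (vectorSpan ℝ (I : Set (Fin (2 * k) → ℝ))) (vectorSpan ℝ (B : Set (Fin (2 * k) → ℝ)))
  rw [htop, hfI, hfB, finrank_top, Module.finrank_pi] at hsum
  simp only [Fintype.card_fin] at hsum
  have hinf : finrank ℝ ↥(vectorSpan ℝ (I : Set (Fin (2 * k) → ℝ))
      ⊓ vectorSpan ℝ (B : Set (Fin (2 * k) → ℝ))) = 1 := by omega
  have hXle : vectorSpan ℝ X ≤ vectorSpan ℝ (I : Set (Fin (2 * k) → ℝ))
      ⊓ vectorSpan ℝ (B : Set (Fin (2 * k) → ℝ)) := by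
    rw [vectorSpan_def, Submodule.span_le]
    rintro v ⟨a, ha, b, hb, rfl⟩
    refine Submodule.mem_inf.mpr ⟨?_, ?_⟩
    · have h1 : a -ᵥ b ∈ (affineSpan ℝ (I : Set (Fin (2 * k) → ℝ))).direction :=
        AffineSubspace.vsub_mem_direction (convexHull_subset_affineSpan _ ha.1)
          (convexHull_subset_affineSpan _ hb.1)
      rwa [direction_affineSpan] at h1
    · have h1 : a -ᵥ b ∈ (affineSpan ℝ (B : Set (Fin (2 * k) → ℝ))).direction :=
        AffineSubspace.vsub_mem_direction (convexHull_subset_affineSpan _ ha.2)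
          (convexHull_subset_affineSpan _ hb.2)
      rwa [direction_affineSpan] at h1
  have hfin : finrank ℝ (vectorSpan ℝ X) ≤ 1 := by
    have := Submodule.finrank_mono hXle
    omega
  exact collinear_iff_finrank_le_one.mpr hfin

lemma middle_cross (hk : 1 ≤ k) (hcard : S.card = 2 * k + 3) (hgp : GenPos (2 * k) S)
    {I Ya Yb : Finset (Fin (2 * k) → ℝ)}
    (hI : I ∈ S.powersetCard (k + 1))
    (hYa : Ya ∈ (S \ I).powersetCard (k + 1)) (hYb : Yb ∈ (S \ I).powersetCard (k + 1))
    (hne : Ya ≠ Yb) {pa pb pc : Fin (2 * k) → ℝ}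
    (hpaI : pa ∈ convexHull ℝ (I : Set (Fin (2 * k) → ℝ)))
    (hpaA : pa ∈ convexHull ℝ (Ya : Set (Fin (2 * k) → ℝ)))
    (hpbB : pb ∈ convexHull ℝ (Yb : Set (Fin (2 * k) → ℝ)))
    (hpcB : pc ∈ convexHull ℝ ((S \ I : Finset (Fin (2 * k) → ℝ)) : Set (Fin (2 * k) → ℝ)))
    (hw : Wbtw ℝ pa pb pc) (hba : pb ≠ pa) (hbc : pb ≠ pc) : False := by
  have hIc : I.card = k + 1 := (Finset.mem_powersetCard.mp hI).2
  have hIS : I ⊆ S := (Finset.mem_powersetCard.mp hI).1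
  have hYaB : Ya ⊆ S \ I := (Finset.mem_powersetCard.mp hYa).1
  have hYbB : Yb ⊆ S \ I := (Finset.mem_powersetCard.mp hYb).1
  have hYbc : Yb.card = k + 1 := (Finset.mem_powersetCard.mp hYb).2
  have hBc : (S \ I).card = k + 2 := by rw [Finset.card_sdiff_of_subset hIS]; omega
  -- the missing vertex of Yb
  obtain ⟨v, hv⟩ : ∃ v, (S \ I) \ Yb = {v} := by
    apply Finset.card_eq_one.mp
    rw [Finset.card_sdiff_of_subset hYbB]; omega
  have hvB : v ∈ S \ I := by
    have : v ∈ (S \ I) \ Yb := by rw [hv]; exact Finset.mem_singleton_self v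
    exact (Finset.mem_sdiff.mp this).1
  have hvYb : v ∉ Yb := by
    have : v ∈ (S \ I) \ Yb := by rw [hv]; exact Finset.mem_singleton_self v
    exact (Finset.mem_sdiff.mp this).2
  have hBv : (S \ I).erase v = Yb := by
    apply ((Finset.eq_of_subset_of_card_le (Finset.subset_erase.mpr ⟨hYbB, hvYb⟩) ?_)).symm
    rw [Finset.card_erase_of_mem hvB]
    omega
  -- weights over B for pa, pc, pb
  have haiB : AffineIndependent ℝ ((↑) : (S \ I : Finset (Fin (2 * k) → ℝ)) →
      (Fin (2 * k) → ℝ)) := gp_sub hcard hgp Finset.sdiff_subset (by omega)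
  have hpaB : pa ∈ convexHull ℝ ((S \ I : Finset (Fin (2 * k) → ℝ)) :
      Set (Fin (2 * k) → ℝ)) :=
    convexHull_mono (by exact_mod_cast hYaB) hpaA
  obtain ⟨wa, hwa0, hwa1, hwaS⟩ := Finset.mem_convexHull'.mp hpaB
  obtain ⟨wc, hwc0, hwc1, hwcS⟩ := Finset.mem_convexHull'.mp hpcB
  obtain ⟨wb', hwb0', hwb1', hwbS'⟩ := Finset.mem_convexHull'.mp hpbB
  set wb : (Fin (2 * k) → ℝ) → ℝ := fun x => if x ∈ Yb then wb' x else 0 with hwbdef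
  have hwbB1 : ∑ x ∈ S \ I, wb x = 1 := by
    rw [hwbdef, Finset.sum_ite_mem, Finset.inter_eq_right.mpr hYbB]
    exact hwb1'
  have hwbBS : ∑ x ∈ S \ I, wb x • x = pb := by
    rw [hwbdef]
    simp only [ite_smul, zero_smul]
    rw [Finset.sum_ite_mem, Finset.inter_eq_right.mpr hYbB]
    exact hwbS'
  -- segment combination
  obtain ⟨t, u, ht0, hu0, htu, hsum⟩ := hw.mem_segment
  have ht0' : t ≠ 0 := by
    rintro rfl
    apply hbc
    rw [← hsum]
    simp only [zero_smul, zero_add]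
    have : u = 1 := by linarith
    rw [this, one_smul]
  have hu0' : u ≠ 0 := by
    rintro rfl
    apply hba
    rw [← hsum]
    simp only [zero_smul, add_zero]
    have : t = 1 := by linarith
    rw [this, one_smul]
  have hkey : ∀ x ∈ S \ I, (fun x => t * wa x + u * wc x) x = wb x := by
    apply haiB.eq_of_sum_eq_sum_subtype
    · rw [hwbB1, Finset.sum_add_distrib, ← Finset.mul_sum, ← Finset.mul_sum, hwa1, hwc1]
      simp [htu]
    · rw [hwbBS, ← hsum, ← hwaS, ← hwcS]
      rw [Finset.smul_sum, Finset.smul_sum, ← Finset.sum_add_distrib]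
      congr 1
      ext x
      simp only [add_smul, mul_smul, Pi.add_apply, Pi.smul_apply, smul_eq_mul]
      ring
  have hwav : wa v = 0 := by
    have h1 := hkey v hvB
    simp only [hwbdef, if_neg hvYb] at h1
    have h2 : 0 ≤ t * wa v := mul_nonneg ht0 (hwa0 v hvB)
    have h3 : 0 ≤ u * wc v := mul_nonneg hu0 (hwc0 v hvB)
    have h4 : t * wa v = 0 := by linarith
    have ht0'' : 0 < t := lt_of_le_of_ne ht0 (Ne.symm ht0')
    have := mul_eq_zero.mp h4
    rcases this with h | h
    · exact absurd h ht0'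
    · exact h
  -- pa lies in conv Yb
  have hpaYb : pa ∈ convexHull ℝ (Yb : Set (Fin (2 * k) → ℝ)) := by
    rw [Finset.mem_convexHull']
    refine ⟨wa, ?_, ?_, ?_⟩
    · intro y hy
      exact hwa0 y (hYbB hy)
    · rw [← hBv, Finset.sum_erase_eq_sub hvB, hwa1, hwav]
      ring
    · rw [← hBv, Finset.sum_erase_eq_sub hvB, hwaS, hwav]
      simp
  exact not_two_faces hk hcard hgp hI hYa hYb hne hpaI hpaA hpaYb

/-- The set of `(k+1)`-element subsets of `S \\ I` whose convex hull meets that of `I`. -/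
noncomputable def crossSet (k : ℕ) (S I : Finset (Fin (2 * k) → ℝ)) : Finset (Finset (Fin (2 * k) → ℝ)) :=
  ((S \ I).powersetCard (k + 1)).filter
    (fun Y => (convexHull ℝ (I : Set (Fin (2 * k) → ℝ)) ∩
      convexHull ℝ (Y : Set (Fin (2 * k) → ℝ))).Nonempty)

lemma mem_crossSet {I Y : Finset (Fin (2 * k) → ℝ)} :
    Y ∈ crossSet k S I ↔ Y ∈ (S \ I).powersetCard (k + 1) ∧
      (convexHull ℝ (I : Set (Fin (2 * k) → ℝ)) ∩
        convexHull ℝ (Y : Set (Fin (2 * k) → ℝ))).Nonempty := by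
  rw [crossSet, Finset.mem_filter]

lemma count_le_two (hk : 1 ≤ k) (hcard : S.card = 2 * k + 3) (hgp : GenPos (2 * k) S)
    {I : Finset (Fin (2 * k) → ℝ)} (hI : I ∈ S.powersetCard (k + 1)) :
    (crossSet k S I).card ≤ 2 := by
  by_contra hcon
  push_neg at hcon
  obtain ⟨T, hTsub, hTc⟩ := Finset.exists_subset_card_eq (show 3 ≤ _ from hcon)
  rw [Finset.card_eq_three] at hTc
  obtain ⟨Y₁, Y₂, Y₃, h12, h13, h23, rfl⟩ := hTc
  have hIS : I ⊆ S := (Finset.mem_powersetCard.mp hI).1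
  have hIc : I.card = k + 1 := (Finset.mem_powersetCard.mp hI).2
  have hmem : ∀ Y ∈ ({Y₁, Y₂, Y₃} : Finset (Finset (Fin (2 * k) → ℝ))),
      Y ∈ (S \ I).powersetCard (k + 1) ∧
      ∃ p, p ∈ convexHull ℝ (I : Set (Fin (2 * k) → ℝ)) ∧
        p ∈ convexHull ℝ (Y : Set (Fin (2 * k) → ℝ)) := by
    intro Y hY
    have := mem_crossSet.mp (hTsub hY)
    exact ⟨this.1, this.2.imp fun p hp => ⟨hp.1, hp.2⟩⟩
  obtain ⟨hY1, p₁, hp1I, hp1Y⟩ := hmem Y₁ (by simp)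
  obtain ⟨hY2, p₂, hp2I, hp2Y⟩ := hmem Y₂ (by simp)
  obtain ⟨hY3, p₃, hp3I, hp3Y⟩ := hmem Y₃ (by simp)
  -- points are pairwise distinct
  have hpd : ∀ {Ya Yb : Finset (Fin (2 * k) → ℝ)} {p : Fin (2 * k) → ℝ},
      Ya ∈ (S \ I).powersetCard (k + 1) → Yb ∈ (S \ I).powersetCard (k + 1) → Ya ≠ Yb →
      p ∈ convexHull ℝ (I : Set (Fin (2 * k) → ℝ)) →
      p ∈ convexHull ℝ (Ya : Set (Fin (2 * k) → ℝ)) →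
      p ∈ convexHull ℝ (Yb : Set (Fin (2 * k) → ℝ)) → False :=
    fun ha hb hne hpI hpa hpb => not_two_faces hk hcard hgp hI ha hb hne hpI hpa hpb
  have hne12 : p₁ ≠ p₂ := fun h => hpd hY1 hY2 h12 hp1I hp1Y (h ▸ hp2Y)
  have hne13 : p₁ ≠ p₃ := fun h => hpd hY1 hY3 h13 hp1I hp1Y (h ▸ hp3Y)
  have hne23 : p₂ ≠ p₃ := fun h => hpd hY2 hY3 h23 hp2I hp2Y (h ▸ hp3Y)
  -- points lie in conv I ∩ conv (S \ I) and are collinear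
  have hcol := inter_collinear hk hcard hgp hIS hIc
  have hX : ∀ {Y : Finset (Fin (2 * k) → ℝ)} {p : Fin (2 * k) → ℝ},
      Y ∈ (S \ I).powersetCard (k + 1) →
      p ∈ convexHull ℝ (I : Set (Fin (2 * k) → ℝ)) →
      p ∈ convexHull ℝ (Y : Set (Fin (2 * k) → ℝ)) →
      p ∈ convexHull ℝ (I : Set (Fin (2 * k) → ℝ)) ∩
        convexHull ℝ ((S \ I : Finset (Fin (2 * k) → ℝ)) : Set (Fin (2 * k) → ℝ)) := by
    intro Y p hY hpI hpY
    refine ⟨hpI, ?_⟩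
    exact convexHull_mono (by exact_mod_cast (Finset.mem_powersetCard.mp hY).1) hpY
  have hcol3 : Collinear ℝ ({p₁, p₂, p₃} : Set (Fin (2 * k) → ℝ)) := by
    apply hcol.subset
    rintro x (rfl | rfl | rfl)
    · exact hX hY1 hp1I hp1Y
    · exact hX hY2 hp2I hp2Y
    · exact hX hY3 hp3I hp3Y
  rcases hcol3.wbtw_or_wbtw_or_wbtw with hw | hw | hw
  · exact middle_cross hk hcard hgp hI hY1 hY2 h12 hp1I hp1Y hp2Y
      (hX hY3 hp3I hp3Y).2 hw hne12.symm hne23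
  · exact middle_cross hk hcard hgp hI hY2 hY3 h23 hp2I hp2Y hp3Y
      (hX hY1 hp1I hp1Y).2 hw hne23.symm hne13.symm
  · exact middle_cross hk hcard hgp hI hY3 hY1 h13.symm hp3I hp3Y hp1Y
      (hX hY2 hp2I hp2Y).2 hw hne13 hne12

lemma char_one (hk : 1 ≤ k) (hcard : S.card = 2 * k + 3) (hgp : GenPos (2 * k) S)
    {I : Finset (Fin (2 * k) → ℝ)} (hI : I ∈ S.powersetCard (k + 1)) :
    (∃ x : Fin (2 * k) → ℝ,
        convexHull ℝ (I : Set (Fin (2 * k) → ℝ)) ∩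
          simplexBoundary (2 * k) (k + 1) (S \ I) = {x}) ↔
    (crossSet k S I).card = 1 := by
  have hIS : I ⊆ S := (Finset.mem_powersetCard.mp hI).1
  have hIc : I.card = k + 1 := (Finset.mem_powersetCard.mp hI).2
  have hbd : ∀ z : Fin (2 * k) → ℝ, z ∈ simplexBoundary (2 * k) (k + 1) (S \ I) ↔
      ∃ Y ∈ (S \ I).powersetCard (k + 1),
        z ∈ convexHull ℝ (Y : Set (Fin (2 * k) → ℝ)) := by
    intro z
    simp [simplexBoundary, Set.mem_iUnion]
  constructor
  · rintro ⟨x, hx⟩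
    have hxmem : x ∈ convexHull ℝ (I : Set (Fin (2 * k) → ℝ)) ∩
        simplexBoundary (2 * k) (k + 1) (S \ I) := hx ▸ rfl
    obtain ⟨hxI, hxbd⟩ := hxmem
    obtain ⟨Y₀, hY₀, hxY₀⟩ := (hbd x).mp hxbd
    rw [Finset.card_eq_one]
    refine ⟨Y₀, ?_⟩
    apply Finset.eq_singleton_iff_unique_mem.mpr
    constructor
    · exact mem_crossSet.mpr ⟨hY₀, ⟨x, hxI, hxY₀⟩⟩
    · intro Y hY
      obtain ⟨hYpc, hne'⟩ := mem_crossSet.mp hY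
      obtain ⟨p, hpI, hpY⟩ := hne'
      have hpmem : p ∈ convexHull ℝ (I : Set (Fin (2 * k) → ℝ)) ∩
          simplexBoundary (2 * k) (k + 1) (S \ I) :=
        ⟨hpI, (hbd p).mpr ⟨Y, hYpc, hpY⟩⟩
      rw [hx] at hpmem
      have hpx : p = x := hpmem
      by_contra hne
      exact not_two_faces hk hcard hgp hI hYpc hY₀ hne hxI (hpx ▸ hpY) hxY₀
  · intro h1
    obtain ⟨Y₀, hY₀⟩ := Finset.card_eq_one.mp h1
    have hY₀mem : Y₀ ∈ crossSet k S I := by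
      rw [hY₀]; exact Finset.mem_singleton_self Y₀
    obtain ⟨hY₀pc, p, hpI, hpY₀⟩ := mem_crossSet.mp hY₀mem
    have hY₀S : Y₀ ⊆ S \ I := (Finset.mem_powersetCard.mp hY₀pc).1
    have hY₀c : Y₀.card = k + 1 := (Finset.mem_powersetCard.mp hY₀pc).2
    have hdisj : Disjoint I Y₀ := (Finset.sdiff_disjoint.mono_left hY₀S).symm
    refine ⟨p, ?_⟩
    ext z
    simp only [Set.mem_inter_iff, Set.mem_singleton_iff]
    constructor
    · rintro ⟨hzI, hzbd⟩
      obtain ⟨Y, hYpc, hzY⟩ := (hbd z).mp hzbd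
      have hYf : Y ∈ crossSet k S I :=
        mem_crossSet.mpr ⟨hYpc, ⟨z, hzI, hzY⟩⟩
      rw [hY₀, Finset.mem_singleton] at hYf
      subst hYf
      exact inter_subsingleton hcard hgp hIS hIc (hY₀S.trans Finset.sdiff_subset) hY₀c hdisj
        ⟨hzI, hzY⟩ ⟨hpI, hpY₀⟩
    · rintro rfl
      exact ⟨hpI, (hbd z).mpr ⟨Y₀, hY₀pc, hpY₀⟩⟩

lemma even_sum_cross (hcard : S.card = 2 * k + 3) :
    Even (∑ I ∈ S.powersetCard (k + 1), (crossSet k S I).card) := by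
  classical
  set P := S.powersetCard (k + 1) with hP
  set Q := (P ×ˢ P).filter
    (fun z : Finset (Fin (2 * k) → ℝ) × Finset (Fin (2 * k) → ℝ) =>
      Disjoint z.1 z.2 ∧
      ((convexHull ℝ (↑z.1 : Set (Fin (2 * k) → ℝ))) ∩
        (convexHull ℝ (↑z.2 : Set (Fin (2 * k) → ℝ)))).Nonempty) with hQdef
  have hmemQ : ∀ z : Finset (Fin (2 * k) → ℝ) × Finset (Fin (2 * k) → ℝ),
      z ∈ Q ↔ (z.1 ∈ P ∧ z.2 ∈ P) ∧ Disjoint z.1 z.2 ∧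
      ((convexHull ℝ (↑z.1 : Set (Fin (2 * k) → ℝ))) ∩
        (convexHull ℝ (↑z.2 : Set (Fin (2 * k) → ℝ)))).Nonempty := by
    intro z
    rw [hQdef, Finset.mem_filter, Finset.mem_product]
  have hQcard : Q.card = ∑ I ∈ P, (crossSet k S I).card := by
    rw [Finset.card_eq_sum_card_fiberwise
      (f := Prod.fst) (t := P) (fun z hz => ((hmemQ z).mp hz).1.1)]
    refine Finset.sum_congr rfl fun I hIP => ?_
    have hIS : I ⊆ S := (Finset.mem_powersetCard.mp hIP).1
    have hIc : I.card = k + 1 := (Finset.mem_powersetCard.mp hIP).2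
    apply Finset.card_bij (fun z _ => z.2)
    · intro z hz
      rw [Finset.mem_filter] at hz
      obtain ⟨hzQ, hz1⟩ := hz
      obtain ⟨⟨hz1P, hz2P⟩, hdisj, hne⟩ := (hmemQ z).mp hzQ
      subst hz1
      refine mem_crossSet.mpr ⟨?_, hne⟩
      rw [Finset.mem_powersetCard]
      refine ⟨Finset.subset_sdiff.mpr ⟨(Finset.mem_powersetCard.mp hz2P).1, hdisj.symm⟩,
        (Finset.mem_powersetCard.mp hz2P).2⟩
    · intro z hz w hw h
      rw [Finset.mem_filter] at hz hw
      exact Prod.ext (hz.2.trans hw.2.symm) h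
    · intro Y hY
      obtain ⟨hYpc, hne⟩ := mem_crossSet.mp hY
      rw [Finset.mem_powersetCard] at hYpc
      have hYS : Y ⊆ S \ I := hYpc.1
      refine ⟨(I, Y), ?_, rfl⟩
      rw [Finset.mem_filter]
      refine ⟨(hmemQ (I, Y)).mpr ⟨⟨hIP, ?_⟩, ?_, hne⟩, rfl⟩
      · rw [Finset.mem_powersetCard]
        exact ⟨hYS.trans Finset.sdiff_subset, hYpc.2⟩
      · exact (Finset.sdiff_disjoint.mono_left hYS).symm
  rw [← hQcard]
  apply even_card_of_invol Prod.swap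
  · intro z hz
    obtain ⟨⟨h1, h2⟩, hd, hne⟩ := (hmemQ z).mp hz
    refine (hmemQ z.swap).mpr ⟨⟨h2, h1⟩, hd.symm, ?_⟩
    rw [Set.inter_comm]
    exact hne
  · intro z _
    exact Prod.swap_swap z
  · intro z hz heq
    obtain ⟨⟨h1, h2⟩, hd, hne⟩ := (hmemQ z).mp hz
    have h12 : z.2 = z.1 := congrArg Prod.fst heq
    rw [h12] at hd
    have : z.1 = ∅ := disjoint_self.mp hd
    have hc : z.1.card = k + 1 := (Finset.mem_powersetCard.mp h1).2
    rw [this] at hc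
    simp at hc

end Geom

theorem stmt4 (k : ℕ) (hk : 1 ≤ k) (S : Finset (Fin (2 * k) → ℝ))
    (hcard : S.card = 2 * k + 3) (hgp : GenPos (2 * k) S) :
    Even (Set.ncard {I : Finset (Fin (2 * k) → ℝ) | I ⊆ S ∧ I.card = k + 1 ∧
      ∃ x : Fin (2 * k) → ℝ,
        convexHull ℝ (I : Set (Fin (2 * k) → ℝ)) ∩
          simplexBoundary (2 * k) (k + 1) (S \ I) = {x}}) := by
  classical
  have hset : {I : Finset (Fin (2 * k) → ℝ) | I ⊆ S ∧ I.card = k + 1 ∧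
      ∃ x : Fin (2 * k) → ℝ,
        convexHull ℝ (I : Set (Fin (2 * k) → ℝ)) ∩
          simplexBoundary (2 * k) (k + 1) (S \ I) = {x}} =
      ↑((S.powersetCard (k + 1)).filter (fun I => (crossSet k S I).card = 1)) := by
    ext I
    simp only [Finset.coe_filter, Set.mem_setOf_eq, Finset.mem_powersetCard]
    constructor
    · rintro ⟨h1, h2, h3⟩
      exact ⟨⟨h1, h2⟩,
        (char_one hk hcard hgp (Finset.mem_powersetCard.mpr ⟨h1, h2⟩)).mp h3⟩
    · rintro ⟨⟨h1, h2⟩, h3⟩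
      exact ⟨h1, h2,
        (char_one hk hcard hgp (Finset.mem_powersetCard.mpr ⟨h1, h2⟩)).mpr h3⟩
  rw [hset, Set.ncard_coe_finset]
  have hsum := even_sum_cross (k := k) (S := S) hcard
  have hle : ∀ I ∈ S.powersetCard (k + 1), (crossSet k S I).card ≤ 2 :=
    fun I hI => count_le_two hk hcard hgp hI
  have h2 : ((S.powersetCard (k + 1)).filter (fun I => (crossSet k S I).card = 1)).card
      = ∑ I ∈ S.powersetCard (k + 1), (crossSet k S I).card % 2 := by
    rw [Finset.card_filter]
    refine Finset.sum_congr rfl fun I hI => ?_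
    have := hle I hI
    by_cases h : (crossSet k S I).card = 1
    · simp [h]
    · have h' : (crossSet k S I).card = 0 ∨ (crossSet k S I).card = 2 := by omega
      rcases h' with h' | h' <;> simp [h, h']
  rw [h2]
  have hsplit : ∑ I ∈ S.powersetCard (k + 1), (crossSet k S I).card
      = (∑ I ∈ S.powersetCard (k + 1), 2 * ((crossSet k S I).card / 2))
        + ∑ I ∈ S.powersetCard (k + 1), (crossSet k S I).card % 2 := by
    rw [← Finset.sum_add_distrib]
    exact Finset.sum_congr rfl fun I _ => by omega
  rw [hsplit] at hsum
  have heven2 : Even (∑ I ∈ S.powersetCard (k + 1), 2 * ((crossSet k S I).card / 2)) := by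
    rw [← Finset.mul_sum]
    exact even_two_mul _
  exact (Nat.even_add.mp hsum).mp heven2
end

section
/- Let 0 ≤ k ≤ d and let M, N ⊂ ℝ^d be disjoint finite sets with |M| = k+1 and |N| = d+1−k such that the d+2 points of M ∪ N are in general position (every (d+1)-element subset of M ∪ N is affinely independent). Then conv M ∩ conv N contains at most one point. -/
open scoped Classical

theorem stmt5 (d k : ℕ) (hk : k ≤ d) (M N : Finset (Fin d → ℝ))
    (hMN : Disjoint M N) (hM : M.card = k + 1) (hN : N.card = d + 1 - k)
    (hgp : GenPos d (M ∪ N)) :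
    (convexHull ℝ (M : Set (Fin d → ℝ)) ∩
      convexHull ℝ (N : Set (Fin d → ℝ))).Subsingleton := by
  intro x hx y hy
  set U := vectorSpan ℝ (M : Set (Fin d → ℝ)) with hU
  set V := vectorSpan ℝ (N : Set (Fin d → ℝ)) with hV
  have hxM : x ∈ affineSpan ℝ (M : Set (Fin d → ℝ)) :=
    convexHull_subset_affineSpan _ hx.1
  have hxN : x ∈ affineSpan ℝ (N : Set (Fin d → ℝ)) :=
    convexHull_subset_affineSpan _ hx.2
  have hyM : y ∈ affineSpan ℝ (M : Set (Fin d → ℝ)) :=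
    convexHull_subset_affineSpan _ hy.1
  have hyN : y ∈ affineSpan ℝ (N : Set (Fin d → ℝ)) :=
    convexHull_subset_affineSpan _ hy.2
  -- dimension bounds
  have hMc : Fintype.card (M : Set (Fin d → ℝ)) = M.card :=
    Fintype.card_congr (Equiv.refl _) |>.trans (by simp)
  have hNc : Fintype.card (N : Set (Fin d → ℝ)) = N.card :=
    Fintype.card_congr (Equiv.refl _) |>.trans (by simp)
  have hcardM : Fintype.card (M : Set (Fin d → ℝ)) = k + 1 := by omega
  have hcardN : Fintype.card (N : Set (Fin d → ℝ)) = (d - k) + 1 := by omega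
  have hUle : Module.finrank ℝ U ≤ k := by
    have := finrank_vectorSpan_range_le ℝ
      (fun x : (M : Set (Fin d → ℝ)) => (x : Fin d → ℝ)) hcardM
    rwa [Subtype.range_coe] at this
  have hVle : Module.finrank ℝ V ≤ d - k := by
    have := finrank_vectorSpan_range_le ℝ
      (fun x : (N : Set (Fin d → ℝ)) => (x : Fin d → ℝ)) hcardN
    rwa [Subtype.range_coe] at this
  -- a (d+1)-subset spans
  have hcardMN : (M ∪ N).card = d + 2 := by
    rw [Finset.card_union_of_disjoint hMN]; omega
  obtain ⟨T, hTsub, hTcard⟩ : ∃ T ⊆ M ∪ N, T.card = d + 1 :=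
    Finset.exists_subset_card_eq (by omega)
  have hTind := hgp T hTsub hTcard
  have hTtop : vectorSpan ℝ (T : Set (Fin d → ℝ)) = ⊤ := by
    have := hTind.vectorSpan_eq_top_of_card_eq_finrank_add_one
      (V := Fin d → ℝ) (by simp [hTcard])
    rwa [Subtype.range_coe] at this
  -- vectorSpan (M ∪ N) ≤ U ⊔ V
  have hdiff : ∀ a ∈ M ∪ N, a - x ∈ U ⊔ V := by
    intro a ha
    rcases Finset.mem_union.1 ha with ha | ha
    · exact Submodule.mem_sup_left <| by
        simpa [hU, ← direction_affineSpan] using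
          AffineSubspace.vsub_mem_direction (mem_affineSpan ℝ (by exact_mod_cast ha)) hxM
    · exact Submodule.mem_sup_right <| by
        simpa [hV, ← direction_affineSpan] using
          AffineSubspace.vsub_mem_direction (mem_affineSpan ℝ (by exact_mod_cast ha)) hxN
  have hle : vectorSpan ℝ (T : Set (Fin d → ℝ)) ≤ U ⊔ V := by
    rw [vectorSpan_def]
    refine Submodule.span_le.2 ?_
    rintro v ⟨a, ha, b, hb, rfl⟩
    have ha' : a ∈ M ∪ N := hTsub (by exact_mod_cast ha)
    have hb' : b ∈ M ∪ N := hTsub (by exact_mod_cast hb)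
    have : (a : Fin d → ℝ) - b = (a - x) - (b - x) := by abel
    show (a : Fin d → ℝ) -ᵥ b ∈ (U ⊔ V : Submodule ℝ (Fin d → ℝ))
    rw [vsub_eq_sub, this]
    exact sub_mem (hdiff a ha') (hdiff b hb')
  have hsup : U ⊔ V = ⊤ := top_le_iff.1 (hTtop ▸ hle)
  have hsupr : Module.finrank ℝ ↥(U ⊔ V) = d := by
    rw [hsup, finrank_top]; simp
  have hinf : Module.finrank ℝ ↥(U ⊓ V) = 0 := by
    have h := Submodule.finrank_sup_add_finrank_inf_eq U V
    omega
  have hbot : U ⊓ V = ⊥ := Submodule.finrank_eq_zero.1 hinf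
  -- x - y lies in U ⊓ V
  have hxyU : x - y ∈ U := by
    simpa [hU, ← direction_affineSpan, vsub_eq_sub] using
      AffineSubspace.vsub_mem_direction hxM hyM
  have hxyV : x - y ∈ V := by
    simpa [hV, ← direction_affineSpan, vsub_eq_sub] using
      AffineSubspace.vsub_mem_direction hxN hyN
  have : x - y ∈ (⊥ : Submodule ℝ (Fin d → ℝ)) := hbot ▸ Submodule.mem_inf.2 ⟨hxyU, hxyV⟩
  exact sub_eq_zero.1 ((Submodule.mem_bot ℝ).1 this)
end

section
/- Let k ≥ 1, let m : ℝ → ℝ^(2k) be the moment curve m(t) = (t, t², …, t^(2k)), and let P, Q ⊂ ℝ be disjoint (k+1)-element sets. Then conv(m(P)) ∩ conv(m(Q)) ≠ ∅ if and only if P and Q alternate. -/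
/-- Two finite subsets `P = {s₁ < s₂ < … < s_p}` and `Q = {t₁ < t₂ < … < t_p}` of a
linear order alternate if either `s₁ < t₁ < s₂ < t₂ < … < s_p < t_p` or
`t₁ < s₁ < t₂ < s₂ < … < t_p < s_p`. -/
def Alternates {α : Type*} [LinearOrder α] (P Q : Finset α) : Prop :=
  ∃ (p : ℕ) (f g : Fin p → α), StrictMono f ∧ StrictMono g ∧
    Set.range f = (P : Set α) ∧ Set.range g = (Q : Set α) ∧
    (((∀ i : Fin p, f i < g i) ∧ ∀ i j : Fin p, (i : ℕ) + 1 = (j : ℕ) → g i < f j) ∨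
      ((∀ i : Fin p, g i < f i) ∧ ∀ i j : Fin p, (i : ℕ) + 1 = (j : ℕ) → f i < g j))

/-!
Order `P ∪ Q` as `x₀ < x₁ < ⋯ < x_{2k+1}`. A common point of the two hulls amounts to a nonzero
vector `w` with `∑ⱼ wⱼ xⱼ ^ e = 0` for all `e ≤ 2k`, nonnegative on the indices of `P` and
nonpositive on those of `Q`. Such vectors exist by a dimension count, and every one of them has
strictly alternating signs: pairing `w` with `∏_{l ≠ j, j + 1} (X - x_l)`, which has degree `2k`
and the same sign at `x_j` and `x_{j+1}`, forces `w_j` and `w_{j+1}` to have opposite signs.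
So the hulls meet exactly when membership in `P` alternates along the order.
-/

open Finset Polynomial

theorem sum_mul_eval_eq_zero_of_sum_mul_pow_eq_zero {R ι : Type*} [CommSemiring R] [Fintype ι]
    {x w : ι → R} {n : ℕ} (hw : ∀ e ≤ n, ∑ i, w i * x i ^ e = 0) {p : R[X]}
    (hp : p.natDegree ≤ n) : ∑ i, w i * p.eval (x i) = 0 := by
  simp_rw [eval_eq_sum_range' (Nat.lt_succ_of_le hp), mul_sum]
  rw [sum_comm]
  refine sum_eq_zero fun e he => ?_
  simp_rw [mul_left_comm (w _), ← mul_sum, hw e (Nat.lt_succ_iff.1 (mem_range.1 he)), mul_zero]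

theorem exists_ne_zero_sum_mul_pow_eq_zero {K ι : Type*} [Field K] [Fintype ι] {n : ℕ}
    (hn : n + 1 < Fintype.card ι) (x : ι → K) :
    ∃ w : ι → K, w ≠ 0 ∧ ∀ e ≤ n, ∑ i, w i * x i ^ e = 0 := by
  have hdep : ¬ LinearIndependent K (fun i (e : Fin (n + 1)) => x i ^ (e : ℕ)) := fun h => by
    have := h.fintype_card_le_finrank
    simp only [Module.finrank_fintype_fun_eq_card, Fintype.card_fin] at this
    omega
  obtain ⟨w, hw, i, hi⟩ := Fintype.not_linearIndependent_iff.1 hdep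
  refine ⟨w, fun h => hi (congrFun h i), fun e he => ?_⟩
  simpa using congrFun hw ⟨e, Nat.lt_succ_of_le he⟩

theorem nonneg_on_and_nonpos_off_iff_even {R : Type*} [Ring R] [LinearOrder R]
    [IsStrictOrderedRing R] {m : ℕ} {v : Fin m → R}
    (hv : ∀ j : Fin m, 0 < (-1) ^ (j : ℕ) * v j) (q : Fin m → Prop) :
    ((∀ j, q j → 0 ≤ v j) ∧ ∀ j, ¬ q j → v j ≤ 0) ↔ ∀ j, q j ↔ Even (j : ℕ) := by
  have hpos : ∀ j : Fin m, Even (j : ℕ) → 0 < v j := fun j h => by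
    simpa [h.neg_one_pow] using hv j
  have hneg : ∀ j : Fin m, ¬ Even (j : ℕ) → v j < 0 := fun j h => by
    simpa [(Nat.not_even_iff_odd.1 h).neg_one_pow] using hv j
  constructor
  · rintro ⟨hq, hnq⟩ j
    constructor
    · exact fun h => by_contra fun he => (hneg j he).not_ge (hq j h)
    · exact fun he => by_contra fun h => (hpos j he).not_ge (hnq j h)
  · intro h
    exact ⟨fun j hj => (hpos j ((h j).1 hj)).le,
      fun j hj => (hneg j (mt (h j).2 hj)).le⟩

section MomentKernel

variable {𝕜 : Type*} [Field 𝕜] [LinearOrder 𝕜] [IsStrictOrderedRing 𝕜]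
  {n : ℕ} {x w : Fin (n + 2) → 𝕜}

theorem exists_pos_apply_succ_eq_neg_mul (hx : StrictMono x)
    (hw : ∀ e ≤ n, ∑ j, w j * x j ^ e = 0) (j : Fin (n + 1)) :
    ∃ c > 0, w j.succ = -(c * w j.castSucc) := by
  set a := j.castSucc
  set b := j.succ
  have hab : a < b := Fin.castSucc_lt_succ
  set p : 𝕜[X] := ∏ l ∈ univ \ {a, b}, (X - C (x l))
  have hp : p.natDegree ≤ n := by
    rw [natDegree_finsetProd_X_sub_C_eq_card, card_sdiff_of_subset (subset_univ _),
      card_pair hab.ne, card_univ, Fintype.card_fin]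
    omega
  have hsum : w a * p.eval (x a) + w b * p.eval (x b) = 0 := by
    rw [← sum_mul_eval_eq_zero_of_sum_mul_pow_eq_zero hw hp, Fintype.sum_eq_add a b hab.ne]
    rintro l ⟨hla, hlb⟩
    rw [eval_prod, prod_eq_zero (i := l) (by simp [hla, hlb]) (by simp), mul_zero]
  have hpos : 0 < p.eval (x a) * p.eval (x b) := by
    rw [eval_prod, eval_prod, ← prod_mul_distrib]
    refine prod_pos fun l hl => ?_
    simp only [mem_sdiff, mem_univ, mem_insert, mem_singleton, true_and, not_or] at hl
    simp only [eval_sub, eval_X, eval_C]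
    rcases lt_or_gt_of_ne hl.1 with hla | hla
    · have : l < b := hla.trans hab
      exact mul_pos (by linarith [hx hla]) (by linarith [hx this])
    · have : b < l := (Fin.castSucc_lt_iff_succ_le.1 hla).lt_of_ne' hl.2
      exact mul_pos_of_neg_of_neg (by linarith [hx hla]) (by linarith [hx this])
  have hb : p.eval (x b) ≠ 0 := fun h => by simp [h] at hpos
  refine ⟨p.eval (x a) / p.eval (x b), ?_, ?_⟩
  · exact div_pos_iff.2 (mul_pos_iff.1 hpos)
  · field_simp
    linarith

theorem apply_zero_ne_zero_of_sum_mul_pow_eq_zero (hx : StrictMono x)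
    (hw : ∀ e ≤ n, ∑ j, w j * x j ^ e = 0) (hw0 : w ≠ 0) : w 0 ≠ 0 := by
  refine fun h0 => hw0 (funext fun j => ?_)
  induction j using Fin.induction with
  | zero => exact h0
  | succ j ih =>
    obtain ⟨c, -, hc⟩ := exists_pos_apply_succ_eq_neg_mul hx hw j
    simp [hc, ih]

theorem neg_one_pow_mul_pos_of_sum_mul_pow_eq_zero (hx : StrictMono x)
    (hw : ∀ e ≤ n, ∑ j, w j * x j ^ e = 0) (hw0 : 0 < w 0) (j : Fin (n + 2)) :
    0 < (-1) ^ (j : ℕ) * w j := by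
  induction j using Fin.induction with
  | zero => simpa using hw0
  | succ j ih =>
    obtain ⟨c, hc, hcw⟩ := exists_pos_apply_succ_eq_neg_mul hx hw j
    have : (-1) ^ (j.succ : ℕ) * w j.succ = c * ((-1) ^ (j.castSucc : ℕ) * w j.castSucc) := by
      rw [hcw, Fin.val_succ, Fin.val_castSucc, pow_succ]
      ring
    rw [this]
    exact mul_pos hc ih

theorem exists_sum_mul_pow_eq_zero_neg_one_pow_mul_pos (hx : StrictMono x) :
    ∃ w : Fin (n + 2) → 𝕜, (∀ e ≤ n, ∑ j, w j * x j ^ e = 0) ∧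
      ∀ j : Fin (n + 2), 0 < (-1) ^ (j : ℕ) * w j := by
  obtain ⟨w, hw0, hw⟩ := exists_ne_zero_sum_mul_pow_eq_zero (n := n) (by simp) x
  rcases (apply_zero_ne_zero_of_sum_mul_pow_eq_zero hx hw hw0).lt_or_gt with h | h
  · have hw' : ∀ e ≤ n, ∑ j, (-w) j * x j ^ e = 0 := fun e he => by
      simp [hw e he]
    exact ⟨-w, hw', neg_one_pow_mul_pos_of_sum_mul_pow_eq_zero hx hw' (by simpa using h)⟩
  · exact ⟨w, hw, neg_one_pow_mul_pos_of_sum_mul_pow_eq_zero hx hw h⟩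

theorem exists_sum_mul_pow_eq_zero_sign_iff (hx : StrictMono x) (s : Finset (Fin (n + 2))) :
    (∃ w : Fin (n + 2) → 𝕜, w ≠ 0 ∧ (∀ e ≤ n, ∑ j, w j * x j ^ e = 0) ∧
        (∀ j ∈ s, 0 ≤ w j) ∧ ∀ j ∉ s, w j ≤ 0) ↔
      (∀ j, j ∈ s ↔ Even (j : ℕ)) ∨ ∀ j, j ∉ s ↔ Even (j : ℕ) := by
  constructor
  · rintro ⟨w, hw0, hw, hs, hsc⟩
    have hw' : ∀ e ≤ n, ∑ j, (-w) j * x j ^ e = 0 := fun e he => by simp [hw e he]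
    rcases (apply_zero_ne_zero_of_sum_mul_pow_eq_zero hx hw hw0).lt_or_gt with h | h
    · right
      refine (nonneg_on_and_nonpos_off_iff_even
        (neg_one_pow_mul_pos_of_sum_mul_pow_eq_zero hx hw' (by simpa using h)) _).1 ⟨?_, ?_⟩
      · exact fun j hj => neg_nonneg.2 (hsc j hj)
      · exact fun j hj => neg_nonpos.2 (hs j (not_not.1 hj))
    · exact Or.inl ((nonneg_on_and_nonpos_off_iff_even
        (neg_one_pow_mul_pos_of_sum_mul_pow_eq_zero hx hw h) _).1 ⟨hs, hsc⟩)
  · obtain ⟨v, hv, hsign⟩ := exists_sum_mul_pow_eq_zero_neg_one_pow_mul_pos hx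
    have hv0 : v ≠ 0 := fun h => by simpa [h] using hsign 0
    rintro (h | h)
    · exact ⟨v, hv0, hv, (nonneg_on_and_nonpos_off_iff_even hsign _).2 h⟩
    · obtain ⟨hsc, hs⟩ := (nonneg_on_and_nonpos_off_iff_even hsign _).2 h
      refine ⟨-v, neg_ne_zero.2 hv0, fun e he => by simp [hv e he], ?_, ?_⟩
      · exact fun j hj => neg_nonneg.2 (hs j (not_not.2 hj))
      · exact fun j hj => neg_nonpos.2 (hsc j hj)

end MomentKernel

theorem sum_ite_mem_smul {R M ι : Type*} [Ring R] [AddCommGroup M] [Module R M] [Fintype ι]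
    [DecidableEq ι] (s : Finset ι) (a b : ι → R) (v : ι → M) :
    ∑ i, (if i ∈ s then a i else -b i) • v i = ∑ i ∈ s, a i • v i - ∑ i ∈ sᶜ, b i • v i := by
  rw [← sum_add_sum_compl s, sub_eq_add_neg, ← sum_neg_distrib]
  congr 1 <;> refine sum_congr rfl fun i hi => ?_
  · simp [hi]
  · simp [mem_compl.1 hi]

section ConvexHull

variable {𝕜 E ι : Type*} [Field 𝕜] [LinearOrder 𝕜] [IsStrictOrderedRing 𝕜]
  [AddCommGroup E] [Module 𝕜 E]

theorem exists_weights_of_mem_convexHull_image {φ : ι → E} {s : Finset ι} {z : E}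
    (hz : z ∈ convexHull 𝕜 (φ '' s)) :
    ∃ a : ι → 𝕜, (∀ i ∈ s, 0 ≤ a i) ∧ ∑ i ∈ s, a i = 1 ∧ ∑ i ∈ s, a i • φ i = z := by
  classical
  suffices convexHull 𝕜 (φ '' s) ⊆
      {z | ∃ a : ι → 𝕜, (∀ i ∈ s, 0 ≤ a i) ∧ ∑ i ∈ s, a i = 1 ∧ ∑ i ∈ s, a i • φ i = z} from
    this hz
  refine convexHull_min ?_ ?_
  · rintro _ ⟨i, hi, rfl⟩
    rw [mem_coe] at hi
    refine ⟨Pi.single i 1, fun j _ => ?_, by simp [hi], by simp [Pi.single_apply, hi]⟩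
    by_cases h : j = i <;> simp [h]
  · rintro _ ⟨a, ha0, ha1, rfl⟩ _ ⟨b, hb0, hb1, rfl⟩ t u ht hu htu
    refine ⟨t • a + u • b, fun i hi => ?_, ?_, ?_⟩
    · simpa using add_nonneg (mul_nonneg ht (ha0 i hi)) (mul_nonneg hu (hb0 i hi))
    · simp [sum_add_distrib, ← mul_sum, ha1, hb1, htu]
    · simp [add_smul, mul_smul, sum_add_distrib, ← smul_sum]

theorem convexHull_image_inter_convexHull_image_compl_nonempty_iff [Fintype ι] [DecidableEq ι]
    (φ : ι → E) (s : Finset ι) :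
    (convexHull 𝕜 (φ '' s) ∩ convexHull 𝕜 (φ '' ↑sᶜ)).Nonempty ↔
      ∃ w : ι → 𝕜, w ≠ 0 ∧ (∑ i, w i = 0 ∧ ∑ i, w i • φ i = 0) ∧
        (∀ i ∈ s, 0 ≤ w i) ∧ ∀ i ∉ s, w i ≤ 0 := by
  constructor
  · rintro ⟨z, hzs, hzc⟩
    obtain ⟨a, ha0, ha1, haz⟩ := exists_weights_of_mem_convexHull_image hzs
    obtain ⟨b, hb0, hb1, hbz⟩ := exists_weights_of_mem_convexHull_image hzc
    set w : ι → 𝕜 := fun i => if i ∈ s then a i else -b i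
    obtain ⟨i, hi, hai⟩ : ∃ i ∈ s, a i ≠ 0 := by
      by_contra! h
      simp [sum_eq_zero h] at ha1
    refine ⟨w, fun h => hai ?_, ⟨?_, ?_⟩, fun i hi => ?_, fun i hi => ?_⟩
    · simpa [w, hi] using congrFun h i
    · simpa [ha1, hb1] using sum_ite_mem_smul s a b (fun _ => (1 : 𝕜))
    · rw [sum_ite_mem_smul, haz, hbz, sub_self]
    · simpa [w, hi] using ha0 i hi
    · simpa [w, hi] using hb0 i (mem_compl.2 hi)
  · rintro ⟨w, hw0, ⟨hw1, hwφ⟩, hs, hsc⟩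
    have hsum : ∑ i ∈ s, w i + ∑ i ∈ sᶜ, w i = 0 := by rwa [sum_add_sum_compl]
    have hpos : 0 < ∑ i ∈ s, w i := by
      refine (sum_nonneg hs).lt_of_ne fun h => hw0 (funext fun i => ?_)
      by_cases hi : i ∈ s
      · exact (sum_eq_zero_iff_of_nonneg hs).1 h.symm i hi
      · refine (sum_eq_zero_iff_of_nonpos fun j hj => hsc j (mem_compl.1 hj)).1 ?_ i
          (mem_compl.2 hi)
        linarith
    refine ⟨s.centerMass w φ, s.centerMass_mem_convexHull hs hpos fun i hi => ⟨i, hi, rfl⟩, ?_⟩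
    rw [centerMass_of_sum_add_sum_eq_zero hsum (by rwa [sum_add_sum_compl])]
    exact sᶜ.centerMass_mem_convexHull_of_nonpos (fun i hi => hsc i (mem_compl.1 hi))
      (by linarith) fun i hi => ⟨i, hi, rfl⟩

end ConvexHull

theorem sum_eq_zero_and_sum_smul_moment_eq_zero_iff {ι : Type*} [Fintype ι] {d : ℕ}
    (w x : ι → ℝ) :
    (∑ i, w i = 0 ∧ ∑ i, w i • moment d (x i) = 0) ↔ ∀ e ≤ d, ∑ i, w i * x i ^ e = 0 := by
  simp only [funext_iff, Finset.sum_apply, Pi.smul_apply, smul_eq_mul, moment, Pi.zero_apply]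
  constructor
  · rintro ⟨h0, h⟩ e he
    rcases e with _ | e
    · simpa using h0
    · exact h ⟨e, he⟩
  · intro h
    exact ⟨by simpa using h 0 (Nat.zero_le _), fun i => h _ i.isLt⟩

theorem mem_right_iff_notMem_left {α : Type*} [DecidableEq α] {P Q : Finset α}
    (hPQ : Disjoint P Q) {u : α} (hu : u ∈ P ∪ Q) : u ∈ Q ↔ u ∉ P :=
  ⟨fun hQ hP => disjoint_left.1 hPQ hP hQ, (mem_union.1 hu).resolve_left⟩

section Alternation

variable {α : Type*} {k : ℕ}

def interleave (f g : Fin (k + 1) → α) (j : Fin (2 * k + 2)) : α :=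
  if Even (j : ℕ) then f ⟨j / 2, by omega⟩ else g ⟨j / 2, by omega⟩

theorem interleave_two_mul (f g : Fin (k + 1) → α) (i : Fin (k + 1)) :
    interleave f g ⟨2 * i, by omega⟩ = f i := by
  simp [interleave]

theorem interleave_two_mul_add_one (f g : Fin (k + 1) → α) (i : Fin (k + 1)) :
    interleave f g ⟨2 * i + 1, by omega⟩ = g i := by
  simp only [interleave, Nat.even_add_one, even_two_mul, not_true_eq_false, if_false]
  congr 1
  ext
  simp only
  omega

theorem range_interleave (f g : Fin (k + 1) → α) :
    Set.range (interleave f g) = Set.range f ∪ Set.range g := by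
  ext u
  constructor
  · rintro ⟨j, rfl⟩
    unfold interleave
    split_ifs
    exacts [Or.inl ⟨_, rfl⟩, Or.inr ⟨_, rfl⟩]
  · rintro (⟨i, rfl⟩ | ⟨i, rfl⟩)
    exacts [⟨_, interleave_two_mul f g i⟩, ⟨_, interleave_two_mul_add_one f g i⟩]

variable [LinearOrder α] {P Q : Finset α}

theorem strictMono_interleave {f g : Fin (k + 1) → α} (hfg : ∀ i, f i < g i)
    (hgf : ∀ i j : Fin (k + 1), (i : ℕ) + 1 = j → g i < f j) : StrictMono (interleave f g) := by
  refine Fin.strictMono_iff_lt_succ.2 fun j => ?_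
  rcases Nat.even_or_odd (j : ℕ) with h | h
  · have hj := h
    obtain ⟨r, hr⟩ := h
    simp only [interleave, Fin.val_castSucc, Fin.val_succ, Nat.even_add_one, hj, not_true_eq_false,
      if_true, if_false]
    convert hfg ⟨r, by omega⟩ using 2 <;> ext <;> simp only <;> omega
  · have hj := Nat.not_even_iff_odd.2 h
    obtain ⟨r, hr⟩ := h
    simp only [interleave, Fin.val_castSucc, Fin.val_succ, Nat.even_add_one, hj, not_false_eq_true,
      if_true, if_false]
    convert hgf ⟨r, by omega⟩ ⟨r + 1, by omega⟩ rfl using 2 <;> ext <;> simp only <;> omega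

def Interlaces (P Q : Finset α) : Prop :=
  ∃ (p : ℕ) (f g : Fin p → α), StrictMono f ∧ StrictMono g ∧
    Set.range f = (P : Set α) ∧ Set.range g = (Q : Set α) ∧
    (∀ i, f i < g i) ∧ ∀ i j : Fin p, (i : ℕ) + 1 = j → g i < f j

theorem alternates_iff_interlaces_or_interlaces :
    Alternates P Q ↔ Interlaces P Q ∨ Interlaces Q P := by
  constructor
  · rintro ⟨p, f, g, hf, hg, hfP, hgQ, ⟨hfg, hgf⟩ | ⟨hgf, hfg⟩⟩
    · exact Or.inl ⟨p, f, g, hf, hg, hfP, hgQ, hfg, hgf⟩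
    · exact Or.inr ⟨p, g, f, hg, hf, hgQ, hfP, hgf, hfg⟩
  · rintro (⟨p, f, g, hf, hg, hfP, hgQ, hfg, hgf⟩ | ⟨p, g, f, hg, hf, hgQ, hfP, hgf, hfg⟩)
    · exact ⟨p, f, g, hf, hg, hfP, hgQ, Or.inl ⟨hfg, hgf⟩⟩
    · exact ⟨p, f, g, hf, hg, hfP, hgQ, Or.inr ⟨hgf, hfg⟩⟩

theorem Interlaces.forall_mem_iff_even (h : Interlaces P Q)
    {x : Fin (2 * k + 2) → α} (hx : StrictMono x) (hrange : Set.range x = ↑(P ∪ Q))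
    (hPQ : Disjoint P Q) (hP : #P = k + 1) (j : Fin (2 * k + 2)) :
    x j ∈ P ↔ Even (j : ℕ) := by
  obtain ⟨p, f, g, hf, hg, hfP, hgQ, hfg, hgf⟩ := h
  obtain rfl : p = k + 1 := by
    rw [← hP, ← Set.ncard_coe_finset, ← hfP, Set.ncard_range_of_injective hf.injective,
      Nat.card_eq_fintype_card, Fintype.card_fin]
  obtain rfl : interleave f g = x := by
    refine ((strictMono_interleave hfg hgf).range_inj hx).1 ?_
    rw [hrange, coe_union, ← hfP, ← hgQ, range_interleave]
  have hf' : ∀ i, f i ∈ P := fun i => by simp [← mem_coe, ← hfP]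
  have hg' : ∀ i, g i ∉ P := fun i hi => disjoint_left.1 hPQ hi (by simp [← mem_coe, ← hgQ])
  unfold interleave
  split_ifs with h
  · simpa [h] using hf' _
  · simpa [h] using hg' _

theorem interlaces_of_forall_mem_iff_even {x : Fin (2 * k + 2) → α}
    (hx : StrictMono x) (hrange : Set.range x = ↑(P ∪ Q)) (hPQ : Disjoint P Q)
    (h : ∀ j, x j ∈ P ↔ Even (j : ℕ)) : Interlaces P Q := by
  have hQ : ∀ j, x j ∈ Q ↔ x j ∉ P := fun j =>
    mem_right_iff_notMem_left hPQ (by simp [← mem_coe, ← hrange])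
  refine ⟨k + 1, fun i => x ⟨2 * i, by omega⟩, fun i => x ⟨2 * i + 1, by omega⟩,
    fun i j hij => hx ?_, fun i j hij => hx ?_, ?_, ?_, fun i => hx ?_, fun i j hij => hx ?_⟩
  rotate_left 2
  · ext u
    constructor
    · rintro ⟨i, rfl⟩
      exact (h _).2 (by simp)
    · intro hu
      obtain ⟨j, rfl⟩ : u ∈ Set.range x := by simp [hrange, hu]
      obtain ⟨r, hr⟩ := (h j).1 hu
      exact ⟨⟨r, by omega⟩, congrArg x (Fin.ext (by simp only; omega))⟩
  · ext u
    constructor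
    · rintro ⟨i, rfl⟩
      exact (hQ _).2 (mt (h _).1 (by simp))
    · intro hu
      obtain ⟨j, rfl⟩ : u ∈ Set.range x := by simp [hrange, hu]
      obtain ⟨r, hr⟩ := Nat.not_even_iff_odd.1 (mt (h j).2 ((hQ j).1 hu))
      exact ⟨⟨r, by omega⟩, congrArg x (Fin.ext (by simp only; omega))⟩
  all_goals rw [Fin.mk_lt_mk]; try rw [Fin.lt_def] at hij
  all_goals omega

theorem alternates_iff_forall_mem_iff_even {x : Fin (2 * k + 2) → α}
    (hx : StrictMono x) (hrange : Set.range x = ↑(P ∪ Q)) (hPQ : Disjoint P Q)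
    (hP : #P = k + 1) (hQ : #Q = k + 1) :
    Alternates P Q ↔ (∀ j, x j ∈ P ↔ Even (j : ℕ)) ∨ ∀ j, x j ∈ Q ↔ Even (j : ℕ) := by
  have hrange' : Set.range x = ↑(Q ∪ P) := by rw [hrange, union_comm]
  rw [alternates_iff_interlaces_or_interlaces]
  refine or_congr ⟨fun h => h.forall_mem_iff_even hx hrange hPQ hP, ?_⟩
    ⟨fun h => h.forall_mem_iff_even hx hrange' hPQ.symm hQ, ?_⟩
  · exact interlaces_of_forall_mem_iff_even hx hrange hPQ
  · exact interlaces_of_forall_mem_iff_even hx hrange' hPQ.symm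

end Alternation

theorem stmt8_general (k : ℕ) (P Q : Finset ℝ) (hPQ : Disjoint P Q)
    (hP : P.card = k + 1) (hQ : Q.card = k + 1) :
    (convexHull ℝ (moment (2 * k) '' (P : Set ℝ)) ∩
      convexHull ℝ (moment (2 * k) '' (Q : Set ℝ))).Nonempty ↔ Alternates P Q := by
  classical
  have hcard : #(P ∪ Q) = 2 * k + 2 := by rw [card_union_of_disjoint hPQ, hP, hQ]; ring
  set x := (P ∪ Q).orderEmbOfFin hcard
  have hrange : Set.range x = ↑(P ∪ Q) := range_orderEmbOfFin _ _
  set s := univ.filter fun j => x j ∈ P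
  have hsc : ∀ j, j ∈ sᶜ ↔ x j ∈ Q := fun j => by
    simpa [s] using (mem_right_iff_notMem_left hPQ (orderEmbOfFin_mem _ hcard j)).symm
  have himage : ∀ {t : Finset (Fin (2 * k + 2))} {R : Finset ℝ}, R ⊆ P ∪ Q →
      (∀ j, j ∈ t ↔ x j ∈ R) → x '' t = R := fun {t R} hR ht => by
    rw [show (t : Set _) = x ⁻¹' R by ext; simp [ht]]
    exact Set.image_preimage_eq_of_subset (by rw [hrange]; exact_mod_cast hR)
  rw [← himage subset_union_left (t := s) (by simp [s]), ← himage subset_union_right hsc,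
    ← Set.image_comp, ← Set.image_comp,
    convexHull_image_inter_convexHull_image_compl_nonempty_iff]
  simp_rw [Function.comp_apply, sum_eq_zero_and_sum_smul_moment_eq_zero_iff]
  rw [exists_sum_mul_pow_eq_zero_sign_iff x.strictMono,
    alternates_iff_forall_mem_iff_even x.strictMono hrange hPQ hP hQ]
  simp_rw [← mem_compl, hsc]
  simp [s]

theorem stmt8 (k : ℕ) (hk : 1 ≤ k) (P Q : Finset ℝ) (hPQ : Disjoint P Q)
    (hP : P.card = k + 1) (hQ : Q.card = k + 1) :
    (convexHull ℝ (moment (2 * k) '' (P : Set ℝ)) ∩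
      convexHull ℝ (moment (2 * k) '' (Q : Set ℝ))).Nonempty ↔ Alternates P Q :=
  stmt8_general k P Q hPQ hP hQ
end

section
/- Let k ≥ 1, let m : ℝ → ℝ^(2k) be the moment curve m(t) = (t, t², …, t^(2k)), and let P, Q ⊂ ℝ be disjoint (k+1)-element sets. Then conv(m(P)) ∩ conv(m(Q)) contains at most one point; in particular, if the simplices conv(m(P)) and conv(m(Q)) intersect, they intersect in exactly one point. -/
open Polynomial Finset

lemma vand (T : Finset ℝ) (e : ℝ → ℝ)
    (h : ∀ j < T.card, ∑ s ∈ T, e s * s ^ j = 0) :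
    ∀ t ∈ T, e t = 0 := by
  intro t ht
  set L : Polynomial ℝ := ∏ s ∈ T.erase t, (X - C s) with hL
  have hdeg : L.natDegree = T.card - 1 := by
    rw [hL, natDegree_prod]
    · simp [card_erase_of_mem ht]
    · intro s _; exact X_sub_C_ne_zero s
  have hpos : 0 < T.card := card_pos.2 ⟨t, ht⟩
  have hdeg' : L.natDegree < T.card := by omega
  have heval : ∀ s : ℝ, L.eval s = ∑ j ∈ range T.card, L.coeff j * s ^ j := by
    intro s; exact eval_eq_sum_range' hdeg' s
  have hsum : ∑ s ∈ T, e s * L.eval s = 0 := by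
    calc ∑ s ∈ T, e s * L.eval s
        = ∑ s ∈ T, ∑ j ∈ range T.card, L.coeff j * (e s * s ^ j) := by
          refine Finset.sum_congr rfl fun s _ => ?_
          rw [heval, Finset.mul_sum]
          exact Finset.sum_congr rfl fun j _ => by ring
      _ = ∑ j ∈ range T.card, L.coeff j * ∑ s ∈ T, e s * s ^ j := by
          rw [Finset.sum_comm]
          exact Finset.sum_congr rfl fun j _ => by rw [Finset.mul_sum]
      _ = 0 := by
          refine Finset.sum_eq_zero fun j hj => ?_
          rw [h j (mem_range.1 hj), mul_zero]
  have hzero : ∀ s ∈ T.erase t, e s * L.eval s = 0 := by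
    intro s hs
    have : L.eval s = 0 := by
      rw [hL, eval_prod]
      exact Finset.prod_eq_zero hs (by simp)
    rw [this, mul_zero]
  have hsplit : ∑ s ∈ T, e s * L.eval s = e t * L.eval t := by
    rw [← Finset.add_sum_erase T _ ht, Finset.sum_eq_zero hzero, add_zero]
  have hLt : L.eval t ≠ 0 := by
    rw [hL, eval_prod]
    refine Finset.prod_ne_zero_iff.2 fun s hs => ?_
    have : s ≠ t := (Finset.mem_erase.1 hs).1
    simp [sub_ne_zero.2 (Ne.symm this)]
  have := hsplit.symm.trans hsum
  exact (mul_eq_zero.1 this).resolve_right hLt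

lemma prop_lem (T : Finset ℝ) (c d : ℝ → ℝ)
    (hc : ∀ j < T.card - 1, ∑ s ∈ T, c s * s ^ j = 0)
    (hd : ∀ j < T.card - 1, ∑ s ∈ T, d s * s ^ j = 0)
    (s0 : ℝ) (hs0 : s0 ∈ T) :
    ∀ t ∈ T, c s0 * d t = d s0 * c t := by
  set e : ℝ → ℝ := fun s => c s0 * d s - d s0 * c s with he
  have hes0 : e s0 = 0 := by simp [he]; ring
  have hcard : (T.erase s0).card = T.card - 1 := card_erase_of_mem hs0
  have key : ∀ t ∈ T.erase s0, e t = 0 := by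
    refine vand _ _ fun j hj => ?_
    rw [hcard] at hj
    have hT : ∑ s ∈ T, e s * s ^ j = 0 := by
      have : ∑ s ∈ T, e s * s ^ j
          = c s0 * ∑ s ∈ T, d s * s ^ j - d s0 * ∑ s ∈ T, c s * s ^ j := by
        rw [Finset.mul_sum, Finset.mul_sum, ← Finset.sum_sub_distrib]
        exact Finset.sum_congr rfl fun s _ => by simp [he]; ring
      rw [this, hc j hj, hd j hj]; ring
    have := Finset.add_sum_erase T (fun s => e s * s ^ j) hs0
    simp only [hes0, zero_mul, zero_add] at this
    rw [this, hT]
  intro t ht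
  rcases eq_or_ne t s0 with rfl | hne
  · ring
  · have := key t (Finset.mem_erase.2 ⟨hne, ht⟩)
    simp [he] at this
    linarith [this]

lemma exists_weights (k : ℕ) (hk : 1 ≤ k) (P : Finset ℝ) (x : Fin (2 * k) → ℝ)
    (hx : x ∈ convexHull ℝ (moment (2 * k) '' (P : Set ℝ))) :
    ∃ a : ℝ → ℝ, (∑ p ∈ P, a p = 1) ∧
      ∀ i : Fin (2 * k), ∑ p ∈ P, a p * p ^ ((i : ℕ) + 1) = x i := by
  have hinj : Function.Injective (moment (2 * k)) := by
    intro s t hst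
    have := congrFun hst ⟨0, by omega⟩
    simpa [moment] using this
  rw [← Finset.coe_image, Finset.convexHull_eq] at hx
  obtain ⟨w, -, hw1, hwx⟩ := hx
  refine ⟨fun p => w (moment (2 * k) p), ?_, ?_⟩
  · rw [← Finset.sum_image (fun a _ b _ h => hinj h)]
    exact hw1
  · intro i
    have hcm : (P.image (moment (2 * k))).centerMass w id
        = ∑ y ∈ P.image (moment (2 * k)), w y • y := by
      rw [Finset.centerMass_eq_of_sum_1 _ _ hw1]
      rfl
    have : x i = ∑ y ∈ P.image (moment (2 * k)), w y * y i := by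
      rw [← hwx, hcm]
      simp [Finset.sum_apply]
    rw [this, Finset.sum_image (fun a _ b _ h => hinj h)]
    exact Finset.sum_congr rfl fun p _ => by simp [moment]

theorem stmt9 (k : ℕ) (hk : 1 ≤ k) (P Q : Finset ℝ) (hPQ : Disjoint P Q)
    (hP : P.card = k + 1) (hQ : Q.card = k + 1) :
    (convexHull ℝ (moment (2 * k) '' (P : Set ℝ)) ∩
      convexHull ℝ (moment (2 * k) '' (Q : Set ℝ))).Subsingleton ∧
    ((convexHull ℝ (moment (2 * k) '' (P : Set ℝ)) ∩
        convexHull ℝ (moment (2 * k) '' (Q : Set ℝ))).Nonempty →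
      ∃ x : Fin (2 * k) → ℝ,
        convexHull ℝ (moment (2 * k) '' (P : Set ℝ)) ∩
          convexHull ℝ (moment (2 * k) '' (Q : Set ℝ)) = {x}) := by
  have hsub : (convexHull ℝ (moment (2 * k) '' (P : Set ℝ)) ∩
      convexHull ℝ (moment (2 * k) '' (Q : Set ℝ))).Subsingleton := by
    intro x hx y hy
    obtain ⟨a, ha1, hax⟩ := exists_weights k hk P x hx.1
    obtain ⟨b, hb1, hbx⟩ := exists_weights k hk Q x hx.2
    obtain ⟨a', ha'1, hay⟩ := exists_weights k hk P y hy.1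
    obtain ⟨b', hb'1, hby⟩ := exists_weights k hk Q y hy.2
    set S : Finset ℝ := P ∪ Q with hS
    have hScard : S.card = 2 * k + 2 := by
      rw [hS, Finset.card_union_of_disjoint hPQ, hP, hQ]; ring
    set c : ℝ → ℝ := fun s => if s ∈ P then a s else -(b s) with hc
    set d : ℝ → ℝ := fun s => if s ∈ P then a' s else -(b' s) with hd
    have hnotP : ∀ q ∈ Q, q ∉ P := fun q hq hqP =>
      (Finset.disjoint_left.1 hPQ) hqP hq
    have hker : ∀ (u : ℝ → ℝ) (ap bp : ℝ → ℝ),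
        (∀ s, u s = if s ∈ P then ap s else -(bp s)) →
        (∑ p ∈ P, ap p = 1) → (∑ q ∈ Q, bp q = 1) →
        (∀ i : Fin (2 * k), ∑ p ∈ P, ap p * p ^ ((i : ℕ) + 1)
          = ∑ q ∈ Q, bp q * q ^ ((i : ℕ) + 1)) →
        ∀ j < S.card - 1, ∑ s ∈ S, u s * s ^ j = 0 := by
      intro u ap bp hu h1 h2 heq j hj
      have hsplit : ∑ s ∈ S, u s * s ^ j
          = ∑ p ∈ P, ap p * p ^ j - ∑ q ∈ Q, bp q * q ^ j := by
        rw [hS, Finset.sum_union hPQ]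
        congr 1
        · exact Finset.sum_congr rfl fun p hp => by rw [hu p, if_pos hp]
        · rw [← Finset.sum_neg_distrib]
          exact Finset.sum_congr rfl fun q hq => by
            rw [hu q, if_neg (hnotP q hq)]; ring
      rw [hsplit]
      rcases j with _ | i
      · simp only [pow_zero, mul_one]
        rw [h1, h2, sub_self]
      · have hi : i < 2 * k := by omega
        have := heq ⟨i, hi⟩
        simp only [sub_eq_zero]
        exact this
    have hckey : ∀ j < S.card - 1, ∑ s ∈ S, c s * s ^ j = 0 :=
      hker c a b (fun s => rfl) ha1 hb1 (fun i => by rw [hax i, hbx i])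
    have hdkey : ∀ j < S.card - 1, ∑ s ∈ S, d s * s ^ j = 0 :=
      hker d a' b' (fun s => rfl) ha'1 hb'1 (fun i => by rw [hay i, hby i])
    have hPsum_c : ∑ t ∈ P, c t = 1 := by
      rw [← ha1]; exact Finset.sum_congr rfl fun p hp => by rw [hc]; simp [hp]
    have hPsum_d : ∑ t ∈ P, d t = 1 := by
      rw [← ha'1]; exact Finset.sum_congr rfl fun p hp => by rw [hd]; simp [hp]
    have hcd : ∀ s ∈ S, c s = d s := by
      intro s0 hs0
      have hall := prop_lem S c d hckey hdkey s0 hs0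
      have hsumP : c s0 * ∑ t ∈ P, d t = d s0 * ∑ t ∈ P, c t := by
        rw [Finset.mul_sum, Finset.mul_sum]
        exact Finset.sum_congr rfl fun t ht =>
          hall t (Finset.mem_union_left _ ht)
      rw [hPsum_c, hPsum_d, mul_one, mul_one] at hsumP
      exact hsumP
    have haa' : ∀ p ∈ P, a p = a' p := by
      intro p hp
      have := hcd p (Finset.mem_union_left _ hp)
      rw [hc, hd] at this
      simpa [hp] using this
    funext i
    rw [← hax i, ← hay i]
    exact Finset.sum_congr rfl fun p hp => by rw [haa' p hp]
  refine ⟨hsub, fun ⟨x, hx⟩ => ⟨x, hsub.eq_singleton_of_mem hx⟩⟩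
end
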